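/- arXiv:math/0605791 — 9 statements merged into one kernel-verified Lean document; each statement's English description precedes it below -/
import Mathlib

section
/- Let M > 0 and let g : [0,∞) → ℝ be a cad-lag function (right-continuous at every point and possessing finite left limits at every point). Then lim_{ε→0⁺} Σ_{k=1}^{⌊M/ε⌋} | ∫_{ε(k-1)}^{εk} ( g(s) − g(ε(k−1)) ) ds | = 0. -/
/-!
A cad-lag function is regulated: for `η > 0`, compactness of `[0, M]` and a Lebesgue number give
finitely many points `F` and `δ > 0` such that `g` oscillates by less than `η` on every interval
`[a, b]` of length `< δ` with no point of `F` in `(a, b]` (right of a point of the cover, `g` stays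
near its value there; left of it, near its left limit). For `ε < δ` each block avoiding `F`
contributes at most `εη`, while at most `#F` blocks meet `F`, each contributing at most `2Cε`
where `C` bounds `|g|` on `[0, M]`. Hence the sum is at most `Mη + 2C·#F·ε`.
-/

open Filter Set Topology Metric

section Cadlag

variable {E : Type*} [PseudoMetricSpace E] {g : ℝ → E}

lemma exists_mem_isBounded_image_of_tendsto {l : Filter ℝ} {y : E} (h : Tendsto g l (𝓝 y)) :
    ∃ u ∈ l, Bornology.IsBounded (g '' u) :=
  ⟨g ⁻¹' ball y 1, h (ball_mem_nhds y one_pos), isBounded_ball.subset (image_preimage_subset _ _)⟩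

lemma isBounded_image_Icc_of_cadlag
    (hg_right : ∀ t : ℝ, 0 ≤ t → Tendsto g (𝓝[≥] t) (𝓝 (g t)))
    (hg_left : ∀ t : ℝ, 0 < t → ∃ l, Tendsto g (𝓝[<] t) (𝓝 l)) (T : ℝ) :
    Bornology.IsBounded (g '' Icc 0 T) := by
  refine isCompact_Icc.induction_on (p := fun u => Bornology.IsBounded (g '' u)) (by simp)
    (fun u v huv hv => hv.subset (image_mono huv))
    (fun u v hu hv => by rw [image_union]; exact hu.union hv) ?_
  rintro t ⟨ht0, -⟩
  obtain ⟨u, hu, hu_bdd⟩ := exists_mem_isBounded_image_of_tendsto (hg_right t ht0)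
  rcases ht0.eq_or_lt with rfl | ht
  · exact ⟨u, nhdsWithin_mono _ Icc_subset_Ici_self hu, hu_bdd⟩
  · obtain ⟨l, hl⟩ := hg_left t ht
    obtain ⟨v, hv, hv_bdd⟩ := exists_mem_isBounded_image_of_tendsto hl
    refine ⟨v ∪ u, mem_nhdsWithin_of_mem_nhds ?_, by rw [image_union]; exact hv_bdd.union hu_bdd⟩
    rw [← nhdsLT_sup_nhdsGE]
    exact union_mem_sup hv hu

lemma exists_pos_forall_dist_lt_of_tendsto_nhdsGE {t : ℝ} {y : E}
    (h : Tendsto g (𝓝[≥] t) (𝓝 y)) {η : ℝ} (hη : 0 < η) :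
    ∃ δ > 0, ∀ s ∈ Ico t (t + δ), ∀ s' ∈ Ico t (t + δ), dist (g s) (g s') < η := by
  obtain ⟨u, htu, hu⟩ := mem_nhdsGE_iff_exists_Ico_subset.1 (h (ball_mem_nhds y (half_pos hη)))
  refine ⟨u - t, sub_pos.2 htu, fun s hs s' hs' => ?_⟩
  rw [add_sub_cancel] at hs hs'
  calc dist (g s) (g s') ≤ dist (g s) y + dist (g s') y := dist_triangle_right _ _ _
    _ < η / 2 + η / 2 := add_lt_add (hu hs) (hu hs')
    _ = η := add_halves η

lemma exists_pos_forall_dist_lt_of_tendsto_nhdsLT {t : ℝ} {y : E}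
    (h : Tendsto g (𝓝[<] t) (𝓝 y)) {η : ℝ} (hη : 0 < η) :
    ∃ δ > 0, ∀ s ∈ Ioo (t - δ) t, ∀ s' ∈ Ioo (t - δ) t, dist (g s) (g s') < η := by
  obtain ⟨u, hut, hu⟩ := mem_nhdsLT_iff_exists_Ioo_subset.1 (h (ball_mem_nhds y (half_pos hη)))
  refine ⟨t - u, sub_pos.2 hut, fun s hs s' hs' => ?_⟩
  rw [sub_sub_cancel] at hs hs'
  calc dist (g s) (g s') ≤ dist (g s) y + dist (g s') y := dist_triangle_right _ _ _
    _ < η / 2 + η / 2 := add_lt_add (hu hs) (hu hs')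
    _ = η := add_halves η

lemma exists_pos_forall_dist_lt_of_cadlag
    (hg_right : ∀ t : ℝ, 0 ≤ t → Tendsto g (𝓝[≥] t) (𝓝 (g t)))
    (hg_left : ∀ t : ℝ, 0 < t → ∃ l, Tendsto g (𝓝[<] t) (𝓝 l)) {t : ℝ} (ht : 0 ≤ t)
    {η : ℝ} (hη : 0 < η) :
    ∃ δ > 0, (∀ s ∈ Ico t (t + δ), ∀ s' ∈ Ico t (t + δ), dist (g s) (g s') < η) ∧
      (0 < t → ∀ s ∈ Ioo (t - δ) t, ∀ s' ∈ Ioo (t - δ) t, dist (g s) (g s') < η) := by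
  obtain ⟨δ₁, hδ₁, h_right⟩ := exists_pos_forall_dist_lt_of_tendsto_nhdsGE (hg_right t ht) hη
  rcases ht.eq_or_lt with rfl | ht
  · exact ⟨δ₁, hδ₁, h_right, fun h => absurd h (lt_irrefl 0)⟩
  obtain ⟨l, hl⟩ := hg_left t ht
  obtain ⟨δ₂, hδ₂, h_left⟩ := exists_pos_forall_dist_lt_of_tendsto_nhdsLT hl hη
  have h_Ico : Ico t (t + min δ₁ δ₂) ⊆ Ico t (t + δ₁) :=
    Ico_subset_Ico_right (by gcongr; exact min_le_left _ _)
  have h_Ioo : Ioo (t - min δ₁ δ₂) t ⊆ Ioo (t - δ₂) t :=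
    Ioo_subset_Ioo_left (by gcongr; exact min_le_right _ _)
  exact ⟨min δ₁ δ₂, lt_min hδ₁ hδ₂, fun s hs s' hs' => h_right s (h_Ico hs) s' (h_Ico hs'),
    fun _ s hs s' hs' => h_left s (h_Ioo hs) s' (h_Ioo hs')⟩

lemma exists_finset_forall_dist_lt_of_cadlag
    (hg_right : ∀ t : ℝ, 0 ≤ t → Tendsto g (𝓝[≥] t) (𝓝 (g t)))
    (hg_left : ∀ t : ℝ, 0 < t → ∃ l, Tendsto g (𝓝[<] t) (𝓝 l)) (T : ℝ) {η : ℝ} (hη : 0 < η) :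
    ∃ F : Finset ℝ, ∃ δ > 0, ∀ a ∈ Icc 0 T, ∀ b < a + δ, (∀ t ∈ F, t ∉ Ioc a b) →
      ∀ s ∈ Icc a b, dist (g s) (g a) < η := by
  choose! r hr_pos hr_right hr_left using fun t (ht : t ∈ Ici (0 : ℝ)) =>
    exists_pos_forall_dist_lt_of_cadlag hg_right hg_left ht hη
  obtain ⟨B, hB, hB_fin, hB_cover⟩ := isCompact_Icc.elim_finite_subcover_image (b := Icc 0 T)
    (c := fun t => Ioo (t - r t) (t + r t)) (fun _ _ => isOpen_Ioo)
    (fun x hx => mem_biUnion hx ⟨by linarith [hr_pos x hx.1], by linarith [hr_pos x hx.1]⟩)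
  obtain ⟨δ, hδ, hδ_ball⟩ := lebesgue_number_lemma_of_metric isCompact_Icc
    (c := fun t : B => Ioo (t - r t) (t + r t)) (fun _ => isOpen_Ioo)
    (by simpa only [biUnion_eq_iUnion] using hB_cover)
  refine ⟨hB_fin.toFinset, δ, hδ, fun a ha b hb hF s hs => ?_⟩
  obtain ⟨⟨t, htB⟩, h_ball⟩ := hδ_ball a ha
  have h_near : ∀ x ∈ Icc a b, x ∈ Ioo (t - r t) (t + r t) := fun x hx =>
    h_ball (by rw [mem_ball, Real.dist_eq, abs_lt]; constructor <;> linarith [hx.1, hx.2])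
  have ha_mem : a ∈ Icc a b := ⟨le_rfl, hs.1.trans hs.2⟩
  have ht0 : 0 ≤ t := (hB htB).1
  rcases le_or_gt t a with hta | hat
  · exact hr_right t ht0 s ⟨hta.trans hs.1, (h_near s hs).2⟩ a ⟨hta, (h_near a ha_mem).2⟩
  · have hbt : b < t := not_le.1 fun htb => hF t (hB_fin.mem_toFinset.2 htB) ⟨hat, htb⟩
    exact hr_left t ht0 (ha.1.trans_lt hat) s ⟨(h_near s hs).1, hs.2.trans_lt hbt⟩
      a ⟨(h_near a ha_mem).1, hat⟩

end Cadlag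

lemma card_filter_exists_mem_Ioc_le {ε : ℝ} (hε : 0 < ε) (N : ℕ) (F : Finset ℝ) :
    ((Finset.Icc 1 N).filter fun k : ℕ => ∃ t ∈ F, t ∈ Ioc (ε * (k - 1)) (ε * k)).card
      ≤ F.card := by
  -- a point `t` can only lie in the block of index `⌈t / ε⌉₊`
  refine (Finset.card_le_card fun k hk => ?_).trans (F.card_image_le (f := fun t => ⌈t / ε⌉₊))
  obtain ⟨hk, t, htF, ht⟩ := Finset.mem_filter.1 hk
  have hk0 : k ≠ 0 := Nat.one_le_iff_ne_zero.1 (Finset.mem_Icc.1 hk).1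
  refine Finset.mem_image.2 ⟨t, htF, (Nat.ceil_eq_iff hk0).2 ⟨?_, ?_⟩⟩
  · rw [Nat.cast_pred (Nat.pos_of_ne_zero hk0), lt_div_iff₀ hε, mul_comm]
    exact ht.1
  · rw [div_le_iff₀ hε, mul_comm]
    exact ht.2

lemma norm_integral_sub_left_le {E : Type*} [NormedAddCommGroup E] [NormedSpace ℝ E]
    {g : ℝ → E} {a b D : ℝ} (hab : a ≤ b) (hD : ∀ s ∈ Ioc a b, ‖g s - g a‖ ≤ D) :
    ‖∫ s in a..b, (g s - g a)‖ ≤ D * (b - a) := by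
  simpa only [abs_of_nonneg (sub_nonneg.2 hab)] using
    intervalIntegral.norm_integral_le_of_norm_le_const fun s hs => hD s (uIoc_of_le hab ▸ hs)

lemma sum_norm_integral_sub_le {E : Type*} [NormedAddCommGroup E] [NormedSpace ℝ E]
    {g : ℝ → E} {ε η C : ℝ} (hε : 0 < ε) (hη : 0 ≤ η) (hC : 0 ≤ C) (N : ℕ) (F : Finset ℝ)
    (h_good : ∀ k ∈ Finset.Icc 1 N, (∀ t ∈ F, t ∉ Ioc (ε * (k - 1)) (ε * k)) →
      ∀ s ∈ Ioc (ε * (k - 1)) (ε * k), ‖g s - g (ε * (k - 1))‖ ≤ η)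
    (h_all : ∀ k ∈ Finset.Icc 1 N, ∀ s ∈ Ioc (ε * (k - 1)) (ε * k),
      ‖g s - g (ε * (k - 1))‖ ≤ C) :
    ∑ k ∈ Finset.Icc 1 N, ‖∫ s in (ε * ((k : ℝ) - 1))..(ε * (k : ℝ)), (g s - g (ε * ((k : ℝ) - 1)))‖
      ≤ N * ε * η + F.card * ε * C := by
  classical
  set bad : ℕ → Prop := fun k => ∃ t ∈ F, t ∈ Ioc (ε * (k - 1)) (ε * k)
  have h_block (k : ℕ) {D : ℝ} (hD : ∀ s ∈ Ioc (ε * (k - 1)) (ε * k), ‖g s - g (ε * (k - 1))‖ ≤ D) :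
      ‖∫ s in (ε * ((k : ℝ) - 1))..(ε * (k : ℝ)), (g s - g (ε * ((k : ℝ) - 1)))‖ ≤ ε * D := by
    have h_len : ε * k - ε * (k - 1) = ε := by ring
    simpa only [h_len, mul_comm D] using norm_integral_sub_left_le (by gcongr; linarith) hD
  have h_term : ∀ k ∈ Finset.Icc 1 N,
      ‖∫ s in (ε * ((k : ℝ) - 1))..(ε * (k : ℝ)), (g s - g (ε * ((k : ℝ) - 1)))‖
        ≤ ε * η + if bad k then ε * C else 0 := by
    intro k hk
    by_cases hk_bad : bad k
    · have := h_block k (h_all k hk)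
      rw [if_pos hk_bad]
      linarith [mul_nonneg hε.le hη]
    · simpa only [if_neg hk_bad, add_zero] using
        h_block k (h_good k hk fun t ht ht' => hk_bad ⟨t, ht, ht'⟩)
  calc _ ≤ ∑ k ∈ Finset.Icc 1 N, (ε * η + if bad k then ε * C else 0) :=
        Finset.sum_le_sum h_term
    _ = N * ε * η + ((Finset.Icc 1 N).filter bad).card * (ε * C) := by
        rw [Finset.sum_add_distrib, Finset.sum_ite, Finset.sum_const_zero, add_zero,
          Finset.sum_const, Finset.sum_const, Nat.card_Icc, Nat.add_sub_cancel, nsmul_eq_mul,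
          nsmul_eq_mul, mul_assoc]
    _ ≤ N * ε * η + F.card * ε * C := by
        rw [mul_assoc (F.card : ℝ)]
        gcongr
        exact Nat.cast_le.2 (card_filter_exists_mem_Ioc_le hε N F)

lemma tendsto_nhdsGT_zero_of_forall_le_add_mul {f : ℝ → ℝ} (hf : ∀ᶠ ε in 𝓝[>] 0, 0 ≤ f ε)
    (h : ∀ η > 0, ∃ K, ∀ᶠ ε in 𝓝[>] 0, f ε ≤ η + K * ε) : Tendsto f (𝓝[>] 0) (𝓝 0) := by
  refine tendsto_order.2 ⟨fun a ha => hf.mono fun ε hε => ha.trans_le hε, fun a ha => ?_⟩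
  obtain ⟨K, hK⟩ := h (a / 2) (half_pos ha)
  have hKε : Tendsto (fun ε => K * ε) (𝓝[>] 0) (𝓝 0) := by
    simpa using ((continuous_const_mul K).tendsto 0).mono_left nhdsWithin_le_nhds
  filter_upwards [hK, hKε.eventually (gt_mem_nhds (half_pos ha))] with ε h₁ h₂
  linarith

lemma Icc_subset_Icc_of_mem_Icc_floor_div {M ε : ℝ} (hε : 0 < ε) {k : ℕ}
    (hk : k ∈ Finset.Icc 1 ⌊M / ε⌋₊) : Icc (ε * ((k : ℝ) - 1)) (ε * k) ⊆ Icc 0 M := by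
  obtain ⟨hk1, hkN⟩ := Finset.mem_Icc.1 hk
  have hk1' : (1 : ℝ) ≤ k := by exact_mod_cast hk1
  have hkM : (k : ℝ) ≤ M / ε := (Nat.le_floor_iff' (by omega)).1 hkN
  refine Icc_subset_Icc (mul_nonneg hε.le (by linarith)) ?_
  rwa [le_div_iff₀ hε, mul_comm] at hkM

/-- For a cad-lag function `g` on `[0,∞)` and `M > 0`, the Riemann-type sums
`∑_{k=1}^{⌊M/ε⌋} |∫_{ε(k-1)}^{εk} (g(s) - g(ε(k-1))) ds|` tend to `0` as `ε → 0⁺`. -/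
theorem cadlag_riemann_sum_tendsto_zero
    (M : ℝ) (hM : 0 < M) (g : ℝ → ℝ)
    (hg_right : ∀ t : ℝ, 0 ≤ t →
      Tendsto g (nhdsWithin t (Set.Ici t)) (nhds (g t)))
    (hg_left : ∀ t : ℝ, 0 < t →
      ∃ l : ℝ, Tendsto g (nhdsWithin t (Set.Iio t)) (nhds l)) :
    Tendsto
      (fun ε : ℝ =>
        ∑ k ∈ Finset.Icc 1 ⌊M / ε⌋₊,
          |∫ s in (ε * ((k : ℝ) - 1))..(ε * (k : ℝ)), (g s - g (ε * ((k : ℝ) - 1)))|)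
      (nhdsWithin 0 (Set.Ioi 0)) (nhds 0) := by
  obtain ⟨C, hC⟩ := isBounded_iff_forall_norm_le.1
    (isBounded_image_Icc_of_cadlag hg_right hg_left M)
  replace hC : ∀ s ∈ Icc 0 M, ‖g s‖ ≤ C := fun s hs => hC _ (mem_image_of_mem g hs)
  refine tendsto_nhdsGT_zero_of_forall_le_add_mul
    (Eventually.of_forall fun ε => Finset.sum_nonneg fun k _ => abs_nonneg _) fun η hη => ?_
  obtain ⟨F, δ, hδ, hF⟩ := exists_finset_forall_dist_lt_of_cadlag hg_right hg_left M (div_pos hη hM)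
  refine ⟨F.card * (2 * C), ?_⟩
  filter_upwards [Ioo_mem_nhdsGT hδ] with ε ⟨hε, hεδ⟩
  have h_left_mem (k : ℕ) (hk : k ∈ Finset.Icc 1 ⌊M / ε⌋₊) : ε * ((k : ℝ) - 1) ∈ Icc 0 M :=
    Icc_subset_Icc_of_mem_Icc_floor_div hε hk (left_mem_Icc.2 (by nlinarith))
  have h_good : ∀ k ∈ Finset.Icc 1 ⌊M / ε⌋₊, (∀ t ∈ F, t ∉ Ioc (ε * (k - 1)) (ε * k)) →
      ∀ s ∈ Ioc (ε * (k - 1)) (ε * k), ‖g s - g (ε * (k - 1))‖ ≤ η / M :=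
    fun k hk hk_good s hs =>
      (hF _ (h_left_mem k hk) _ (by linarith) hk_good s (Ioc_subset_Icc_self hs)).le
  have h_all : ∀ k ∈ Finset.Icc 1 ⌊M / ε⌋₊, ∀ s ∈ Ioc (ε * (k - 1)) (ε * k),
      ‖g s - g (ε * (k - 1))‖ ≤ 2 * C := fun k hk s hs => by
    have hs_mem := Icc_subset_Icc_of_mem_Icc_floor_div hε hk (Ioc_subset_Icc_self hs)
    linarith [norm_sub_le (g s) (g (ε * (k - 1))), hC s hs_mem, hC _ (h_left_mem k hk)]
  have hNε : ⌊M / ε⌋₊ * ε ≤ M := (le_div_iff₀ hε).1 (Nat.floor_le (div_nonneg hM.le hε.le))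
  calc _ ≤ ⌊M / ε⌋₊ * ε * (η / M) + F.card * ε * (2 * C) := by
        simpa only [Real.norm_eq_abs] using sum_norm_integral_sub_le hε (div_pos hη hM).le
          (by linarith [norm_nonneg (g 0), hC 0 ⟨le_rfl, hM.le⟩]) _ F h_good h_all
    _ ≤ M * (η / M) + F.card * ε * (2 * C) := by gcongr
    _ = η + F.card * (2 * C) * ε := by field_simp
end

section
/- Let φ : [1,∞) → (0,∞) be increasing, differentiable and concave with lim_{u→∞} φ'(u) = 0. Then lim_{t→∞} (log φ(H_φ^{-1}(t)))/t = 0; that is, the rate function r_*(t) := φ(H_φ^{-1}(t)) is subgeometric (grows subexponentially). -/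
open Filter

/-- If `φ : [1,∞) → (0,∞)` is increasing, differentiable and concave with `φ'(u) → 0`
as `u → ∞`, then `log(φ(H_φ⁻¹(t)))/t → 0` as `t → ∞`; that is, the rate function
`r_*(t) = φ(H_φ⁻¹(t))` is subgeometric. -/
theorem rate_star_subgeometric
    (φ φ' : ℝ → ℝ)
    (hφ_pos : ∀ u : ℝ, 1 ≤ u → 0 < φ u)
    (hφ_mono : StrictMonoOn φ (Set.Ici 1))
    (hφ_deriv : ∀ u ∈ Set.Ici (1:ℝ), HasDerivWithinAt φ (φ' u) (Set.Ici 1) u)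
    (hφ_conc : ConcaveOn ℝ (Set.Ici 1) φ)
    (hφ'_lim : Tendsto φ' atTop (nhds 0))
    (H : ℝ → ℝ) (hH : ∀ u : ℝ, H u = ∫ s in (1:ℝ)..u, (φ s)⁻¹)
    (Hinv : ℝ → ℝ)
    (hHinv_mem : ∀ t : ℝ, 0 ≤ t → 1 ≤ Hinv t)
    (hHinv_left : ∀ u : ℝ, 1 ≤ u → Hinv (H u) = u)
    (hHinv_right : ∀ t : ℝ, 0 ≤ t → H (Hinv t) = t) :
    Tendsto (fun t : ℝ => Real.log (φ (Hinv t)) / t) atTop (nhds 0) := by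
  have hφ_cont : ContinuousOn φ (Set.Ici 1) := fun u hu => (hφ_deriv u hu).continuousWithinAt
  have hφ_ne : ∀ u ∈ Set.Ici (1:ℝ), φ u ≠ 0 := fun u hu => (hφ_pos u hu).ne'
  have hinv_cont : ContinuousOn (fun s => (φ s)⁻¹) (Set.Ici 1) := hφ_cont.inv₀ hφ_ne
  have hInt : ∀ a b : ℝ, 1 ≤ a → a ≤ b →
      IntervalIntegrable (fun s => (φ s)⁻¹) MeasureTheory.volume a b := by
    intro a b ha hab
    apply (hinv_cont.mono ?_).intervalIntegrable
    rw [Set.uIcc_of_le hab]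
    exact fun x hx => le_trans ha hx.1
  -- H is strictly monotone on [1, ∞)
  have hH_mono : ∀ a b : ℝ, 1 ≤ a → a < b → H a < H b := by
    intro a b ha hab
    have hIab := hInt a b ha hab.le
    have hsum : H a + ∫ s in a..b, (φ s)⁻¹ = H b := by
      rw [hH, hH]
      exact intervalIntegral.integral_add_adjacent_intervals (hInt 1 a le_rfl ha) hIab
    have hpos : 0 < ∫ s in a..b, (φ s)⁻¹ := by
      apply intervalIntegral.intervalIntegral_pos_of_pos_on hIab _ hab
      intro x hx
      exact inv_pos.2 (hφ_pos x (le_trans ha hx.1.le))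
    linarith
  -- H has derivative (φ u)⁻¹ at u > 1
  have hφ_at : ∀ u : ℝ, 1 < u → HasDerivAt φ (φ' u) u := fun u hu =>
    (hφ_deriv u hu.le).hasDerivAt (Ici_mem_nhds hu)
  have hH_deriv : ∀ u : ℝ, 1 < u → HasDerivAt H (φ u)⁻¹ u := by
    intro u hu
    have hca : ContinuousAt (fun s => (φ s)⁻¹) u :=
      ((hφ_at u hu).continuousAt).inv₀ (hφ_ne u hu.le)
    have hmeas : StronglyMeasurableAtFilter (fun s => (φ s)⁻¹) (nhds u)
        MeasureTheory.volume :=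
      ContinuousOn.stronglyMeasurableAtFilter isOpen_Ioi
        (hinv_cont.mono (Set.Ioi_subset_Ici le_rfl)) u hu
    have := intervalIntegral.integral_hasDerivAt_right (hInt 1 u le_rfl hu.le) hmeas hca
    have heq : H = fun x => ∫ s in (1:ℝ)..x, (φ s)⁻¹ := funext hH
    rw [heq]
    exact this
  -- nonneg of H
  have hH_nonneg : ∀ u : ℝ, 1 ≤ u → 0 ≤ H u := by
    intro u hu
    rw [hH]
    apply intervalIntegral.integral_nonneg hu
    intro x hx
    exact (inv_pos.2 (hφ_pos x hx.1)).le
  -- Hinv t ≥ u0 for t ≥ max (H u0) 0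
  have hHinv_large : ∀ u0 t : ℝ, 1 ≤ u0 → 0 ≤ t → H u0 ≤ t → u0 ≤ Hinv t := by
    intro u0 t hu0 ht hHt
    by_contra hlt
    push_neg at hlt
    have := hH_mono (Hinv t) u0 (hHinv_mem t ht) hlt
    rw [hHinv_right t ht] at this
    linarith
  -- lower bound helper: tendsto const / t → 0
  have hdiv : ∀ c : ℝ, Tendsto (fun t : ℝ => c / t) atTop (nhds 0) :=
    fun c => tendsto_const_nhds.div_atTop tendsto_id
  rw [tendsto_order]
  constructor
  · -- lower bound
    intro a ha
    have h1 : ∀ᶠ t : ℝ in atTop, a < Real.log (φ 1) / t :=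
      (hdiv (Real.log (φ 1))).eventually (eventually_gt_nhds ha)
    filter_upwards [h1, eventually_ge_atTop (1:ℝ)] with t h1t h2t
    have htpos : (0:ℝ) < t := lt_of_lt_of_le one_pos h2t
    have hmem : 1 ≤ Hinv t := hHinv_mem t htpos.le
    have hlog : Real.log (φ 1) ≤ Real.log (φ (Hinv t)) := by
      apply Real.log_le_log (hφ_pos 1 le_rfl)
      exact (hφ_mono.monotoneOn) (by simp) hmem hmem
    calc a < Real.log (φ 1) / t := h1t
      _ ≤ Real.log (φ (Hinv t)) / t := by gcongr
  · -- upper bound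
    intro a ha
    -- choose u0 ≥ 2 with φ' u ≤ a/2 for u ≥ u0
    have hev : ∀ᶠ u : ℝ in atTop, φ' u < a / 2 :=
      hφ'_lim.eventually (eventually_lt_nhds (by linarith))
    obtain ⟨u0', hu0'⟩ := hev.exists_forall_of_atTop
    set u0 : ℝ := max u0' 2 with hu0def
    have hu0_gt : (1:ℝ) < u0 := lt_of_lt_of_le one_lt_two (le_max_right _ _)
    have hφ'_small : ∀ u : ℝ, u0 ≤ u → φ' u < a / 2 :=
      fun u hu => hu0' u (le_trans (le_max_left _ _) hu)
    -- g := log ∘ φ - (a/2) • H is antitone on [u0, ∞)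
    set g : ℝ → ℝ := fun u => Real.log (φ u) - a / 2 * H u with hg
    have hg_deriv : ∀ u : ℝ, 1 < u →
        HasDerivAt g (φ' u / φ u - a / 2 * (φ u)⁻¹) u := by
      intro u hu
      exact ((hφ_at u hu).log (hφ_ne u hu.le)).sub ((hH_deriv u hu).const_mul (a/2))
    have hg_anti : AntitoneOn g (Set.Ici u0) := by
      apply antitoneOn_of_deriv_nonpos (convex_Ici u0)
      · intro u hu
        exact ((hg_deriv u (lt_of_lt_of_le hu0_gt hu)).continuousAt).continuousWithinAt
      · intro u hu
        rw [interior_Ici] at hu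
        exact (hg_deriv u (lt_trans hu0_gt hu)).differentiableAt.differentiableWithinAt
      · intro u hu
        rw [interior_Ici] at hu
        have hu1 : 1 < u := lt_trans hu0_gt hu
        rw [(hg_deriv u hu1).deriv]
        have hφu : 0 < φ u := hφ_pos u hu1.le
        have : φ' u < a / 2 := hφ'_small u hu.le
        have heq : φ' u / φ u - a / 2 * (φ u)⁻¹ = (φ' u - a / 2) / φ u := by
          field_simp
        rw [heq]
        exact div_nonpos_of_nonpos_of_nonneg (by linarith) hφu.le
    set C : ℝ := Real.log (φ u0) - a / 2 * H u0 with hCdef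
    have hC : ∀ t : ℝ, 0 ≤ t → H u0 ≤ t →
        Real.log (φ (Hinv t)) ≤ C + a / 2 * t := by
      intro t ht hHt
      have hmem : u0 ≤ Hinv t := hHinv_large u0 t hu0_gt.le ht hHt
      have hle := hg_anti (Set.self_mem_Ici) hmem hmem
      simp only [hg] at hle
      rw [hHinv_right t ht] at hle
      rw [hCdef]
      linarith
    have h2 : ∀ᶠ t : ℝ in atTop, C / t < a / 2 :=
      (hdiv C).eventually (eventually_lt_nhds (by linarith))
    filter_upwards [h2, eventually_ge_atTop (1:ℝ), eventually_ge_atTop (max (H u0) 0)]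
      with t h2t h1t hmt
    have htpos : (0:ℝ) < t := lt_of_lt_of_le one_pos h1t
    have hub := hC t (le_trans (le_max_right _ _) hmt) (le_trans (le_max_left _ _) hmt)
    calc Real.log (φ (Hinv t)) / t ≤ (C + a / 2 * t) / t := by gcongr
      _ = C / t + a / 2 := by
          rw [add_div, mul_div_assoc, div_self htpos.ne', mul_one]
      _ < a / 2 + a / 2 := by linarith
      _ = a := by ring
end

section
/- Let φ : [1,∞) → (0,∞) be increasing, differentiable and concave. For each fixed t ≥ 0, the function u ↦ H_φ^{-1}(H_φ(u) + t), defined for u ∈ [1,∞), is differentiable with derivative φ(H_φ^{-1}(H_φ(u)+t))/φ(u) at every u ≥ 1, and it is concave on [1,∞). -/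
open Set Filter Topology

/-!
For `g u = H⁻¹ (H u + t)`, the chain rule with `H' = 1 / φ` and `(H⁻¹)' = φ ∘ H⁻¹` gives
`g' = φ ∘ g / φ`. Differentiating once more, `g'' = φ (g) (φ' (g) - φ') / φ ^ 2`, which is
nonpositive because `g u ≥ u` and `φ'` is antitone by the concavity of `φ`.
-/

theorem HasDerivWithinAt.of_local_left_inverse {𝕜 : Type*} [NontriviallyNormedField 𝕜]
    {f g : 𝕜 → 𝕜} {f' a : 𝕜} {s t : Set 𝕜} (hg : Tendsto g (𝓝[s] a) (𝓝[t] (g a)))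
    (hf : HasDerivWithinAt f f' t (g a)) (hf' : f' ≠ 0) (ha : a ∈ s)
    (hfg : ∀ᶠ y in 𝓝[s] a, f (g y) = y) : HasDerivWithinAt g f'⁻¹ s a :=
  HasFDerivWithinAt.of_local_left_inverse
    (f' := ContinuousLinearEquiv.unitsEquivAut 𝕜 (Units.mk0 f' hf')) hg hf ha hfg

theorem StrictMonoOn.continuousOn_Ici_of_surjOn {α β : Type*} [LinearOrder α]
    [TopologicalSpace α] [OrderTopology α] [LinearOrder β] [TopologicalSpace β] [OrderTopology β]
    [DenselyOrdered β] {f : α → β} {a : α} (hf : StrictMonoOn f (Ici a)) (hsurj : SurjOn f (Ici a) (Ici (f a))) :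
    ContinuousOn f (Ici a) := by
  intro x hx
  rcases eq_or_lt_of_le hx with rfl | hax
  · exact hf.continuousWithinAt_right_of_surjOn self_mem_nhdsWithin
      (hsurj.mono subset_rfl Ioi_subset_Ici_self)
  · exact (hf.continuousAt_of_image_mem_nhds (Ici_mem_nhds hax)
      (mem_of_superset (Ici_mem_nhds (hf self_mem_Ici hx hax)) hsurj)).continuousWithinAt

theorem StrictMonoOn.hasDerivWithinAt_Ici_of_invOn {F G : ℝ → ℝ} {F' a b s : ℝ}
    (hF : StrictMonoOn F (Ici a)) (hFa : F a = b) (hG : MapsTo G (Ici b) (Ici a))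
    (hGF : LeftInvOn G F (Ici a)) (hFG : LeftInvOn F G (Ici b))
    (hF_deriv : HasDerivWithinAt F F' (Ici a) (G s)) (hF' : F' ≠ 0) (hs : b ≤ s) :
    HasDerivWithinAt G F'⁻¹ (Ici b) s := by
  have hG_mono : StrictMonoOn G (Ici b) := fun x hx y hy hxy => by
    rwa [← hF.lt_iff_lt (hG hx) (hG hy), hFG hx, hFG hy]
  have hGb : G b = a := hFa ▸ hGF self_mem_Ici
  have hG_surj : SurjOn G (Ici b) (Ici (G b)) := fun u hu => by
    rw [hGb] at hu
    exact ⟨F u, hFa ▸ hF.monotoneOn self_mem_Ici hu hu, hGF hu⟩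
  exact HasDerivWithinAt.of_local_left_inverse
    ((hG_mono.continuousOn_Ici_of_surjOn hG_surj s hs).tendsto_nhdsWithin hG) hF_deriv hF' hs
    (eventually_mem_nhdsWithin.mono hFG)

theorem strictMonoOn_Ici_of_hasDerivWithinAt_pos {f f' : ℝ → ℝ} {a : ℝ}
    (hf : ∀ x ∈ Ici a, HasDerivWithinAt f (f' x) (Ici a) x) (hf' : ∀ x ∈ Ici a, 0 < f' x) :
    StrictMonoOn f (Ici a) := by
  refine strictMonoOn_of_hasDerivWithinAt_pos (convex_Ici a)
    (fun x hx => (hf x hx).continuousWithinAt) ?_ fun x hx => hf' x (interior_subset hx)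
  rw [interior_Ici]
  exact fun x hx => (hf x (Ioi_subset_Ici_self hx)).mono Ioi_subset_Ici_self

theorem hasDerivWithinAt_integral_Ici {E : Type*} [NormedAddCommGroup E] [NormedSpace ℝ E]
    [CompleteSpace E] {f : ℝ → E} {a u : ℝ} (hf : ContinuousOn f (Ici a)) (hu : a ≤ u) :
    HasDerivWithinAt (fun v => ∫ x in a..v, f x) (f u) (Ici a) u := by
  -- On `Icc a (u + 1)` the fundamental theorem of calculus treats `u = a` and `u > a` alike.
  have : Fact (u ∈ Icc a (u + 1)) := ⟨hu, by linarith⟩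
  have hf_Icc : ContinuousOn f (Icc a (u + 1)) := hf.mono Icc_subset_Ici_self
  have hftc := intervalIntegral.integral_hasDerivWithinAt_right (s := Icc a (u + 1))
    (t := Icc a (u + 1))
    ((hf_Icc.mono (Icc_subset_Icc_right (by linarith))).intervalIntegrable_of_Icc hu)
    (hf_Icc.stronglyMeasurableAtFilter_nhdsWithin measurableSet_Icc u) (hf_Icc u this.out)
  exact hftc.mono_of_mem_nhdsWithin (inter_mem_nhdsWithin _ (Iic_mem_nhds (by linarith)))

theorem ConcaveOn.antitoneOn_of_hasDerivWithinAt {S : Set ℝ} {f f' : ℝ → ℝ}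
    (hf : ConcaveOn ℝ S f) (hd : ∀ x ∈ S, HasDerivWithinAt f (f' x) S x) : AntitoneOn f' S := by
  intro x hx y hy hxy
  rcases eq_or_lt_of_le hxy with rfl | hlt
  · rfl
  · exact (hf.le_slope_of_hasDerivWithinAt hx hy hlt (hd y hy)).trans
      (hf.slope_le_of_hasDerivWithinAt hx hy hlt (hd x hx))

theorem ConcaveOn.concaveOn_of_hasDerivWithinAt_comp_div {φ φ' g : ℝ → ℝ} {a : ℝ}
    (hφ_conc : ConcaveOn ℝ (Ici a) φ) (hφ_pos : ∀ u ∈ Ici a, 0 < φ u)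
    (hφ_deriv : ∀ u ∈ Ici a, HasDerivWithinAt φ (φ' u) (Ici a) u)
    (hg_ge : ∀ u ∈ Ici a, u ≤ g u)
    (hg_deriv : ∀ u ∈ Ici a, HasDerivWithinAt g (φ (g u) / φ u) (Ici a) u) :
    ConcaveOn ℝ (Ici a) g := by
  have hφ'_anti := hφ_conc.antitoneOn_of_hasDerivWithinAt hφ_deriv
  have hg_maps : MapsTo g (Ici a) (Ici a) := fun u hu => le_trans hu (hg_ge u hu)
  have hg_deriv2 : ∀ u ∈ Ici a, HasDerivWithinAt (fun v => φ (g v) / φ v)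
      (φ (g u) * (φ' (g u) - φ' u) / φ u ^ 2) (Ici a) u := by
    intro u hu
    have hφu := (hφ_pos u hu).ne'
    refine (((hφ_deriv _ (hg_maps hu)).comp u (hg_deriv u hu) hg_maps).div (hφ_deriv u hu)
      hφu).congr_deriv ?_
    rw [Function.comp_apply]
    field_simp
  refine concaveOn_of_hasDerivWithinAt2_nonpos (f' := fun u => φ (g u) / φ u)
    (f'' := fun u => φ (g u) * (φ' (g u) - φ' u) / φ u ^ 2) (convex_Ici a)
    (fun u hu => (hg_deriv u hu).continuousWithinAt) ?_ ?_ ?_ <;> rw [interior_Ici]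
  · exact fun u hu => (hg_deriv u (Ioi_subset_Ici_self hu)).mono Ioi_subset_Ici_self
  · exact fun u hu => (hg_deriv2 u (Ioi_subset_Ici_self hu)).mono Ioi_subset_Ici_self
  · intro u hu
    replace hu : u ∈ Ici a := Ioi_subset_Ici_self hu
    have hφ' : φ' (g u) ≤ φ' u := hφ'_anti hu (hg_maps hu) (hg_ge u hu)
    exact div_nonpos_of_nonpos_of_nonneg
      (mul_nonpos_of_nonneg_of_nonpos (hφ_pos _ (hg_maps hu)).le (sub_nonpos.2 hφ'))
      (sq_nonneg _)

theorem Hinv_shift_deriv_concave_general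
    (φ φ' : ℝ → ℝ)
    (hφ_pos : ∀ u : ℝ, 1 ≤ u → 0 < φ u)
    (hφ_deriv : ∀ u ∈ Set.Ici (1:ℝ), HasDerivWithinAt φ (φ' u) (Set.Ici 1) u)
    (hφ_conc : ConcaveOn ℝ (Set.Ici 1) φ)
    (H : ℝ → ℝ) (hH : ∀ u : ℝ, H u = ∫ s in (1:ℝ)..u, (φ s)⁻¹)
    (Hinv : ℝ → ℝ)
    (hHinv_mem : ∀ s : ℝ, 0 ≤ s → 1 ≤ Hinv s)
    (hHinv_left : ∀ u : ℝ, 1 ≤ u → Hinv (H u) = u)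
    (hHinv_right : ∀ s : ℝ, 0 ≤ s → H (Hinv s) = s)
    (t : ℝ) (ht : 0 ≤ t) :
    (∀ u ∈ Set.Ici (1:ℝ),
      HasDerivWithinAt (fun v => Hinv (H v + t)) (φ (Hinv (H u + t)) / φ u) (Set.Ici 1) u) ∧
    ConcaveOn ℝ (Set.Ici 1) (fun u => Hinv (H u + t)) := by
  have hH_deriv : ∀ u ∈ Ici (1:ℝ), HasDerivWithinAt H (φ u)⁻¹ (Ici 1) u := by
    obtain rfl : H = _ := funext hH
    exact fun u hu => hasDerivWithinAt_integral_Ici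
      (ContinuousOn.inv₀ (fun v hv => (hφ_deriv v hv).continuousWithinAt)
        fun v hv => (hφ_pos v hv).ne') hu
  have hH_mono : StrictMonoOn H (Ici 1) :=
    strictMonoOn_Ici_of_hasDerivWithinAt_pos hH_deriv fun u hu => inv_pos.2 (hφ_pos u hu)
  have hH_one : H 1 = 0 := by rw [hH, intervalIntegral.integral_same]
  have hshift : MapsTo (fun v => H v + t) (Ici 1) (Ici 0) := fun v hv =>
    add_nonneg (hH_one ▸ hH_mono.monotoneOn self_mem_Ici hv hv) ht
  have hHinv_deriv : ∀ s ∈ Ici (0:ℝ), HasDerivWithinAt Hinv (φ (Hinv s)) (Ici 0) s :=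
    fun s hs => by
      simpa only [inv_inv] using hH_mono.hasDerivWithinAt_Ici_of_invOn hH_one hHinv_mem hHinv_left hHinv_right
        (hH_deriv _ (hHinv_mem s hs)) (inv_ne_zero (hφ_pos _ (hHinv_mem s hs)).ne') hs
  have hderiv : ∀ u ∈ Ici (1:ℝ),
      HasDerivWithinAt (fun v => Hinv (H v + t)) (φ (Hinv (H u + t)) / φ u) (Ici 1) u :=
    fun u hu => by
      rw [div_eq_mul_inv]
      exact (hHinv_deriv _ (hshift hu)).comp u ((hH_deriv u hu).add_const t) hshift
  refine ⟨hderiv, hφ_conc.concaveOn_of_hasDerivWithinAt_comp_div hφ_pos hφ_deriv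
    (fun u hu => ?_) hderiv⟩
  refine (hH_mono.le_iff_le hu (hHinv_mem _ (hshift hu))).1 ?_
  rw [hHinv_right _ (hshift hu)]
  linarith

/-- For `φ : [1,∞) → (0,∞)` increasing, differentiable and concave and any fixed `t ≥ 0`,
the function `u ↦ H_φ⁻¹(H_φ(u) + t)` is differentiable on `[1,∞)` with derivative
`φ(H_φ⁻¹(H_φ(u)+t))/φ(u)` and is concave on `[1,∞)`. -/
theorem Hinv_shift_deriv_concave
    (φ φ' : ℝ → ℝ)
    (hφ_pos : ∀ u : ℝ, 1 ≤ u → 0 < φ u)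
    (hφ_mono : StrictMonoOn φ (Set.Ici 1))
    (hφ_deriv : ∀ u ∈ Set.Ici (1:ℝ), HasDerivWithinAt φ (φ' u) (Set.Ici 1) u)
    (hφ_conc : ConcaveOn ℝ (Set.Ici 1) φ)
    (H : ℝ → ℝ) (hH : ∀ u : ℝ, H u = ∫ s in (1:ℝ)..u, (φ s)⁻¹)
    (Hinv : ℝ → ℝ)
    (hHinv_mem : ∀ s : ℝ, 0 ≤ s → 1 ≤ Hinv s)
    (hHinv_left : ∀ u : ℝ, 1 ≤ u → Hinv (H u) = u)
    (hHinv_right : ∀ s : ℝ, 0 ≤ s → H (Hinv s) = s)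
    (t : ℝ) (ht : 0 ≤ t) :
    (∀ u ∈ Set.Ici (1:ℝ),
      HasDerivWithinAt (fun v => Hinv (H v + t)) (φ (Hinv (H u + t)) / φ u) (Set.Ici 1) u) ∧
    ConcaveOn ℝ (Set.Ici 1) (fun u => Hinv (H u + t)) :=
  Hinv_shift_deriv_concave_general φ φ' hφ_pos hφ_deriv hφ_conc H hH Hinv hHinv_mem hHinv_left
    hHinv_right t ht
end

section
/- Assume the drift condition D(C,V,φ,b). Then for every δ > 0, E[ ∫₀^{τ_C(δ)} φ(V(X_s)) ds ] ≤ V(x) − 1 + bδ; in particular τ_C(δ) < ∞ ℙ-almost surely. -/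
/-!
Discretise time with mesh `h` up to the horizon `n h`, and let `σ` be the first grid time at which
`τ` has occurred (or `n h`). Optional stopping for the discrete supermartingale `(M (i h))ᵢ` gives
`E[M σ] ≤ E[M 0] = 0`. Pathwise, the cost `∫ φ(V(X s))` over `{s ≤ n h, s < τ}` is at most
`∫₀^σ φ(V(X s)) ds = M σ - V(X σ) + V(X 0) + b ∫₀^σ 1_C(X s) ds`; since `X` avoids `C` on `(δ, τ)`
and `σ` overshoots `τ` by less than `h`, the occupation integral is at most `δ + h`. With `V ≥ 1`
this bounds the expected cost by `V x - 1 + b (δ + h)`; let `n → ∞` (monotone convergence) and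
then `h → 0`. On `{τ = ∞}` the cost is infinite since `φ ∘ V ≥ φ 1 > 0`, so that event is null.
-/

open MeasureTheory Filter Set Topology TopologicalSpace
open scoped ENNReal NNReal

lemma bddAbove_image_Icc_of_rightCts_of_leftLim {f : ℝ → ℝ}
    (hrc : ∀ t, 0 ≤ t → ContinuousWithinAt f (Ici t) t)
    (hll : ∀ t, 0 < t → ∃ l, Tendsto f (𝓝[<] t) (𝓝 l)) (T : ℝ) :
    BddAbove (f '' Icc 0 T) := by
  refine isCompact_Icc.induction_on (p := fun s => BddAbove (f '' s)) (by simp)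
    (fun s t hst h => h.mono (image_mono hst))
    (fun s t hs ht => by rw [image_union]; exact hs.union ht) fun y hy => ?_
  have hbdd : IsBoundedUnder (· ≤ ·) (𝓝[Icc 0 T] y) f := by
    rcases hy.1.eq_or_lt with rfl | hpos
    · exact (hrc 0 le_rfl).isBoundedUnder_le.mono (nhdsWithin_mono _ Icc_subset_Ici_self)
    · obtain ⟨l, hl⟩ := hll y hpos
      refine IsBoundedUnder.mono nhdsWithin_le_nhds ?_
      rw [← nhdsLT_sup_nhdsGE, IsBoundedUnder, map_sup]
      exact isBounded_sup hl.isBoundedUnder_le (hrc y hy.1).isBoundedUnder_le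
  obtain ⟨B, hB⟩ := hbdd
  exact ⟨{u | f u ≤ B}, hB, B, by rintro _ ⟨u, hu, rfl⟩; exact hu⟩

lemma MonotoneOn.measurable_comp {φ : ℝ → ℝ} {a : ℝ} (hφ : MonotoneOn φ (Ici a))
    {α : Type*} [MeasurableSpace α] {g : α → ℝ} (hg : Measurable g) (hga : ∀ x, a ≤ g x) :
    Measurable fun x => φ (g x) := by
  have hφ_max : Monotone fun v => φ (max v a) := fun u v huv =>
    hφ (le_max_right u a) (le_max_right v a) (max_le_max_right a huv)
  simpa only [Function.comp_def, fun x => max_eq_left (hga x)] using hφ_max.measurable.comp hg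

lemma MonotoneOn.bddAbove_image_comp {φ : ℝ → ℝ} {a : ℝ} (hφ : MonotoneOn φ (Ici a))
    {α : Type*} {g : α → ℝ} (hga : ∀ x, a ≤ g x) {s : Set α} (hs : BddAbove (g '' s)) :
    BddAbove ((fun x => φ (g x)) '' s) := by
  obtain ⟨B, hB⟩ := hs
  refine ⟨φ (max B a), ?_⟩
  rintro _ ⟨x, hx, rfl⟩
  exact hφ (hga x) (le_max_right B a) ((hB ⟨x, hx, rfl⟩).trans (le_max_left B a))

lemma measurable_uncurry_max_of_continuousWithinAt_Ici {Ω β : Type*} [MeasurableSpace Ω]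
    [TopologicalSpace β] [PseudoMetrizableSpace β] [MeasurableSpace β] [BorelSpace β]
    {Z : ℝ → Ω → β} (hZ : ∀ t, 0 ≤ t → Measurable (Z t))
    (hrc : ∀ ω t, 0 ≤ t → ContinuousWithinAt (Z · ω) (Ici t) t) :
    Measurable fun p : ℝ × Ω => Z (max p.1 0) p.2 := by
  set grid : ℕ → ℝ → ℝ := fun n t => ⌈max t 0 * (n + 1)⌉₊ / (n + 1)
  have h_meas : ∀ n, Measurable fun p : ℝ × Ω => Z (grid n p.1) p.2 := fun n => by
    have hZk : Measurable fun q : Ω × ℕ => Z (q.2 / (n + 1)) q.1 :=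
      measurable_from_prod_countable_left fun k => hZ ((k : ℝ) / (n + 1)) (by positivity)
    exact hZk.comp <| measurable_snd.prodMk
      ((measurable_fst.max measurable_const).mul_const _).nat_ceil
  have h_grid : ∀ t, Tendsto (grid · t) atTop (𝓝[Ici (max t 0)] (max t 0)) := fun t => by
    have hn : ∀ n : ℕ, (0 : ℝ) < n + 1 := fun n => by positivity
    have h_ge : ∀ n, max t 0 ≤ grid n t := fun n => (le_div_iff₀ (hn n)).2 (Nat.le_ceil _)
    have h_le : ∀ n, grid n t ≤ max t 0 + 1 / (n + 1) := fun n => by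
      rw [div_le_iff₀ (hn n), add_mul, one_div_mul_cancel (hn n).ne']
      exact (Nat.ceil_lt_add_one (by positivity)).le
    refine tendsto_nhdsWithin_iff.2 ⟨?_, Eventually.of_forall h_ge⟩
    refine tendsto_of_tendsto_of_tendsto_of_le_of_le tendsto_const_nhds ?_ h_ge h_le
    simpa using tendsto_const_nhds.add (tendsto_one_div_add_atTop_nhds_zero_nat (𝕜 := ℝ))
  exact measurable_of_tendsto_metrizable h_meas <| tendsto_pi_nhds.2 fun p =>
    (hrc p.2 _ (le_max_right _ _)).tendsto.comp (h_grid p.1)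

lemma intervalIntegrable_of_measurable_max_of_bddAbove {f : ℝ → ℝ}
    (hf_meas : Measurable fun s => f (max s 0)) (hf_nonneg : ∀ s, 0 ≤ f s) {T : ℝ}
    (hf_bdd : BddAbove (f '' Icc 0 T)) (hT : 0 ≤ T) : IntervalIntegrable f volume 0 T := by
  obtain ⟨B, hB⟩ := hf_bdd
  refine (intervalIntegrable_iff_integrableOn_Ioc_of_le hT).2
    ⟨?_, .restrict_of_bounded (C := B) measure_Ioc_lt_top ?_⟩
  · refine (hf_meas.aestronglyMeasurable (μ := volume.restrict (Ioc 0 T))).congr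
      ((ae_restrict_iff' measurableSet_Ioc).2 (Eventually.of_forall fun s hs => ?_))
    simp only [max_eq_left hs.1.le]
  · refine (ae_restrict_iff' measurableSet_Ioc).2 (Eventually.of_forall fun s hs => ?_)
    rw [Real.norm_of_nonneg (hf_nonneg s)]
    exact hB ⟨s, Ioc_subset_Icc_self hs, rfl⟩

lemma intervalIntegral_indicator_Icc_one_le {a c T : ℝ} (hac : a ≤ c) (hT : 0 ≤ T) :
    ∫ u in 0..T, (Icc a c).indicator (1 : ℝ → ℝ) u ≤ c - a := by
  rw [intervalIntegral.integral_of_le hT, integral_indicator_one measurableSet_Icc]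
  calc (volume.restrict (Ioc 0 T) (Icc a c)).toReal ≤ (volume (Icc a c)).toReal :=
        ENNReal.toReal_mono measure_Icc_lt_top.ne (Measure.restrict_le_self _)
    _ = c - a := by rw [Real.volume_Icc, ENNReal.toReal_ofReal (sub_nonneg.2 hac)]

lemma intervalIntegral_le_of_le_one_of_nonpos_on_Ioo {g : ℝ → ℝ} {δ h T : ℝ}
    (hδ : 0 ≤ δ) (hh : 0 ≤ h) (hT : 0 ≤ T)
    (hg_le : ∀ u, g u ≤ 1) (hg_nonpos : ∀ u ∈ Ioo δ (T - h), g u ≤ 0) :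
    ∫ u in 0..T, g u ≤ δ + h := by
  by_cases hg : IntervalIntegrable g volume 0 T
  swap
  · rw [intervalIntegral.integral_undef hg]; positivity
  set ψ : ℝ → ℝ := fun u => (Icc 0 δ).indicator 1 u + (Icc (T - h) T).indicator 1 u
  have hψ_int : ∀ a c, IntervalIntegrable ((Icc a c).indicator (1 : ℝ → ℝ)) volume 0 T :=
    fun a c => ((integrable_indicator_iff measurableSet_Icc).2
      (integrableOn_const measure_Icc_lt_top.ne)).intervalIntegrable
  have hgψ : ∀ u ∈ Icc 0 T, g u ≤ ψ u := fun u hu => by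
    have h₁ : 0 ≤ (Icc 0 δ).indicator (1 : ℝ → ℝ) u := indicator_nonneg (by simp) u
    have h₂ : 0 ≤ (Icc (T - h) T).indicator (1 : ℝ → ℝ) u := indicator_nonneg (by simp) u
    by_cases huδ : u ≤ δ
    · have : (Icc 0 δ).indicator (1 : ℝ → ℝ) u = 1 :=
        indicator_of_mem (show u ∈ Icc 0 δ from ⟨hu.1, huδ⟩) _
      linarith [hg_le u]
    by_cases huh : T - h ≤ u
    · have : (Icc (T - h) T).indicator (1 : ℝ → ℝ) u = 1 :=
        indicator_of_mem (show u ∈ Icc (T - h) T from ⟨huh, hu.2⟩) _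
      linarith [hg_le u]
    linarith [hg_nonpos u ⟨not_le.1 huδ, not_le.1 huh⟩]
  calc ∫ u in 0..T, g u ≤ ∫ u in 0..T, ψ u :=
        intervalIntegral.integral_mono_on hT hg ((hψ_int _ _).add (hψ_int _ _)) hgψ
    _ ≤ δ + h := by
      rw [intervalIntegral.integral_add (hψ_int _ _) (hψ_int _ _)]
      have h₁ := intervalIntegral_indicator_Icc_one_le hδ hT
      have h₂ := intervalIntegral_indicator_Icc_one_le (by linarith : T - h ≤ T) hT
      linarith

lemma setLIntegral_ofReal_le_intervalIntegral {f : ℝ → ℝ} {S : Set ℝ} {a : ℝ}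
    (hS : S ⊆ Icc 0 a) (hf_nonneg : ∀ s, 0 ≤ f s) (hf : IntervalIntegrable f volume 0 a)
    (ha : 0 ≤ a) : ∫⁻ s in S, ENNReal.ofReal (f s) ≤ ENNReal.ofReal (∫ s in 0..a, f s) := by
  rw [intervalIntegral.integral_of_le ha,
    ofReal_integral_eq_lintegral_ofReal hf.1 (Eventually.of_forall hf_nonneg),
    setLIntegral_congr Ioc_ae_eq_Icc]
  exact lintegral_mono_set hS

lemma Measurable.setLIntegral_prod_right {α β : Type*} [MeasurableSpace α] [MeasurableSpace β]
    {ν : Measure β} [SFinite ν] {f : α × β → ℝ≥0∞} (hf : Measurable f)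
    {D : Set (α × β)} (hD : MeasurableSet D) :
    Measurable fun a => ∫⁻ b in Prod.mk a ⁻¹' D, f (a, b) ∂ν := by
  simp_rw [← lintegral_indicator (measurable_prodMk_left hD)]
  exact (hf.indicator hD).lintegral_prod_right'

namespace MeasureTheory

variable {Ω ι κ E : Type*} {m0 : MeasurableSpace Ω} [Preorder ι] [Preorder κ]

def Filtration.reindex (𝓕 : Filtration ι m0) {g : κ → ι} (hg : Monotone g) :
    Filtration κ m0 where
  seq k := 𝓕 (g k)
  mono' _ _ hkl := 𝓕.mono (hg hkl)
  le' k := 𝓕.le (g k)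

lemma Supermartingale.reindex [NormedAddCommGroup E] [NormedSpace ℝ E] [CompleteSpace E] [LE E]
    {μ : Measure Ω} {𝓕 : Filtration ι m0} {f : ι → Ω → E} (hf : Supermartingale f 𝓕 μ)
    {g : κ → ι} (hg : Monotone g) : Supermartingale (fun k => f (g k)) (𝓕.reindex hg) μ :=
  ⟨fun k => hf.stronglyAdapted (g k), fun _ _ hkl => hf.condExp_ae_le (hg hkl),
    fun k => hf.integrable (g k)⟩

end MeasureTheory

open MeasureTheory

section GridHitting

variable {Ω : Type*} {m0 : MeasurableSpace Ω} {τ : Ω → ℝ≥0∞} {h : ℝ≥0} {n : ℕ}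

/-- The first index `i ≤ n` with `τ ≤ i * h`, or `n` if there is none: the hitting time of the
event-valued process `i ↦ {τ ≤ i * h}`. -/
noncomputable def gridHitting (τ : Ω → ℝ≥0∞) (h : ℝ≥0) (n : ℕ) : Ω → ℕ :=
  hittingBtwn (fun i ω => τ ω ≤ ((i * h : ℝ≥0) : ℝ≥0∞)) {p | p} 0 n

lemma gridHitting_le (ω : Ω) : gridHitting τ h n ω ≤ n := hittingBtwn_le ω

lemma lt_stoppingTime_of_lt_gridHitting {ω : Ω} {i : ℕ} (hi : i < gridHitting τ h n ω) :
    ((i * h : ℝ≥0) : ℝ≥0∞) < τ ω :=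
  not_le.1 (notMem_of_lt_hittingBtwn hi (Nat.zero_le i))

lemma stoppingTime_le_of_gridHitting_lt {ω : Ω} (hn : gridHitting τ h n ω < n) :
    τ ω ≤ ((gridHitting τ h n ω * h : ℝ≥0) : ℝ≥0∞) :=
  hittingBtwn_mem_set_of_hittingBtwn_lt hn

lemma le_gridHitting_mul {ω : Ω} {s : ℝ} (hs : s ≤ n * h) (hsτ : ENNReal.ofReal s < τ ω) :
    s ≤ gridHitting τ h n ω * h := by
  rcases (gridHitting_le (τ := τ) (h := h) ω).lt_or_eq with hlt | heq
  · have := hsτ.trans_le (stoppingTime_le_of_gridHitting_lt hlt)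
    rw [← ENNReal.ofReal_coe_nnreal, ENNReal.ofReal_lt_ofReal_iff'] at this
    exact_mod_cast this.1.le
  · rwa [heq]

lemma lt_stoppingTime_of_add_lt_gridHitting_mul {ω : Ω} {u : ℝ} (hu : 0 ≤ u)
    (hlt : u + h < gridHitting τ h n ω * h) : ENNReal.ofReal u < τ ω := by
  obtain ⟨k, hk⟩ := Nat.exists_eq_add_one_of_ne_zero (n := gridHitting τ h n ω) (by
    rintro h0; rw [h0, Nat.cast_zero, zero_mul] at hlt; linarith [h.2])
  refine lt_of_le_of_lt ?_
    (lt_stoppingTime_of_lt_gridHitting (show k < gridHitting τ h n ω by omega))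
  rw [← ENNReal.ofReal_coe_nnreal]
  refine ENNReal.ofReal_le_ofReal ?_
  rw [hk] at hlt
  push_cast at hlt ⊢
  linarith

lemma isStoppingTime_gridHitting {𝓕 : Filtration ℝ≥0 m0} (hτ : IsStoppingTime 𝓕 τ) :
    IsStoppingTime (𝓕.reindex (Nat.mono_cast.mul_const' h)) fun ω => (gridHitting τ h n ω : ℕ∞) :=
  Adapted.isStoppingTime_hittingBtwn
    (fun _ => measurable_to_prop (by rw [preimage_singleton_true]; exact hτ _)) trivial

variable {μ : Measure Ω} {𝓕 : Filtration ℝ≥0 m0} {M : ℝ≥0 → Ω → ℝ}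

lemma MeasureTheory.Supermartingale.integrable_gridHitting (hM : Supermartingale M 𝓕 μ)
    (hτ : IsStoppingTime 𝓕 τ) (h : ℝ≥0) (n : ℕ) :
    Integrable (fun ω => M (gridHitting τ h n ω * h) ω) μ := by
  have := integrable_stoppedValue ℕ (u := fun i : ℕ => M (i * h))
    (isStoppingTime_gridHitting (h := h) hτ) (fun _ => hM.integrable _) (N := n)
    fun ω => Nat.cast_le.2 (gridHitting_le ω)
  unfold stoppedValue at this
  simpa using this

lemma MeasureTheory.Supermartingale.integral_gridHitting_le [IsFiniteMeasure μ]
    (hM : Supermartingale M 𝓕 μ) (hτ : IsStoppingTime 𝓕 τ) (h : ℝ≥0) (n : ℕ) :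
    ∫ ω, M (gridHitting τ h n ω * h) ω ∂μ ≤ ∫ ω, M 0 ω ∂μ := by
  have := (hM.reindex (Nat.mono_cast.mul_const' h)).neg.expected_stoppedValue_mono
    (isStoppingTime_const _ 0) (isStoppingTime_gridHitting (n := n) hτ)
    (fun _ => bot_le) fun ω => Nat.cast_le.2 (gridHitting_le ω)
  simpa [stoppedValue, integral_neg] using this

end GridHitting

section DriftBound

variable {Ω : Type*} {m0 : MeasurableSpace Ω} {μ : Measure Ω} {𝓕 : Filtration ℝ≥0 m0}
  {τ : Ω → ℝ≥0∞} {M Z : ℝ≥0 → Ω → ℝ} {r c : ℝ → Ω → ℝ} {b δ : ℝ}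

theorem lintegral_setLIntegral_Icc_lt_stoppingTime_le_add [IsProbabilityMeasure μ]
    (hM : Supermartingale M 𝓕 μ)
    (hM_def : ∀ t ω, M t ω = Z t ω - Z 0 ω + (∫ u in (0 : ℝ)..t, r u ω)
      - b * ∫ u in (0 : ℝ)..t, c u ω)
    (hZ_one : ∀ t ω, 1 ≤ Z t ω) (hZ0 : Integrable (Z 0) μ)
    (hr_nonneg : ∀ s ω, 0 ≤ r s ω)
    (hr_int : ∀ ω T, 0 ≤ T → IntervalIntegrable (r · ω) volume 0 T)
    (hc_le : ∀ s ω, c s ω ≤ 1) (hc_zero : ∀ s ω, δ < s → ENNReal.ofReal s < τ ω → c s ω = 0)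
    (hτ : IsStoppingTime 𝓕 τ) (hb : 0 ≤ b) (hδ : 0 ≤ δ) (h : ℝ≥0) (n : ℕ) :
    ∫⁻ ω, (∫⁻ s in {s : ℝ | 0 ≤ s ∧ s ≤ n * h ∧ ENNReal.ofReal s < τ ω},
        ENNReal.ofReal (r s ω)) ∂μ
      ≤ ENNReal.ofReal (∫ ω, Z 0 ω ∂μ - 1 + b * (δ + h)) := by
  set σ := gridHitting τ h n
  set G : Ω → ℝ := fun ω => M (σ ω * h) ω + Z 0 ω + (b * (δ + h) - 1)
  have h_path : ∀ ω, 0 ≤ G ω ∧ ∫⁻ s in {s : ℝ | 0 ≤ s ∧ s ≤ n * h ∧ ENNReal.ofReal s < τ ω},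
      ENNReal.ofReal (r s ω) ≤ ENNReal.ofReal (G ω) := fun ω => by
    set a : ℝ≥0 := σ ω * h
    have h_cost : ∫⁻ s in {s : ℝ | 0 ≤ s ∧ s ≤ n * h ∧ ENNReal.ofReal s < τ ω},
        ENNReal.ofReal (r s ω) ≤ ENNReal.ofReal (∫ u in (0 : ℝ)..a, r u ω) :=
      setLIntegral_ofReal_le_intervalIntegral
        (fun s hs => ⟨hs.1, by exact_mod_cast le_gridHitting_mul hs.2.1 hs.2.2⟩)
        (hr_nonneg · ω) (hr_int ω a a.2) a.2
    have h_occ : ∫ u in (0 : ℝ)..a, c u ω ≤ δ + h :=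
      intervalIntegral_le_of_le_one_of_nonpos_on_Ioo hδ h.2 a.2 (hc_le · ω) fun u hu =>
        (hc_zero u ω hu.1 (lt_stoppingTime_of_add_lt_gridHitting_mul (hδ.trans hu.1.le)
          (by push_cast [a] at hu; linarith [hu.2]))).le
    have h_int_le : ∫ u in (0 : ℝ)..a, r u ω ≤ G ω := by
      have := hM_def a ω
      have := hZ_one a ω
      have := mul_le_mul_of_nonneg_left h_occ hb
      simp only [G]
      linarith
    have h_int_nonneg : 0 ≤ ∫ u in (0 : ℝ)..a, r u ω :=
      intervalIntegral.integral_nonneg a.2 fun u _ => hr_nonneg u ω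
    exact ⟨h_int_nonneg.trans h_int_le, h_cost.trans (ENNReal.ofReal_le_ofReal h_int_le)⟩
  have hM0 : ∫ ω, M 0 ω ∂μ = 0 := by simp [hM_def]
  have hMσ := hM.integrable_gridHitting hτ h n
  calc _ ≤ ∫⁻ ω, ENNReal.ofReal (G ω) ∂μ := lintegral_mono fun ω => (h_path ω).2
    _ = ENNReal.ofReal (∫ ω, G ω ∂μ) :=
      (ofReal_integral_eq_lintegral_ofReal ((hMσ.add hZ0).add (integrable_const _))
        (Eventually.of_forall fun ω => (h_path ω).1)).symm
    _ ≤ ENNReal.ofReal (∫ ω, Z 0 ω ∂μ - 1 + b * (δ + h)) := by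
      refine ENNReal.ofReal_le_ofReal ?_
      simp only [G]
      rw [integral_add (by exact hMσ.add hZ0) (integrable_const _), integral_add hMσ hZ0]
      have := hM.integral_gridHitting_le hτ h n
      simp only [integral_const, probReal_univ, one_smul]
      linarith

theorem lintegral_setLIntegral_lt_stoppingTime_le_add [IsProbabilityMeasure μ]
    (hM : Supermartingale M 𝓕 μ)
    (hM_def : ∀ t ω, M t ω = Z t ω - Z 0 ω + (∫ u in (0 : ℝ)..t, r u ω)
      - b * ∫ u in (0 : ℝ)..t, c u ω)
    (hZ_one : ∀ t ω, 1 ≤ Z t ω) (hZ0 : Integrable (Z 0) μ)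
    (hr_nonneg : ∀ s ω, 0 ≤ r s ω) (hr_meas : Measurable fun p : ℝ × Ω => r (max p.1 0) p.2)
    (hr_bdd : ∀ ω T, BddAbove ((r · ω) '' Icc 0 T))
    (hc_le : ∀ s ω, c s ω ≤ 1) (hc_zero : ∀ s ω, δ < s → ENNReal.ofReal s < τ ω → c s ω = 0)
    (hτ : IsStoppingTime 𝓕 τ) (hb : 0 ≤ b) (hδ : 0 ≤ δ) {h : ℝ≥0} (hh : 0 < h) :
    ∫⁻ ω, (∫⁻ s in {s : ℝ | 0 ≤ s ∧ ENNReal.ofReal s < τ ω}, ENNReal.ofReal (r s ω)) ∂μ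
      ≤ ENNReal.ofReal (∫ ω, Z 0 ω ∂μ - 1 + b * (δ + h)) := by
  have hr_int : ∀ ω T, 0 ≤ T → IntervalIntegrable (r · ω) volume 0 T := fun ω T hT =>
    intervalIntegrable_of_measurable_max_of_bddAbove
      (hr_meas.comp (measurable_id.prodMk measurable_const)) (hr_nonneg · ω) (hr_bdd ω T) hT
  set S : ℕ → Ω → Set ℝ := fun n ω => {s | 0 ≤ s ∧ s ≤ n * h ∧ ENNReal.ofReal s < τ ω}
  have hS_mono : ∀ ω, Monotone (S · ω) := fun ω _ _ hnm s hs =>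
    ⟨hs.1, hs.2.1.trans (by gcongr), hs.2.2⟩
  have hS_iUnion : ∀ ω, {s : ℝ | 0 ≤ s ∧ ENNReal.ofReal s < τ ω} = ⋃ n, S n ω := fun ω => by
    ext s
    simp only [mem_ofPred_eq, mem_iUnion, S]
    refine ⟨fun hs => ?_, fun ⟨_, hs⟩ => ⟨hs.1, hs.2.2⟩⟩
    obtain ⟨n, hn⟩ := exists_nat_ge (s / h)
    exact ⟨n, hs.1, (div_le_iff₀ (by exact_mod_cast hh)).1 hn, hs.2⟩
  have hS_meas : ∀ n, Measurable fun ω => ∫⁻ s in S n ω, ENNReal.ofReal (r s ω) := fun n => by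
    have hD : MeasurableSet {p : Ω × ℝ | 0 ≤ p.2 ∧ p.2 ≤ n * h ∧ ENNReal.ofReal p.2 < τ p.1} :=
      (measurableSet_le measurable_const measurable_snd).inter
        ((measurableSet_le measurable_snd measurable_const).inter
          (measurableSet_lt (ENNReal.measurable_ofReal.comp measurable_snd)
            (hτ.measurable'.comp measurable_fst)))
    convert (ENNReal.measurable_ofReal.comp (hr_meas.comp measurable_swap)).setLIntegral_prod_right
      (ν := volume) hD using 1
    exact funext fun ω => setLIntegral_congr_fun (measurable_prodMk_left hD) fun s hs => by
      simp [max_eq_left hs.1]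
  calc _ = ∫⁻ ω, ⨆ n, (∫⁻ s in S n ω, ENNReal.ofReal (r s ω)) ∂μ := by
        simp_rw [hS_iUnion, setLIntegral_iUnion_of_directed _ (hS_mono _).directed_le]
    _ = ⨆ n, ∫⁻ ω, (∫⁻ s in S n ω, ENNReal.ofReal (r s ω)) ∂μ :=
        lintegral_iSup hS_meas fun _ _ hnm ω => lintegral_mono_set (hS_mono ω hnm)
    _ ≤ _ := iSup_le fun n => lintegral_setLIntegral_Icc_lt_stoppingTime_le_add hM hM_def hZ_one hZ0
        hr_nonneg hr_int hc_le hc_zero hτ hb hδ h n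

theorem lintegral_setLIntegral_lt_stoppingTime_le [IsProbabilityMeasure μ]
    (hM : Supermartingale M 𝓕 μ)
    (hM_def : ∀ t ω, M t ω = Z t ω - Z 0 ω + (∫ u in (0 : ℝ)..t, r u ω)
      - b * ∫ u in (0 : ℝ)..t, c u ω)
    (hZ_one : ∀ t ω, 1 ≤ Z t ω) (hZ0 : Integrable (Z 0) μ)
    (hr_nonneg : ∀ s ω, 0 ≤ r s ω) (hr_meas : Measurable fun p : ℝ × Ω => r (max p.1 0) p.2)
    (hr_bdd : ∀ ω T, BddAbove ((r · ω) '' Icc 0 T))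
    (hc_le : ∀ s ω, c s ω ≤ 1) (hc_zero : ∀ s ω, δ < s → ENNReal.ofReal s < τ ω → c s ω = 0)
    (hτ : IsStoppingTime 𝓕 τ) (hb : 0 ≤ b) (hδ : 0 ≤ δ) :
    ∫⁻ ω, (∫⁻ s in {s : ℝ | 0 ≤ s ∧ ENNReal.ofReal s < τ ω}, ENNReal.ofReal (r s ω)) ∂μ
      ≤ ENNReal.ofReal (∫ ω, Z 0 ω ∂μ - 1 + b * δ) := by
  have h_lim : Tendsto (fun k : ℕ => ∫ ω, Z 0 ω ∂μ - 1 + b * (δ + 1 / (k + 1))) atTop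
      (𝓝 (∫ ω, Z 0 ω ∂μ - 1 + b * δ)) := by
    simpa using tendsto_const_nhds.add (tendsto_const_nhds.mul
      (tendsto_const_nhds.add (tendsto_one_div_add_atTop_nhds_zero_nat (𝕜 := ℝ))))
  refine ge_of_tendsto (ENNReal.tendsto_ofReal h_lim) (Eventually.of_forall fun k => ?_)
  simpa using lintegral_setLIntegral_lt_stoppingTime_le_add hM hM_def hZ_one hZ0 hr_nonneg
    hr_meas hr_bdd hc_le hc_zero hτ hb hδ (h := (k + 1 : ℝ≥0)⁻¹) (by positivity)

lemma ae_lt_top_of_lintegral_setLIntegral_ne_top (hτ : Measurable τ) {f : ℝ → Ω → ℝ} {ε : ℝ}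
    (hε : 0 < ε) (hf : ∀ s ω, ε ≤ f s ω)
    (h_fin : ∫⁻ ω, (∫⁻ s in {s : ℝ | 0 ≤ s ∧ ENNReal.ofReal s < τ ω}, ENNReal.ofReal (f s ω)) ∂μ
      ≠ ⊤) :
    ∀ᵐ ω ∂μ, τ ω < ⊤ := by
  have h_top : ∀ ω, τ ω = ⊤ →
      ∫⁻ s in {s : ℝ | 0 ≤ s ∧ ENNReal.ofReal s < τ ω}, ENNReal.ofReal (f s ω) = ⊤ := by
    intro ω hω
    have h_set : {s : ℝ | 0 ≤ s ∧ ENNReal.ofReal s < τ ω} = Ici 0 := by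
      ext s; simp [hω]
    rw [h_set]
    refine top_le_iff.1 ?_
    calc ⊤ = ∫⁻ _ in Ici (0 : ℝ), ENNReal.ofReal ε := by
          simp [Real.volume_Ici, ENNReal.mul_top, hε]
      _ ≤ _ := lintegral_mono fun s => ENNReal.ofReal_le_ofReal (hf s ω)
  have h_null : μ {ω | τ ω = ⊤} = 0 := by
    by_contra h0
    refine h_fin (top_le_iff.1 ?_)
    calc ⊤ = ∫⁻ ω, {ω | τ ω = ⊤}.indicator (fun _ => ⊤) ω ∂μ := by
          rw [lintegral_indicator_const (show MeasurableSet {ω | τ ω = ⊤} from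
            hτ (measurableSet_singleton ⊤)), ENNReal.top_mul h0]
      _ ≤ _ := lintegral_mono fun ω => indicator_le (fun ω hω => (h_top ω hω).ge) ω
  filter_upwards [measure_eq_zero_iff_ae_notMem.1 h_null] with ω hω using lt_top_iff_ne_top.2 hω

end DriftBound

theorem drift_condition_modulated_moment_general
    {Ω E : Type*} [MeasurableSpace Ω] [MeasurableSpace E]
    (μ : Measure Ω) [IsProbabilityMeasure μ]
    (ℱ : ℝ → MeasurableSpace Ω)
    (hℱ_mono : ∀ s t : ℝ, s ≤ t → ℱ s ≤ ℱ t)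
    (hℱ_le : ∀ t : ℝ, ℱ t ≤ ‹MeasurableSpace Ω›)
    (X : ℝ → Ω → E)
    (hX_adapted : ∀ t : ℝ, 0 ≤ t → Measurable[ℱ t] (X t))
    (x : E) (hX0 : ∀ᵐ ω ∂μ, X 0 ω = x)
    (C : Set E)
    (V : E → ℝ) (hV_meas : Measurable V) (hV_one : ∀ y : E, 1 ≤ V y)
    (hVX_rc : ∀ ω : Ω, ∀ t : ℝ, 0 ≤ t →
      Tendsto (fun s => V (X s ω)) (nhdsWithin t (Set.Ici t)) (nhds (V (X t ω))))
    (hVX_ll : ∀ ω : Ω, ∀ t : ℝ, 0 < t →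
      ∃ l : ℝ, Tendsto (fun s => V (X s ω)) (nhdsWithin t (Set.Iio t)) (nhds l))
    (φ : ℝ → ℝ)
    (hφ_pos : ∀ u : ℝ, 1 ≤ u → 0 < φ u)
    (hφ_mono : MonotoneOn φ (Set.Ici 1))
    (b : ℝ) (hb : 0 ≤ b)
    (Mdrift : ℝ → Ω → ℝ)
    (hM_def : ∀ t : ℝ, ∀ ω : Ω, Mdrift t ω =
      V (X t ω) - V (X 0 ω) + (∫ u in (0:ℝ)..t, φ (V (X u ω)))
        - b * ∫ u in (0:ℝ)..t, C.indicator (fun _ => (1:ℝ)) (X u ω))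
    (hV_int : ∀ t : ℝ, 0 ≤ t → Integrable (fun ω => V (X t ω)) μ)
    (hM_int : ∀ t : ℝ, 0 ≤ t → Integrable (Mdrift t) μ)
    (hM_adapted : ∀ t : ℝ, 0 ≤ t → Measurable[ℱ t] (Mdrift t))
    (hM_super : ∀ s t : ℝ, 0 ≤ s → s ≤ t → μ[Mdrift t|ℱ s] ≤ᵐ[μ] Mdrift s)
    (δ : ℝ) (hδ : 0 < δ)
    (τ : Ω → ℝ≥0∞)
    (hτ_def : ∀ ω : Ω, τ ω = sInf (ENNReal.ofReal '' {t : ℝ | δ ≤ t ∧ X t ω ∈ C}))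
    (hτ_stop : ∀ t : ℝ, 0 ≤ t → MeasurableSet[ℱ t] {ω : Ω | τ ω ≤ ENNReal.ofReal t}) :
    (∫⁻ ω, (∫⁻ s in {s : ℝ | 0 ≤ s ∧ ENNReal.ofReal s < τ ω},
        ENNReal.ofReal (φ (V (X s ω)))) ∂μ)
      ≤ ENNReal.ofReal (V x - 1 + b * δ) ∧
    ∀ᵐ ω ∂μ, τ ω < ⊤ := by
  let 𝓕 : Filtration ℝ≥0 ‹MeasurableSpace Ω› :=
    ⟨fun t => ℱ t, fun s t hst => hℱ_mono s t hst, fun t => hℱ_le t⟩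
  have hM : Supermartingale (fun t : ℝ≥0 => Mdrift t) 𝓕 μ :=
    ⟨fun t => (hM_adapted t t.2).stronglyMeasurable, fun s t hst => hM_super s t s.2 hst,
      fun t => hM_int t t.2⟩
  have hτ : IsStoppingTime 𝓕 τ := fun t => by
    show MeasurableSet[ℱ t] {ω | τ ω ≤ (t : ℝ≥0∞)}
    rw [← ENNReal.ofReal_coe_nnreal]
    exact hτ_stop t t.2
  have hr_meas : Measurable fun p : ℝ × Ω => φ (V (X (max p.1 0) p.2)) :=
    hφ_mono.measurable_comp (measurable_uncurry_max_of_continuousWithinAt_Ici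
      (fun t ht => hV_meas.comp ((hX_adapted t ht).mono (hℱ_le t) le_rfl)) hVX_rc) fun _ => hV_one _
  have hr_bdd : ∀ ω T, BddAbove ((fun s => φ (V (X s ω))) '' Icc 0 T) := fun ω T =>
    hφ_mono.bddAbove_image_comp (fun _ => hV_one _)
      (bddAbove_image_Icc_of_rightCts_of_leftLim (hVX_rc ω) (hVX_ll ω) T)
  have hc_zero : ∀ s ω, δ < s → ENNReal.ofReal s < τ ω →
      C.indicator (fun _ => (1 : ℝ)) (X s ω) = 0 := fun s ω hδs hsτ =>
    indicator_of_notMem (fun hC => hsτ.not_ge (hτ_def ω ▸ sInf_le ⟨s, ⟨hδs.le, hC⟩, rfl⟩)) _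
  have h_bound := lintegral_setLIntegral_lt_stoppingTime_le (M := fun t => Mdrift t)
    (Z := fun t ω => V (X t ω)) hM (fun t ω => by simpa using hM_def t ω) (fun _ _ => hV_one _)
    (by simpa using hV_int 0 le_rfl) (fun _ _ => (hφ_pos _ (hV_one _)).le) hr_meas hr_bdd
    (fun s ω => by by_cases hC : X s ω ∈ C <;> simp [hC]) hc_zero hτ hb hδ.le
  have hV0 : ∫ ω, V (X 0 ω) ∂μ = V x := by
    rw [integral_congr_ae (hX0.mono fun ω hω => congrArg V hω)]
    simp
  simp only [NNReal.coe_zero, hV0] at h_bound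
  exact ⟨h_bound, ae_lt_top_of_lintegral_setLIntegral_ne_top hτ.measurable' (hφ_pos 1 le_rfl)
    (fun _ _ => hφ_mono (le_refl (1 : ℝ)) (hV_one _) (hV_one _))
    (ne_top_of_le_ne_top ENNReal.ofReal_ne_top h_bound)⟩

/-- Under the drift condition `D(C,V,φ,b)` (the supermartingale property of
`t ↦ V(X_t) - V(X_0) + ∫₀^t φ(V(X_u)) du - b ∫₀^t 1_C(X_u) du`), for every `δ > 0`,
`E[∫₀^{τ_C(δ)} φ(V(X_s)) ds] ≤ V(x) - 1 + bδ`, and in particular the delayed hitting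
time `τ_C(δ)` is almost surely finite. -/
theorem drift_condition_modulated_moment
    {Ω E : Type*} [MeasurableSpace Ω] [MeasurableSpace E]
    (μ : Measure Ω) [IsProbabilityMeasure μ]
    (ℱ : ℝ → MeasurableSpace Ω)
    (hℱ_mono : ∀ s t : ℝ, s ≤ t → ℱ s ≤ ℱ t)
    (hℱ_le : ∀ t : ℝ, ℱ t ≤ ‹MeasurableSpace Ω›)
    (X : ℝ → Ω → E)
    (hX_adapted : ∀ t : ℝ, 0 ≤ t → Measurable[ℱ t] (X t))
    (x : E) (hX0 : ∀ᵐ ω ∂μ, X 0 ω = x)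
    (C : Set E) (hC : MeasurableSet C)
    (V : E → ℝ) (hV_meas : Measurable V) (hV_one : ∀ y : E, 1 ≤ V y)
    (hVX_rc : ∀ ω : Ω, ∀ t : ℝ, 0 ≤ t →
      Tendsto (fun s => V (X s ω)) (nhdsWithin t (Set.Ici t)) (nhds (V (X t ω))))
    (hVX_ll : ∀ ω : Ω, ∀ t : ℝ, 0 < t →
      ∃ l : ℝ, Tendsto (fun s => V (X s ω)) (nhdsWithin t (Set.Iio t)) (nhds l))
    (φ φ' : ℝ → ℝ)
    (hφ_pos : ∀ u : ℝ, 1 ≤ u → 0 < φ u)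
    (hφ_mono : MonotoneOn φ (Set.Ici 1))
    (hφ_conc : ConcaveOn ℝ (Set.Ici 1) φ)
    (hφ_deriv : ∀ u ∈ Set.Ici (1:ℝ), HasDerivWithinAt φ (φ' u) (Set.Ici 1) u)
    (b : ℝ) (hb : 0 ≤ b)
    (Mdrift : ℝ → Ω → ℝ)
    (hM_def : ∀ t : ℝ, ∀ ω : Ω, Mdrift t ω =
      V (X t ω) - V (X 0 ω) + (∫ u in (0:ℝ)..t, φ (V (X u ω)))
        - b * ∫ u in (0:ℝ)..t, C.indicator (fun _ => (1:ℝ)) (X u ω))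
    (hV_int : ∀ t : ℝ, 0 ≤ t → Integrable (fun ω => V (X t ω)) μ)
    (hM_int : ∀ t : ℝ, 0 ≤ t → Integrable (Mdrift t) μ)
    (hM_adapted : ∀ t : ℝ, 0 ≤ t → Measurable[ℱ t] (Mdrift t))
    (hM_super : ∀ s t : ℝ, 0 ≤ s → s ≤ t → μ[Mdrift t|ℱ s] ≤ᵐ[μ] Mdrift s)
    (δ : ℝ) (hδ : 0 < δ)
    (τ : Ω → ℝ≥0∞)
    (hτ_def : ∀ ω : Ω, τ ω = sInf (ENNReal.ofReal '' {t : ℝ | δ ≤ t ∧ X t ω ∈ C}))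
    (hτ_stop : ∀ t : ℝ, 0 ≤ t → MeasurableSet[ℱ t] {ω : Ω | τ ω ≤ ENNReal.ofReal t}) :
    (∫⁻ ω, (∫⁻ s in {s : ℝ | 0 ≤ s ∧ ENNReal.ofReal s < τ ω},
        ENNReal.ofReal (φ (V (X s ω)))) ∂μ)
      ≤ ENNReal.ofReal (V x - 1 + b * δ) ∧
    ∀ᵐ ω ∂μ, τ ω < ⊤ :=
  drift_condition_modulated_moment_general μ ℱ hℱ_mono hℱ_le X hX_adapted x hX0 C V hV_meas hV_one
    hVX_rc hVX_ll φ hφ_pos hφ_mono b hb Mdrift hM_def hV_int hM_int hM_adapted hM_super δ hδ τ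
    hτ_def hτ_stop
end

section
/- Assume the drift condition D(C,V,φ,b). Let m > 0, let B ⊆ E be measurable, let T := inf{ k ≥ 1 : X_{mk} ∈ B } (a stopping time for the discrete filtration (ℱ_{mk})_{k∈ℕ}), and let N ∈ ℕ. Then E[ Σ_{k=1}^{T∧N} φ(V(X_{mk})) ] ≤ m^{-1} · E[ ∫₀^{m(T∧N)} φ(V(X_s)) ds ] + b·φ'(1)·m·E[T∧N]. -/
/-!
On the event `{k < T ∧ N}`, which is `ℱ_{mk}`-measurable, compare `φ(V(X_{m(k+1)}))` with
`φ(V(X_s))` for `s ∈ [mk, m(k+1)]`: by concavity the difference is at most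
`φ'(V(X_s)) (V(X_{m(k+1)}) - V(X_s))`, the weight `φ'(V(X_s)) ∈ [0, φ'(1)]` is `ℱ_s`-measurable,
and the drift condition bounds the conditional mean of the increment by `b m`. Averaging over `s`
and summing over `k` gives the inequality. Fubini applies because the paths are right-continuous
and `E[V(X_s)] ≤ E[V(X_0)] + b s`.
-/

open MeasureTheory Filter Set Topology
open scoped ENNReal

section ConcaveTangent

variable {φ φ' : ℝ → ℝ} {S : Set ℝ}

theorem ConcaveOn.le_add_mul_sub_of_hasDerivWithinAt (hφ : ConcaveOn ℝ S φ)
    (hd : ∀ u ∈ S, HasDerivWithinAt φ (φ' u) S u) {u v : ℝ} (hu : u ∈ S) (hv : v ∈ S) :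
    φ v ≤ φ u + φ' u * (v - u) := by
  rcases lt_trichotomy u v with h | rfl | h
  · have hs := hφ.slope_le_of_hasDerivWithinAt hu hv h (hd u hu)
    rw [slope_def_field, div_le_iff₀ (sub_pos.2 h)] at hs
    linarith
  · simp
  · have hs := hφ.le_slope_of_hasDerivWithinAt hv hu h (hd u hu)
    rw [slope_def_field, le_div_iff₀ (sub_pos.2 h)] at hs
    linarith

theorem ConcaveOn.antitoneOn_of_hasDerivWithinAt_s9 (hφ : ConcaveOn ℝ S φ)
    (hd : ∀ u ∈ S, HasDerivWithinAt φ (φ' u) S u) : AntitoneOn φ' S := by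
  intro u hu v hv huv
  rcases huv.eq_or_lt with rfl | h
  · rfl
  · exact (hφ.le_slope_of_hasDerivWithinAt hu hv h (hd v hv)).trans
      (hφ.slope_le_of_hasDerivWithinAt hu hv h (hd u hu))

theorem ConcaveOn.mem_Icc_of_hasDerivWithinAt_Ici {a : ℝ} (hφ : ConcaveOn ℝ (Ici a) φ)
    (hmono : MonotoneOn φ (Ici a)) (hd : ∀ u ∈ Ici a, HasDerivWithinAt φ (φ' u) (Ici a) u)
    {u : ℝ} (hu : u ∈ Ici a) : φ' u ∈ Icc 0 (φ' a) := by
  have hu' : u + 1 ∈ Ici a := mem_Ici.2 (by linarith [mem_Ici.1 hu])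
  exact ⟨(hmono.slope_nonneg hu hu').trans
    (hφ.slope_le_of_hasDerivWithinAt hu hu' (by linarith) (hd u hu)),
    hφ.antitoneOn_of_hasDerivWithinAt_s9 hd self_mem_Ici hu hu⟩

end ConcaveTangent

theorem measurable_comp_of_continuousOn_Ici {α : Type*} {mα : MeasurableSpace α} {φ : ℝ → ℝ} {a : ℝ}
    (hφ : ContinuousOn φ (Ici a)) {f : α → ℝ} (hf : Measurable f) (hfa : ∀ x, a ≤ f x) :
    Measurable fun x => φ (f x) := by
  have hcont : Continuous fun u => φ (max u a) :=
    hφ.comp_continuous (continuous_id.max continuous_const) fun u => le_max_right u a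
  simpa only [Function.comp_def, max_eq_left (hfa _)] using hcont.measurable.comp hf

theorem measurable_comp_of_antitoneOn_Ici {α : Type*} {mα : MeasurableSpace α} {φ : ℝ → ℝ} {a : ℝ}
    (hφ : AntitoneOn φ (Ici a)) {f : α → ℝ} (hf : Measurable f) (hfa : ∀ x, a ≤ f x) :
    Measurable fun x => φ (f x) := by
  have hanti : Antitone fun u => φ (max u a) := fun u v huv =>
    hφ (le_max_right u a) (le_max_right v a) (max_le_max huv le_rfl)
  simpa only [Function.comp_def, max_eq_left (hfa _)] using hanti.measurable.comp hf

theorem intervalIntegral_sub_le_of_mem_Icc {f : ℝ → ℝ} (hf : ∀ u, f u ∈ Icc (0:ℝ) 1)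
    {s t : ℝ} (hs : 0 ≤ s) (hst : s ≤ t) :
    (∫ u in (0:ℝ)..t, f u) - ∫ u in (0:ℝ)..s, f u ≤ t - s := by
  by_cases hi : IntervalIntegrable f volume 0 t
  · have h0s : IntervalIntegrable f volume 0 s :=
      hi.mono_set (uIcc_subset_uIcc_left (mem_uIcc_of_le hs hst))
    have hst' : IntervalIntegrable f volume s t :=
      hi.mono_set (uIcc_subset_uIcc_right (mem_uIcc_of_le hs hst))
    rw [← intervalIntegral.integral_add_adjacent_intervals h0s hst', add_sub_cancel_left]
    simpa using intervalIntegral.integral_mono_on hst hst' intervalIntegrable_const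
      fun u _ => (hf u).2
  · rw [intervalIntegral.integral_undef hi]
    linarith [intervalIntegral.integral_nonneg (μ := volume) hs fun u _ => (hf u).1]

section ConcaveIntegral

variable {α : Type*} {mα : MeasurableSpace α} {μ : Measure α} {φ φ' : ℝ → ℝ}

theorem ConcaveOn.integrable_comp_of_one_le [IsFiniteMeasure μ] (hφ : ConcaveOn ℝ (Ici 1) φ)
    (hd : ∀ u ∈ Ici (1:ℝ), HasDerivWithinAt φ (φ' u) (Ici 1) u) (hφ0 : ∀ u, 1 ≤ u → 0 ≤ φ u)
    {f : α → ℝ} (hf : Measurable f) (hfi : Integrable f μ) (hf1 : ∀ x, 1 ≤ f x) :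
    Integrable (fun x => φ (f x)) μ := by
  have hφf : Measurable fun x => φ (f x) :=
    measurable_comp_of_continuousOn_Ici (fun u hu => (hd u hu).continuousWithinAt) hf hf1
  refine Integrable.mono' ((integrable_const (φ 1)).add
    ((hfi.sub (integrable_const 1)).const_mul (φ' 1))) hφf.aestronglyMeasurable
    (ae_of_all _ fun x => ?_)
  rw [Real.norm_of_nonneg (hφ0 _ (hf1 x))]
  exact hφ.le_add_mul_sub_of_hasDerivWithinAt hd self_mem_Ici (hf1 x)

theorem ConcaveOn.integral_comp_le_of_one_le [IsProbabilityMeasure μ]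
    (hφ : ConcaveOn ℝ (Ici 1) φ)
    (hd : ∀ u ∈ Ici (1:ℝ), HasDerivWithinAt φ (φ' u) (Ici 1) u) (hφ0 : ∀ u, 1 ≤ u → 0 ≤ φ u)
    {f : α → ℝ} (hf : Measurable f) (hfi : Integrable f μ) (hf1 : ∀ x, 1 ≤ f x) :
    ∫ x, φ (f x) ∂μ ≤ φ 1 + φ' 1 * (∫ x, f x ∂μ - 1) := by
  have hlin : Integrable (fun x => φ' 1 * (f x - 1)) μ :=
    (hfi.sub (integrable_const 1)).const_mul (φ' 1)
  calc ∫ x, φ (f x) ∂μ ≤ ∫ x, (φ 1 + φ' 1 * (f x - 1)) ∂μ :=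
        integral_mono (hφ.integrable_comp_of_one_le hd hφ0 hf hfi hf1)
          ((integrable_const _).add hlin)
          fun x => hφ.le_add_mul_sub_of_hasDerivWithinAt hd self_mem_Ici (hf1 x)
    _ = φ 1 + φ' 1 * (∫ x, f x ∂μ - 1) := by
        rw [integral_add (integrable_const _) hlin, integral_const_mul,
          integral_sub hfi (integrable_const 1)]
        simp

theorem ConcaveOn.setIntegral_comp_le_add [IsFiniteMeasure μ] (hφ : ConcaveOn ℝ (Ici 1) φ)
    (hd : ∀ u ∈ Ici (1:ℝ), HasDerivWithinAt φ (φ' u) (Ici 1) u) (hmono : MonotoneOn φ (Ici 1))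
    (hφ0 : ∀ u, 1 ≤ u → 0 ≤ φ u) {f g : α → ℝ} (hf : Measurable f) (hfi : Integrable f μ)
    (hf1 : ∀ x, 1 ≤ f x) (hg : Measurable g) (hgi : Integrable g μ) (hg1 : ∀ x, 1 ≤ g x)
    {A : Set α} (hA : MeasurableSet A) :
    ∫ x in A, φ (g x) ∂μ
      ≤ ∫ x in A, φ (f x) ∂μ + ∫ x, A.indicator (fun x => φ' (f x)) x * (g x - f x) ∂μ := by
  have hφ' : ∀ x, φ' (f x) ∈ Icc 0 (φ' 1) := fun x =>
    hφ.mem_Icc_of_hasDerivWithinAt_Ici hmono hd (hf1 x)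
  have hw : ∀ x, ‖A.indicator (fun x => φ' (f x)) x‖ ≤ φ' 1 := fun x => by
    by_cases hx : x ∈ A
    · simpa [hx, abs_of_nonneg (hφ' x).1] using (hφ' x).2
    · simpa [hx] using (hφ' x).1.trans (hφ' x).2
  have hwZ : Integrable (fun x => A.indicator (fun x => φ' (f x)) x * (g x - f x)) μ :=
    (hgi.sub hfi).bdd_mul ((measurable_comp_of_antitoneOn_Ici
      (hφ.antitoneOn_of_hasDerivWithinAt_s9 hd) hf hf1).indicator hA).aestronglyMeasurable
      (ae_of_all _ hw)
  have hφf := (hφ.integrable_comp_of_one_le hd hφ0 hf hfi hf1).indicator hA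
  calc ∫ x in A, φ (g x) ∂μ = ∫ x, A.indicator (fun x => φ (g x)) x ∂μ :=
        (integral_indicator hA).symm
    _ ≤ ∫ x, (A.indicator (fun x => φ (f x)) x
          + A.indicator (fun x => φ' (f x)) x * (g x - f x)) ∂μ := by
        refine integral_mono ((hφ.integrable_comp_of_one_le hd hφ0 hg hgi hg1).indicator hA)
          (hφf.add hwZ) fun x => ?_
        by_cases hx : x ∈ A
        · simpa [hx] using hφ.le_add_mul_sub_of_hasDerivWithinAt hd (hf1 x) (hg1 x)
        · simp [hx]
    _ = ∫ x in A, φ (f x) ∂μ + ∫ x, A.indicator (fun x => φ' (f x)) x * (g x - f x) ∂μ := by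
        rw [integral_add hφf hwZ, integral_indicator hA]

end ConcaveIntegral

section ConditionalExpectation

variable {Ω : Type*} {m mΩ : MeasurableSpace Ω} {μ : Measure Ω}

theorem condExp_le_of_le_sub_add [IsFiniteMeasure μ] (hm : m ≤ mΩ) {f g Z : Ω → ℝ} {c : ℝ}
    (hf : StronglyMeasurable[m] f) (hfi : Integrable f μ) (hgi : Integrable g μ)
    (hZi : Integrable Z μ) (hgf : μ[g|m] ≤ᵐ[μ] f)
    (hZ : Z ≤ᵐ[μ] fun ω => g ω - f ω + c) :
    μ[Z|m] ≤ᵐ[μ] fun _ => c := by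
  have hgf_int : Integrable (g - f) μ := hgi.sub hfi
  have hcond : μ[g - f + fun _ => c|m] =ᵐ[μ] μ[g|m] - f + fun _ => c := by
    filter_upwards [condExp_add hgf_int (integrable_const c) m, condExp_sub hgi hfi m]
      with ω h₁ h₂
    rw [h₁, Pi.add_apply, h₂, Pi.sub_apply, condExp_of_stronglyMeasurable hm hf hfi,
      condExp_const hm]
    rfl
  filter_upwards [condExp_mono hZi (hgf_int.add (integrable_const c)) hZ, hcond, hgf]
    with ω h₁ h₂ h₃
  rw [h₂] at h₁
  exact h₁.trans (by simpa using h₃)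

theorem integral_mul_le_of_condExp_le [IsFiniteMeasure μ] (hm : m ≤ mΩ) {g Z : Ω → ℝ} {c K : ℝ}
    (hg : StronglyMeasurable[m] g)
    (hg0 : ∀ ω, 0 ≤ g ω) (hgK : ∀ ω, g ω ≤ K) (hZi : Integrable Z μ)
    (hZ : μ[Z|m] ≤ᵐ[μ] fun _ => c) :
    ∫ ω, g ω * Z ω ∂μ ≤ c * ∫ ω, g ω ∂μ := by
  have hgm : AEStronglyMeasurable g μ := (hg.mono hm).aestronglyMeasurable
  have hgb : ∀ᵐ ω ∂μ, ‖g ω‖ ≤ K :=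
    ae_of_all _ fun ω => (Real.norm_of_nonneg (hg0 ω)).trans_le (hgK ω)
  calc ∫ ω, g ω * Z ω ∂μ = ∫ ω, (μ[g * Z|m]) ω ∂μ := (integral_condExp hm).symm
    _ = ∫ ω, g ω * (μ[Z|m]) ω ∂μ :=
      integral_congr_ae (condExp_mul_of_stronglyMeasurable_left hg (hZi.bdd_mul hgm hgb) hZi)
    _ ≤ ∫ ω, g ω * c ∂μ := by
      refine integral_mono_ae (integrable_condExp.bdd_mul hgm hgb)
        (((integrable_const K).mono' hgm hgb).mul_const c) ?_
      filter_upwards [hZ] with ω h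
      exact mul_le_mul_of_nonneg_left h (hg0 ω)
    _ = c * ∫ ω, g ω ∂μ := by rw [integral_mul_const, mul_comm]

end ConditionalExpectation

section Drift

variable {Ω : Type*} {mΩ : MeasurableSpace Ω}

noncomputable def driftProcess (Y c : ℝ → Ω → ℝ) (φ : ℝ → ℝ) (b t : ℝ) (ω : Ω) : ℝ :=
  Y t ω - Y 0 ω + (∫ u in (0:ℝ)..t, φ (Y u ω)) - b * ∫ u in (0:ℝ)..t, c u ω

theorem sub_le_driftProcess_sub {Y c : ℝ → Ω → ℝ} {φ : ℝ → ℝ} {b s t : ℝ} {ω : Ω}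
    (hb : 0 ≤ b) (hc : ∀ u, c u ω ∈ Icc (0:ℝ) 1) (hs : 0 ≤ s) (hst : s ≤ t)
    (hφ : ∫ u in (0:ℝ)..s, φ (Y u ω) ≤ ∫ u in (0:ℝ)..t, φ (Y u ω)) :
    Y t ω - Y s ω ≤ driftProcess Y c φ b t ω - driftProcess Y c φ b s ω + b * (t - s) := by
  have hc' := intervalIntegral_sub_le_of_mem_Icc (f := fun u => c u ω) hc hs hst
  simp only [driftProcess]
  linarith [mul_le_mul_of_nonneg_left hc' hb]

/-- The drift condition `D(C,V,φ,b)` for `Y = V ∘ X` and `c = 1_C ∘ X`, at times `t ≥ 0`. -/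
structure DriftCondition (μ : Measure Ω) (ℱ : ℝ → MeasurableSpace Ω) (Y c : ℝ → Ω → ℝ)
    (φ : ℝ → ℝ) (b : ℝ) : Prop where
  measurable : ∀ t, 0 ≤ t → Measurable[ℱ t] (Y t)
  one_le : ∀ t ω, 1 ≤ Y t ω
  integrable : ∀ t, 0 ≤ t → Integrable (Y t) μ
  mem_Icc : ∀ u ω, c u ω ∈ Icc (0:ℝ) 1
  integrable_drift : ∀ t, 0 ≤ t → Integrable (driftProcess Y c φ b t) μ
  measurable_drift : ∀ t, 0 ≤ t → Measurable[ℱ t] (driftProcess Y c φ b t)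
  condExp_drift_le : ∀ s t, 0 ≤ s → s ≤ t →
    μ[driftProcess Y c φ b t|ℱ s] ≤ᵐ[μ] driftProcess Y c φ b s

end Drift

section ProductIntegrability

variable {Ω : Type*} {mΩ : MeasurableSpace Ω} {μ : Measure Ω}

/-- Clamping time at `0` gives a process on all of `ℝ`, approximated from the right on grids. -/
theorem measurable_uncurry_max_of_continuousWithinAt {Z : ℝ → Ω → ℝ}
    (hZ : ∀ t, 0 ≤ t → Measurable (Z t))
    (hrc : ∀ ω t, 0 ≤ t → ContinuousWithinAt (fun s => Z s ω) (Ici t) t) :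
    Measurable fun p : ℝ × Ω => Z (max p.1 0) p.2 := by
  set r : ℕ → ℝ → ℝ := fun n s => max (⌈s * (n + 1)⌉ / (n + 1)) 0
  have hr_meas : ∀ n, Measurable fun p : ℝ × Ω => Z (r n p.1) p.2 := by
    intro n
    have h : Measurable fun q : Ω × ℤ => Z (max (q.2 / (n + 1)) 0) q.1 :=
      measurable_from_prod_countable_left fun z => hZ (max ((z : ℝ) / (n + 1)) 0) (le_max_right _ _)
    exact h.comp (measurable_snd.prodMk (Int.measurable_ceil.comp (measurable_fst.mul_const _)))
  have hr_lim : ∀ s, Tendsto (fun n => r n s) atTop (𝓝[≥] (max s 0)) := by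
    intro s
    have hge : ∀ n : ℕ, s ≤ ⌈s * (n + 1)⌉ / (n + 1) := fun n => by
      rw [le_div_iff₀ (by positivity)]
      exact Int.le_ceil _
    have hle : ∀ n : ℕ, (⌈s * (n + 1)⌉ : ℝ) / (n + 1) ≤ s + 1 / (n + 1) := fun n => by
      rw [div_le_iff₀ (by positivity), add_mul, one_div_mul_cancel (by positivity)]
      exact (Int.ceil_lt_add_one _).le
    have hlim : Tendsto (fun n : ℕ => (⌈s * (n + 1)⌉ : ℝ) / (n + 1)) atTop (𝓝 s) :=
      tendsto_of_tendsto_of_tendsto_of_le_of_le tendsto_const_nhds (by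
        simpa using (tendsto_const_nhds (x := s)).add tendsto_one_div_add_atTop_nhds_zero_nat)
        hge hle
    exact tendsto_nhdsWithin_iff.2
      ⟨hlim.max tendsto_const_nhds, Eventually.of_forall fun n => max_le_max (hge n) le_rfl⟩
  refine measurable_of_tendsto_metrizable hr_meas (tendsto_pi_nhds.2 fun p => ?_)
  exact (hrc p.2 _ (le_max_right _ _)).tendsto.comp (hr_lim p.1)

theorem aestronglyMeasurable_uncurry_of_continuousWithinAt [SFinite μ] {Z : ℝ → Ω → ℝ}
    (hZ : ∀ t, 0 ≤ t → Measurable (Z t))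
    (hrc : ∀ ω t, 0 ≤ t → ContinuousWithinAt (fun s => Z s ω) (Ici t) t)
    {I : Set ℝ} (hI : MeasurableSet I) (hI0 : I ⊆ Ici 0) :
    AEStronglyMeasurable (fun p : ℝ × Ω => Z p.1 p.2) ((volume.restrict I).prod μ) := by
  refine (measurable_uncurry_max_of_continuousWithinAt hZ hrc).aestronglyMeasurable.congr ?_
  filter_upwards [Measure.quasiMeasurePreserving_fst.ae (ae_restrict_mem hI)] with p hp
  rw [max_eq_left (hI0 hp)]

theorem integrable_prod_of_integral_norm_le [SFinite μ] {Z : ℝ → Ω → ℝ} {I : Set ℝ} {K : ℝ}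
    (hI : volume I ≠ ∞)
    (hZm : AEStronglyMeasurable (fun p : ℝ × Ω => Z p.1 p.2) ((volume.restrict I).prod μ))
    (hZi : ∀ᵐ s ∂volume.restrict I, Integrable (Z s) μ)
    (hK : ∀ᵐ s ∂volume.restrict I, ∫ ω, ‖Z s ω‖ ∂μ ≤ K) :
    Integrable (fun p : ℝ × Ω => Z p.1 p.2) ((volume.restrict I).prod μ) := by
  refine (integrable_prod_iff hZm).2 ⟨hZi, Integrable.mono' (integrableOn_const hI)
    hZm.norm.integral_prod_right' ?_⟩
  filter_upwards [hK] with s hs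
  rwa [Real.norm_of_nonneg (integral_nonneg fun _ => norm_nonneg _)]

theorem mul_setIntegral_le_setIntegral_intervalIntegral_add [SFinite μ] {F : ℝ → Ω → ℝ}
    {A : Set Ω} {a t d : ℝ} (hat : a ≤ t)
    (hF : Integrable (fun p : ℝ × Ω => F p.1 p.2) ((volume.restrict (Ioc a t)).prod μ))
    (hle : ∀ s ∈ Ioc a t, ∫ ω in A, F t ω ∂μ ≤ ∫ ω in A, F s ω ∂μ + d) :
    (t - a) * ∫ ω in A, F t ω ∂μ ≤ ∫ ω in A, (∫ s in a..t, F s ω) ∂μ + (t - a) * d := by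
  have hFA : Integrable (fun p : ℝ × Ω => F p.1 p.2)
      ((volume.restrict (Ioc a t)).prod (μ.restrict A)) :=
    hF.mono_measure (Measure.prod_mono le_rfl Measure.restrict_le_self)
  have hfin : volume (Ioc a t) ≠ ∞ := measure_Ioc_lt_top.ne
  have hvol : volume.real (Ioc a t) = t - a := by simp [hat]
  have hint : IntegrableOn (fun s => ∫ ω in A, F s ω ∂μ) (Ioc a t) := hFA.integral_prod_left
  calc (t - a) * ∫ ω in A, F t ω ∂μ = ∫ _ in Ioc a t, ∫ ω in A, F t ω ∂μ := by
        rw [setIntegral_const, smul_eq_mul, hvol]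
    _ ≤ ∫ s in Ioc a t, (∫ ω in A, F s ω ∂μ + d) :=
        setIntegral_mono_on (integrableOn_const hfin) (hint.add (integrableOn_const hfin))
          measurableSet_Ioc hle
    _ = (∫ s in Ioc a t, ∫ ω in A, F s ω ∂μ) + (t - a) * d := by
        rw [integral_add hint (integrableOn_const hfin), setIntegral_const, smul_eq_mul, hvol]
    _ = ∫ ω in A, (∫ s in a..t, F s ω) ∂μ + (t - a) * d := by
        rw [integral_integral_swap (f := F) hFA]
        simp_rw [intervalIntegral.integral_of_le hat]

theorem integrable_intervalIntegral_of_integrable_prod [SFinite μ] {F : ℝ → Ω → ℝ} {T a t : ℝ}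
    (hF : Integrable (fun p : ℝ × Ω => F p.1 p.2) ((volume.restrict (Ioc 0 T)).prod μ))
    (ha : 0 ≤ a) (hat : a ≤ t) (ht : t ≤ T) :
    Integrable (fun ω => ∫ s in a..t, F s ω) μ := by
  simp_rw [intervalIntegral.integral_of_le hat]
  exact (hF.mono_measure (Measure.prod_mono (Measure.restrict_mono (Ioc_subset_Ioc ha ht) le_rfl)
    le_rfl)).integral_prod_right

end ProductIntegrability

namespace DriftCondition

variable {Ω : Type*} {mΩ : MeasurableSpace Ω} {μ : Measure Ω} {ℱ : ℝ → MeasurableSpace Ω}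
  {Y c : ℝ → Ω → ℝ} {φ φ' : ℝ → ℝ} {b : ℝ}

theorem condExp_sub_le [IsFiniteMeasure μ] (hD : DriftCondition μ ℱ Y c φ b)
    (hℱ : ∀ t, ℱ t ≤ mΩ) (hb : 0 ≤ b) (hφ0 : ∀ u, 1 ≤ u → 0 ≤ φ u) {s t : ℝ} (hs : 0 ≤ s)
    (hst : s ≤ t) (hpath : ∀ᵐ ω ∂μ, IntervalIntegrable (fun u => φ (Y u ω)) volume 0 t) :
    μ[Y t - Y s|ℱ s] ≤ᵐ[μ] fun _ => b * (t - s) := by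
  refine condExp_le_of_le_sub_add (hℱ s) (hD.measurable_drift s hs).stronglyMeasurable
    (hD.integrable_drift s hs) (hD.integrable_drift t (hs.trans hst))
    ((hD.integrable t (hs.trans hst)).sub (hD.integrable s hs)) (hD.condExp_drift_le s t hs hst) ?_
  filter_upwards [hpath] with ω hω
  exact sub_le_driftProcess_sub hb (fun u => hD.mem_Icc u ω) hs hst
    (intervalIntegral.integral_mono_interval le_rfl hs hst
      (ae_of_all _ fun u => hφ0 _ (hD.one_le u ω)) hω)

theorem integral_le_add [IsProbabilityMeasure μ] (hD : DriftCondition μ ℱ Y c φ b)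
    (hℱ : ∀ t, ℱ t ≤ mΩ) (hb : 0 ≤ b) (hφ0 : ∀ u, 1 ≤ u → 0 ≤ φ u) {t : ℝ} (ht : 0 ≤ t) :
    ∫ ω, Y t ω ∂μ ≤ ∫ ω, Y 0 ω ∂μ + b * t := by
  have hM0 : ∀ ω, driftProcess Y c φ b 0 ω = 0 := fun ω => by simp [driftProcess]
  have hMt : ∫ ω, driftProcess Y c φ b t ω ∂μ ≤ 0 :=
    calc ∫ ω, driftProcess Y c φ b t ω ∂μ = ∫ ω, (μ[driftProcess Y c φ b t|ℱ 0]) ω ∂μ :=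
          (integral_condExp (hℱ 0)).symm
      _ ≤ ∫ ω, driftProcess Y c φ b 0 ω ∂μ := integral_mono_ae integrable_condExp
          (hD.integrable_drift 0 le_rfl) (hD.condExp_drift_le 0 t le_rfl ht)
      _ = 0 := by simp [hM0]
  have hpt : ∀ ω, Y t ω - Y 0 ω ≤ driftProcess Y c φ b t ω + b * t := fun ω => by
    have h := sub_le_driftProcess_sub hb (fun u => hD.mem_Icc u ω) le_rfl ht
      (by simpa using intervalIntegral.integral_nonneg ht fun u _ => hφ0 _ (hD.one_le u ω))
    rwa [hM0, sub_zero, sub_zero] at h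
  have hint := integral_mono (f := fun ω => Y t ω - Y 0 ω)
    (g := fun ω => driftProcess Y c φ b t ω + b * t)
    ((hD.integrable t ht).sub (hD.integrable 0 le_rfl))
    ((hD.integrable_drift t ht).add (integrable_const (b * t))) hpt
  rw [integral_sub (hD.integrable t ht) (hD.integrable 0 le_rfl),
    integral_add (hD.integrable_drift t ht) (integrable_const _)] at hint
  simp only [integral_const, probReal_univ, smul_eq_mul, one_mul] at hint
  linarith

theorem integrable_comp [IsFiniteMeasure μ] (hD : DriftCondition μ ℱ Y c φ b)
    (hℱ : ∀ t, ℱ t ≤ mΩ) (hφ_conc : ConcaveOn ℝ (Ici 1) φ)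
    (hφ_deriv : ∀ u ∈ Ici (1:ℝ), HasDerivWithinAt φ (φ' u) (Ici 1) u)
    (hφ0 : ∀ u, 1 ≤ u → 0 ≤ φ u) {t : ℝ} (ht : 0 ≤ t) : Integrable (fun ω => φ (Y t ω)) μ :=
  hφ_conc.integrable_comp_of_one_le hφ_deriv hφ0 ((hD.measurable t ht).mono (hℱ t) le_rfl)
    (hD.integrable t ht) (hD.one_le t)

theorem setIntegral_le_add [IsFiniteMeasure μ] (hD : DriftCondition μ ℱ Y c φ b)
    (hℱ : ∀ t, ℱ t ≤ mΩ) (hb : 0 ≤ b) (hφ_conc : ConcaveOn ℝ (Ici 1) φ)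
    (hφ_deriv : ∀ u ∈ Ici (1:ℝ), HasDerivWithinAt φ (φ' u) (Ici 1) u)
    (hφ_mono : MonotoneOn φ (Ici 1)) (hφ0 : ∀ u, 1 ≤ u → 0 ≤ φ u) {s t : ℝ} (hs : 0 ≤ s)
    (hst : s ≤ t) (hpath : ∀ᵐ ω ∂μ, IntervalIntegrable (fun u => φ (Y u ω)) volume 0 t)
    {A : Set Ω} (hA : MeasurableSet[ℱ s] A) :
    ∫ ω in A, φ (Y t ω) ∂μ ≤ ∫ ω in A, φ (Y s ω) ∂μ + φ' 1 * (b * (t - s)) * μ.real A := by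
  have hA' : MeasurableSet A := hℱ s A hA
  have hφ' : ∀ ω, φ' (Y s ω) ∈ Icc 0 (φ' 1) := fun ω =>
    hφ_conc.mem_Icc_of_hasDerivWithinAt_Ici hφ_mono hφ_deriv (hD.one_le s ω)
  set g : Ω → ℝ := A.indicator fun ω => φ' (Y s ω)
  have hg : StronglyMeasurable[ℱ s] g :=
    (measurable_comp_of_antitoneOn_Ici (hφ_conc.antitoneOn_of_hasDerivWithinAt_s9 hφ_deriv)
      (hD.measurable s hs) (hD.one_le s)).stronglyMeasurable.indicator hA
  have hg_le : ∀ ω, g ω ≤ A.indicator (fun _ => φ' 1) ω :=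
    fun ω => indicator_le_indicator (hφ' ω).2
  have hg_mem : ∀ ω, g ω ∈ Icc 0 (φ' 1) := fun ω =>
    ⟨indicator_nonneg (fun ω _ => (hφ' ω).1) ω, (hg_le ω).trans
      (indicator_le_self' (fun _ _ => (hφ' ω).1.trans (hφ' ω).2) ω)⟩
  have hdrift : ∫ ω, g ω * (Y t ω - Y s ω) ∂μ ≤ b * (t - s) * ∫ ω, g ω ∂μ :=
    integral_mul_le_of_condExp_le (hℱ s) hg (fun ω => (hg_mem ω).1) (fun ω => (hg_mem ω).2)
      ((hD.integrable t (hs.trans hst)).sub (hD.integrable s hs))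
      (hD.condExp_sub_le hℱ hb hφ0 hs hst hpath)
  have hg_int : ∫ ω, g ω ∂μ ≤ φ' 1 * μ.real A := by
    calc ∫ ω, g ω ∂μ ≤ ∫ ω, A.indicator (fun _ => φ' 1) ω ∂μ :=
          integral_mono ((integrable_const (φ' 1)).mono' (hg.mono (hℱ s)).aestronglyMeasurable
            (ae_of_all _ fun ω => (Real.norm_of_nonneg (hg_mem ω).1).trans_le (hg_mem ω).2))
            ((integrable_const _).indicator hA') hg_le
      _ = φ' 1 * μ.real A := by rw [integral_indicator_const _ hA', smul_eq_mul, mul_comm]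
  have htan : ∫ ω in A, φ (Y t ω) ∂μ
      ≤ ∫ ω in A, φ (Y s ω) ∂μ + ∫ ω, g ω * (Y t ω - Y s ω) ∂μ :=
    hφ_conc.setIntegral_comp_le_add hφ_deriv hφ_mono hφ0
      ((hD.measurable s hs).mono (hℱ s) le_rfl) (hD.integrable s hs) (hD.one_le s)
      ((hD.measurable t (hs.trans hst)).mono (hℱ t) le_rfl) (hD.integrable t (hs.trans hst))
      (hD.one_le t) hA'
  have hbts : 0 ≤ b * (t - s) := mul_nonneg hb (sub_nonneg.2 hst)
  linarith [mul_le_mul_of_nonneg_left hg_int hbts]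

theorem integrable_comp_prod [IsProbabilityMeasure μ] (hD : DriftCondition μ ℱ Y c φ b)
    (hℱ : ∀ t, ℱ t ≤ mΩ) (hb : 0 ≤ b) (hφ_conc : ConcaveOn ℝ (Ici 1) φ)
    (hφ_deriv : ∀ u ∈ Ici (1:ℝ), HasDerivWithinAt φ (φ' u) (Ici 1) u)
    (hφ_mono : MonotoneOn φ (Ici 1)) (hφ0 : ∀ u, 1 ≤ u → 0 ≤ φ u)
    (hrc : ∀ ω t, 0 ≤ t → ContinuousWithinAt (fun s => Y s ω) (Ici t) t) {T : ℝ} :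
    Integrable (fun p : ℝ × Ω => φ (Y p.1 p.2)) ((volume.restrict (Ioc 0 T)).prod μ) := by
  have hY : ∀ t, 0 ≤ t → Measurable (Y t) := fun t ht => (hD.measurable t ht).mono (hℱ t) le_rfl
  have hφc : ContinuousOn φ (Ici 1) := fun u hu => (hφ_deriv u hu).continuousWithinAt
  have hφY : ∀ t, 0 ≤ t → Measurable fun ω => φ (Y t ω) := fun t ht =>
    measurable_comp_of_continuousOn_Ici hφc (hY t ht) (hD.one_le t)
  have hrcφ : ∀ ω t, 0 ≤ t → ContinuousWithinAt (fun s => φ (Y s ω)) (Ici t) t :=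
    fun ω t ht => ContinuousWithinAt.comp (f := fun s => Y s ω) (x := t) (hφc _ (hD.one_le t ω))
      (hrc ω t ht) fun s _ => hD.one_le s ω
  refine integrable_prod_of_integral_norm_le (Z := fun s ω => φ (Y s ω))
    (K := φ 1 + φ' 1 * (∫ ω, Y 0 ω ∂μ + b * T - 1)) measure_Ioc_lt_top.ne
    (aestronglyMeasurable_uncurry_of_continuousWithinAt hφY hrcφ measurableSet_Ioc
      fun s hs => hs.1.le) ?_ ?_
  all_goals filter_upwards [ae_restrict_mem measurableSet_Ioc] with s hs
  · exact hD.integrable_comp hℱ hφ_conc hφ_deriv hφ0 hs.1.le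
  · simp_rw [Real.norm_of_nonneg (hφ0 _ (hD.one_le s _))]
    have hφ'0 : 0 ≤ φ' 1 :=
    (hφ_conc.mem_Icc_of_hasDerivWithinAt_Ici hφ_mono hφ_deriv self_mem_Ici).1
    calc ∫ ω, φ (Y s ω) ∂μ ≤ φ 1 + φ' 1 * (∫ ω, Y s ω ∂μ - 1) :=
          hφ_conc.integral_comp_le_of_one_le hφ_deriv hφ0 (hY s hs.1.le)
            (hD.integrable s hs.1.le) (hD.one_le s)
      _ ≤ φ 1 + φ' 1 * (∫ ω, Y 0 ω ∂μ + b * T - 1) := by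
          have := hD.integral_le_add hℱ hb hφ0 hs.1.le
          gcongr
          nlinarith [hs.2]

theorem setIntegral_le_average_add [IsFiniteMeasure μ] (hD : DriftCondition μ ℱ Y c φ b)
    (hℱ : ∀ t, ℱ t ≤ mΩ) (hℱ_mono : Monotone ℱ) (hb : 0 ≤ b) (hφ_conc : ConcaveOn ℝ (Ici 1) φ)
    (hφ_deriv : ∀ u ∈ Ici (1:ℝ), HasDerivWithinAt φ (φ' u) (Ici 1) u)
    (hφ_mono : MonotoneOn φ (Ici 1)) (hφ0 : ∀ u, 1 ≤ u → 0 ≤ φ u) {T a m : ℝ}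
    (hprod : Integrable (fun p : ℝ × Ω => φ (Y p.1 p.2)) ((volume.restrict (Ioc 0 T)).prod μ))
    (ha : 0 ≤ a) (hm : 0 < m) (hT : a + m ≤ T) {A : Set Ω} (hA : MeasurableSet[ℱ a] A) :
    ∫ ω in A, φ (Y (a + m) ω) ∂μ
      ≤ m⁻¹ * ∫ ω in A, (∫ s in a..a + m, φ (Y s ω)) ∂μ + b * φ' 1 * m * μ.real A := by
  have hpath : ∀ᵐ ω ∂μ, IntervalIntegrable (fun u => φ (Y u ω)) volume 0 (a + m) :=
    hprod.prod_left_ae.mono fun ω h =>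
      (intervalIntegrable_iff_integrableOn_Ioc_of_le (by linarith)).2
        (IntegrableOn.mono_set h (Ioc_subset_Ioc_right hT))
  have hprod' := hprod.mono_measure
    (Measure.prod_mono (Measure.restrict_mono (Ioc_subset_Ioc ha hT) le_rfl) (le_refl μ))
  have hφ'0 : 0 ≤ φ' 1 :=
    (hφ_conc.mem_Icc_of_hasDerivWithinAt_Ici hφ_mono hφ_deriv self_mem_Ici).1
  have h := mul_setIntegral_le_setIntegral_intervalIntegral_add
    (F := fun s ω => φ (Y s ω)) (a := a) (t := a + m) (d := φ' 1 * (b * m) * μ.real A)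
    (by linarith) hprod' fun s hs => by
      refine (hD.setIntegral_le_add hℱ hb hφ_conc hφ_deriv hφ_mono hφ0 (ha.trans hs.1.le) hs.2
        hpath (hℱ_mono hs.1.le A hA)).trans ?_
      gcongr
      linarith [hs.1]
  rw [add_sub_cancel_left] at h
  calc ∫ ω in A, φ (Y (a + m) ω) ∂μ = m⁻¹ * (m * ∫ ω in A, φ (Y (a + m) ω) ∂μ) := by
        field_simp
    _ ≤ m⁻¹ * (∫ ω in A, (∫ s in a..a + m, φ (Y s ω)) ∂μ + m * (φ' 1 * (b * m) * μ.real A)) := by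
        gcongr
    _ = m⁻¹ * ∫ ω in A, (∫ s in a..a + m, φ (Y s ω)) ∂μ + b * φ' 1 * m * μ.real A := by
        field_simp

end DriftCondition

section SkeletonSums

variable {Ω : Type*} {mΩ : MeasurableSpace Ω} {μ : Measure Ω}

theorem sInf_union_singleton_eq_hittingBtwn {β : Type*} {u : ℕ → Ω → β} {s : Set β} {n N : ℕ}
    (ω : Ω) : sInf ({k | n ≤ k ∧ u k ω ∈ s} ∪ {N}) = hittingBtwn u s n N ω := by
  classical
  apply le_antisymm
  · apply Nat.sInf_le
    by_cases h : ∃ j ∈ Icc n N, u j ω ∈ s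
    · exact Or.inl ⟨le_hittingBtwn_of_exists h, hittingBtwn_mem_set h⟩
    · exact Or.inr (hittingBtwn_eq_end_iff.2 fun h' => absurd h' h)
  · refine le_csInf ⟨N, Or.inr rfl⟩ ?_
    rintro k (⟨hnk, hk⟩ | rfl)
    · rcases le_or_gt k N with hkN | hNk
      · exact hittingBtwn_le_of_mem hnk hkN hk
      · exact (hittingBtwn_le ω).trans hNk.le
    · exact hittingBtwn_le ω

theorem measurableSet_lt_hittingBtwn_skeleton {E : Type*} [MeasurableSpace E]
    {ℱ : ℝ → MeasurableSpace Ω} (hℱ : ∀ t, ℱ t ≤ mΩ) (hℱ_mono : Monotone ℱ) {X : ℝ → Ω → E}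
    {m : ℝ} (hm : 0 ≤ m) (hX : ∀ k : ℕ, Measurable[ℱ (m * k)] (X (m * k))) {B : Set E}
    (hB : MeasurableSet B) (n N k : ℕ) :
    MeasurableSet[ℱ (m * k)] {ω | k < hittingBtwn (fun j : ℕ => X (m * j)) B n N ω} := by
  let 𝒢 : Filtration ℕ mΩ :=
    ⟨fun k => ℱ (m * k), fun i j hij => hℱ_mono (by gcongr), fun k => hℱ _⟩
  have hτ : IsStoppingTime 𝒢 fun ω => (hittingBtwn (fun j : ℕ => X (m * j)) B n N ω : ℕ) :=
    Adapted.isStoppingTime_hittingBtwn (f := 𝒢) (fun k => hX k) hB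
  simpa using hτ.measurableSet_gt k

theorem integral_sum_range_eq_sum_setIntegral {T : Ω → ℕ} {N : ℕ} (hTN : ∀ ω, T ω ≤ N)
    (hT : ∀ k, MeasurableSet {ω | k < T ω}) {f : ℕ → Ω → ℝ} (hf : ∀ k < N, Integrable (f k) μ) :
    ∫ ω, ∑ k ∈ Finset.range (T ω), f k ω ∂μ
      = ∑ k ∈ Finset.range N, ∫ ω in {ω | k < T ω}, f k ω ∂μ := by
  have hpt : ∀ ω, ∑ k ∈ Finset.range (T ω), f k ω
      = ∑ k ∈ Finset.range N, {ω | k < T ω}.indicator (f k) ω := fun ω => by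
    simp only [indicator_apply, mem_ofPred_eq]
    rw [← Finset.sum_filter]
    congr 1
    ext k
    simp only [Finset.mem_range, Finset.mem_filter]
    have := hTN ω
    omega
  simp_rw [hpt]
  rw [integral_finsetSum _ fun k hk => (hf k (Finset.mem_range.1 hk)).indicator (hT k)]
  simp_rw [integral_indicator (hT _)]

theorem intervalIntegral_zero_mul_eq_sum_range {f : ℝ → ℝ} {m : ℝ} (hm : 0 ≤ m) {n : ℕ}
    (hf : IntervalIntegrable f volume 0 (m * n)) :
    ∫ s in (0:ℝ)..m * n, f s = ∑ k ∈ Finset.range n, ∫ s in m * k..m * k + m, f s := by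
  have hmono : Monotone fun k : ℕ => m * k := fun i j hij =>
    mul_le_mul_of_nonneg_left (Nat.cast_le.2 hij) hm
  have h := intervalIntegral.sum_integral_adjacent_intervals (a := fun k : ℕ => m * k) (n := n)
    (μ := volume) (f := f) fun k hk => hf.mono_set (uIcc_subset_uIcc
      (by simpa using mem_uIcc_of_le (mul_nonneg hm k.cast_nonneg) (hmono hk.le))
      (by simpa using mem_uIcc_of_le (mul_nonneg hm (k + 1 : ℕ).cast_nonneg) (hmono hk)))
  simp only [Nat.cast_zero, mul_zero, Nat.cast_add, Nat.cast_one, mul_add_one] at h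
  exact h.symm

theorem integral_sum_Icc_eq_sum_setIntegral {T : Ω → ℕ} {N : ℕ} (hTN : ∀ ω, T ω ≤ N)
    (hT : ∀ k, MeasurableSet {ω | k < T ω}) {f : ℕ → Ω → ℝ}
    (hf : ∀ k < N, Integrable (f (k + 1)) μ) :
    ∫ ω, ∑ k ∈ Finset.Icc 1 (T ω), f k ω ∂μ
      = ∑ k ∈ Finset.range N, ∫ ω in {ω | k < T ω}, f (k + 1) ω ∂μ := by
  rw [← integral_sum_range_eq_sum_setIntegral hTN hT hf]
  congr 1 with ω
  rw [← Finset.Ico_add_one_right_eq_Icc, Finset.sum_Ico_eq_sum_range, Nat.add_sub_cancel]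
  simp_rw [add_comm 1]

theorem integral_natCast_eq_sum_measureReal [IsFiniteMeasure μ] {T : Ω → ℕ} {N : ℕ}
    (hTN : ∀ ω, T ω ≤ N) (hT : ∀ k, MeasurableSet {ω | k < T ω}) :
    ∫ ω, (T ω : ℝ) ∂μ = ∑ k ∈ Finset.range N, μ.real {ω | k < T ω} := by
  simpa using integral_sum_range_eq_sum_setIntegral hTN hT (f := fun _ _ => (1:ℝ))
    fun _ _ => integrable_const 1

theorem integral_intervalIntegral_eq_sum_setIntegral [SFinite μ] {F : ℝ → Ω → ℝ} {m : ℝ}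
    (hm : 0 ≤ m) {T : Ω → ℕ} {N : ℕ}
    (hF : Integrable (fun p : ℝ × Ω => F p.1 p.2) ((volume.restrict (Ioc 0 (m * N))).prod μ))
    (hTN : ∀ ω, T ω ≤ N) (hT : ∀ k, MeasurableSet {ω | k < T ω}) :
    ∫ ω, (∫ s in (0:ℝ)..m * T ω, F s ω) ∂μ
      = ∑ k ∈ Finset.range N, ∫ ω in {ω | k < T ω}, (∫ s in m * k..m * k + m, F s ω) ∂μ := by
  rw [← integral_sum_range_eq_sum_setIntegral hTN hT fun k hk =>
    integrable_intervalIntegral_of_integrable_prod hF (by positivity) (by linarith) (by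
      rw [← mul_add_one]; gcongr; exact_mod_cast hk)]
  refine integral_congr_ae (hF.prod_left_ae.mono fun ω hω =>
    intervalIntegral_zero_mul_eq_sum_range hm ?_)
  refine ((intervalIntegrable_iff_integrableOn_Ioc_of_le (by positivity)).2 hω).mono_set
    (uIcc_subset_uIcc_left (mem_uIcc_of_le (by positivity) ?_))
  gcongr
  exact_mod_cast hTN ω

end SkeletonSums

theorem drift_condition_skeleton_modulated_moment_general
    {Ω E : Type*} [MeasurableSpace Ω] [MeasurableSpace E]
    (μ : Measure Ω) [IsProbabilityMeasure μ]
    (ℱ : ℝ → MeasurableSpace Ω)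
    (hℱ_mono : ∀ s t : ℝ, s ≤ t → ℱ s ≤ ℱ t)
    (hℱ_le : ∀ t : ℝ, ℱ t ≤ ‹MeasurableSpace Ω›)
    (X : ℝ → Ω → E)
    (hX_adapted : ∀ t : ℝ, 0 ≤ t → Measurable[ℱ t] (X t))
    (C : Set E)
    (V : E → ℝ) (hV_meas : Measurable V) (hV_one : ∀ y : E, 1 ≤ V y)
    (hVX_rc : ∀ ω : Ω, ∀ t : ℝ, 0 ≤ t →
      Tendsto (fun s => V (X s ω)) (nhdsWithin t (Set.Ici t)) (nhds (V (X t ω))))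
    (φ φ' : ℝ → ℝ)
    (hφ_pos : ∀ u : ℝ, 1 ≤ u → 0 < φ u)
    (hφ_mono : MonotoneOn φ (Set.Ici 1))
    (hφ_conc : ConcaveOn ℝ (Set.Ici 1) φ)
    (hφ_deriv : ∀ u ∈ Set.Ici (1:ℝ), HasDerivWithinAt φ (φ' u) (Set.Ici 1) u)
    (b : ℝ) (hb : 0 ≤ b)
    (Mdrift : ℝ → Ω → ℝ)
    (hM_def : ∀ t : ℝ, ∀ ω : Ω, Mdrift t ω =
      V (X t ω) - V (X 0 ω) + (∫ u in (0:ℝ)..t, φ (V (X u ω)))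
        - b * ∫ u in (0:ℝ)..t, C.indicator (fun _ => (1:ℝ)) (X u ω))
    (hV_int : ∀ t : ℝ, 0 ≤ t → Integrable (fun ω => V (X t ω)) μ)
    (hM_int : ∀ t : ℝ, 0 ≤ t → Integrable (Mdrift t) μ)
    (hM_adapted : ∀ t : ℝ, 0 ≤ t → Measurable[ℱ t] (Mdrift t))
    (hM_super : ∀ s t : ℝ, 0 ≤ s → s ≤ t → μ[Mdrift t|ℱ s] ≤ᵐ[μ] Mdrift s)
    (m : ℝ) (hm : 0 < m)
    (B : Set E) (hB : MeasurableSet B)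
    (N : ℕ)
    (TN : Ω → ℕ)
    (hTN_def : ∀ ω : Ω, TN ω = sInf ({k : ℕ | 1 ≤ k ∧ X (m * k) ω ∈ B} ∪ {N})) :
    (∫ ω, (∑ k ∈ Finset.Icc 1 (TN ω), φ (V (X (m * k) ω))) ∂μ)
      ≤ m⁻¹ * (∫ ω, (∫ s in (0:ℝ)..(m * (TN ω : ℝ)), φ (V (X s ω))) ∂μ)
        + b * φ' 1 * m * ∫ ω, ((TN ω : ℝ)) ∂μ := by
  obtain rfl : Mdrift = driftProcess (fun t ω => V (X t ω))
      (fun u ω => C.indicator (fun _ => (1:ℝ)) (X u ω)) φ b := funext₂ hM_def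
  have hD : DriftCondition μ ℱ (fun t ω => V (X t ω))
      (fun u ω => C.indicator (fun _ => (1:ℝ)) (X u ω)) φ b :=
    ⟨fun t ht => hV_meas.comp (hX_adapted t ht), fun _ _ => hV_one _, hV_int,
      fun u ω => by by_cases h : X u ω ∈ C <;> simp [h], hM_int, hM_adapted, hM_super⟩
  have hφ0 : ∀ u, 1 ≤ u → 0 ≤ φ u := fun u hu => (hφ_pos u hu).le
  have hprod := hD.integrable_comp_prod hℱ_le hb hφ_conc hφ_deriv hφ_mono hφ0 hVX_rc (T := m * N)
  have hTN_le : ∀ ω, TN ω ≤ N := fun ω =>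
    ((hTN_def ω).trans (sInf_union_singleton_eq_hittingBtwn ω)).trans_le (hittingBtwn_le ω)
  have hA : ∀ k : ℕ, MeasurableSet[ℱ (m * k)] {ω | k < TN ω} := by
    simpa only [hTN_def, sInf_union_singleton_eq_hittingBtwn] using
      measurableSet_lt_hittingBtwn_skeleton hℱ_le hℱ_mono hm.le
        (fun k => hX_adapted _ (by positivity)) hB 1 N
  have hA' : ∀ k, MeasurableSet {ω | k < TN ω} := fun k => hℱ_le _ _ (hA k)
  rw [integral_sum_Icc_eq_sum_setIntegral hTN_le hA' fun k _ =>
      hD.integrable_comp hℱ_le hφ_conc hφ_deriv hφ0 (by positivity),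
    integral_intervalIntegral_eq_sum_setIntegral hm.le hprod hTN_le hA',
    integral_natCast_eq_sum_measureReal hTN_le hA', Finset.mul_sum, Finset.mul_sum,
    ← Finset.sum_add_distrib]
  refine Finset.sum_le_sum fun k hk => ?_
  have hkN : m * k + m ≤ m * N := by
    rw [← mul_add_one]; gcongr; exact_mod_cast Finset.mem_range.1 hk
  simpa only [Nat.cast_add_one, mul_add_one] using hD.setIntegral_le_average_add hℱ_le hℱ_mono hb
    hφ_conc hφ_deriv hφ_mono hφ0 hprod (by positivity) hm hkN (hA k)

/-- Under the drift condition `D(C,V,φ,b)`, for `m > 0`, a measurable set `B`, the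
return time `T = inf{k ≥ 1 : X_{mk} ∈ B}` of the `m`-skeleton, and `N ∈ ℕ`,
`E[Σ_{k=1}^{T∧N} φ(V(X_{mk}))] ≤ m⁻¹ E[∫₀^{m(T∧N)} φ(V(X_s)) ds] + b φ'(1) m E[T∧N]`. -/
theorem drift_condition_skeleton_modulated_moment
    {Ω E : Type*} [MeasurableSpace Ω] [MeasurableSpace E]
    (μ : Measure Ω) [IsProbabilityMeasure μ]
    (ℱ : ℝ → MeasurableSpace Ω)
    (hℱ_mono : ∀ s t : ℝ, s ≤ t → ℱ s ≤ ℱ t)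
    (hℱ_le : ∀ t : ℝ, ℱ t ≤ ‹MeasurableSpace Ω›)
    (X : ℝ → Ω → E)
    (hX_adapted : ∀ t : ℝ, 0 ≤ t → Measurable[ℱ t] (X t))
    (x : E) (hX0 : ∀ᵐ ω ∂μ, X 0 ω = x)
    (C : Set E) (hC : MeasurableSet C)
    (V : E → ℝ) (hV_meas : Measurable V) (hV_one : ∀ y : E, 1 ≤ V y)
    (hVX_rc : ∀ ω : Ω, ∀ t : ℝ, 0 ≤ t →
      Tendsto (fun s => V (X s ω)) (nhdsWithin t (Set.Ici t)) (nhds (V (X t ω))))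
    (hVX_ll : ∀ ω : Ω, ∀ t : ℝ, 0 < t →
      ∃ l : ℝ, Tendsto (fun s => V (X s ω)) (nhdsWithin t (Set.Iio t)) (nhds l))
    (φ φ' : ℝ → ℝ)
    (hφ_pos : ∀ u : ℝ, 1 ≤ u → 0 < φ u)
    (hφ_mono : MonotoneOn φ (Set.Ici 1))
    (hφ_conc : ConcaveOn ℝ (Set.Ici 1) φ)
    (hφ_deriv : ∀ u ∈ Set.Ici (1:ℝ), HasDerivWithinAt φ (φ' u) (Set.Ici 1) u)
    (b : ℝ) (hb : 0 ≤ b)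
    (Mdrift : ℝ → Ω → ℝ)
    (hM_def : ∀ t : ℝ, ∀ ω : Ω, Mdrift t ω =
      V (X t ω) - V (X 0 ω) + (∫ u in (0:ℝ)..t, φ (V (X u ω)))
        - b * ∫ u in (0:ℝ)..t, C.indicator (fun _ => (1:ℝ)) (X u ω))
    (hV_int : ∀ t : ℝ, 0 ≤ t → Integrable (fun ω => V (X t ω)) μ)
    (hM_int : ∀ t : ℝ, 0 ≤ t → Integrable (Mdrift t) μ)
    (hM_adapted : ∀ t : ℝ, 0 ≤ t → Measurable[ℱ t] (Mdrift t))
    (hM_super : ∀ s t : ℝ, 0 ≤ s → s ≤ t → μ[Mdrift t|ℱ s] ≤ᵐ[μ] Mdrift s)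
    (m : ℝ) (hm : 0 < m)
    (B : Set E) (hB : MeasurableSet B)
    (N : ℕ)
    (TN : Ω → ℕ)
    (hTN_def : ∀ ω : Ω, TN ω = sInf ({k : ℕ | 1 ≤ k ∧ X (m * k) ω ∈ B} ∪ {N})) :
    (∫ ω, (∑ k ∈ Finset.Icc 1 (TN ω), φ (V (X (m * k) ω))) ∂μ)
      ≤ m⁻¹ * (∫ ω, (∫ s in (0:ℝ)..(m * (TN ω : ℝ)), φ (V (X s ω))) ∂μ)
        + b * φ' 1 * m * ∫ ω, ((TN ω : ℝ)) ∂μ :=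
  drift_condition_skeleton_modulated_moment_general μ ℱ hℱ_mono hℱ_le X hX_adapted C V hV_meas
    hV_one hVX_rc φ φ' hφ_pos hφ_mono hφ_conc hφ_deriv b hb Mdrift hM_def hV_int hM_int hM_adapted
    hM_super m hm B hB N TN hTN_def
end

section
/- Let (P^t)_{t≥0} be a measurable semigroup of Markov kernels on a measurable space (E,ℰ), let β > 0, and let V : E → [0,∞] be measurable with P^t V(x) < ∞ for all t ≥ 0 and x ∈ E, and R_β V(x) < ∞ for all x ∈ E. Then for every s ≥ 0 and x ∈ E with ∫₀^s P^u V(x) du < ∞, ∫₀^s β ( P^u(R_β V)(x) − P^u V(x) ) du = P^s(R_β V)(x) − R_β V(x). -/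
/-!
Write `p r = P^r V(x)`. The semigroup property and Tonelli give
`P^u (R_β V)(x) = e^{βu} G u` with the tail integral `G u = ∫_{(u,∞)} β e^{-βr} p r dr`.
Since `G` is absolutely continuous with `G' u = -β e^{-βu} p u` almost everywhere, the product
`u ↦ e^{βu} G u` has derivative `β e^{βu} G u - β p u` a.e., and the identity is the fundamental
theorem of calculus for absolutely continuous functions applied to it on `[0, s]`.
-/

open MeasureTheory ProbabilityTheory Set
open scoped ENNReal

theorem integral_exp_mul_integral_Ioi_deriv_eq_sub {q : ℝ → ℝ} {a s : ℝ} (β : ℝ)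
    (hq : IntegrableOn q (Ioi a)) (has : a ≤ s) :
    ∫ u in a..s, (β * (Real.exp (β * u) * ∫ r in Ioi u, q r) - Real.exp (β * u) * q u)
      = Real.exp (β * s) * (∫ r in Ioi s, q r) - Real.exp (β * a) * ∫ r in Ioi a, q r := by
  set C := ∫ r in Ioi a, q r
  have hqi : IntervalIntegrable q volume a s :=
    (intervalIntegrable_iff_integrableOn_Ioc_of_le has).2 (hq.mono_set Ioc_subset_Ioi_self)
  have htail : ∀ u, a ≤ u → ∫ r in Ioi u, q r = C - ∫ r in a..u, q r := fun u hu => by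
    rw [← intervalIntegral.integral_Ioi_sub_Ioi hq hu, sub_sub_cancel]
  have hexp : AbsolutelyContinuousOnInterval (fun u => Real.exp (β * u)) a s :=
    ContDiffOn.absolutelyContinuousOnInterval (by fun_prop)
  have hG : AbsolutelyContinuousOnInterval (fun u => C - ∫ r in a..u, q r) a s :=
    (ContDiffOn.absolutelyContinuousOnInterval contDiffOn_const).sub
      (hqi.absolutelyContinuousOnInterval_intervalIntegral left_mem_uIcc)
  have hprod := hexp.integral_deriv_mul_eq_sub hG
  rw [intervalIntegral.integral_same, sub_zero, ← htail s has] at hprod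
  rw [← hprod]
  refine intervalIntegral.integral_congr_ae ?_
  filter_upwards [hqi.ae_hasDerivAt_integral] with u hu hmem
  have hmem' : u ∈ uIcc a s := uIoc_subset_uIcc hmem
  have hderiv : deriv (fun u => C - ∫ r in a..u, q r) u = -q u :=
    ((hu hmem' a left_mem_uIcc).const_sub C).deriv
  have hexpderiv : deriv (fun u => Real.exp (β * u)) u = β * Real.exp (β * u) := by
    simpa [mul_comm] using ((hasDerivAt_id u).const_mul β).exp.deriv
  rw [hderiv, hexpderiv, htail u ((uIoc_of_le has ▸ hmem).1.le)]
  ring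

theorem ProbabilityTheory.Kernel.lintegral_eq_lintegral_lintegral_of_apply_eq
    {α β γ : Type*} [MeasurableSpace α] [MeasurableSpace β] [MeasurableSpace γ]
    {κ : Kernel α β} {η : Kernel β γ} {ξ : Kernel α γ}
    (h : ∀ a A, MeasurableSet A → ξ a A = ∫⁻ b, η b A ∂κ a) (a : α) {f : γ → ℝ≥0∞}
    (hf : Measurable f) :
    ∫⁻ c, f c ∂ξ a = ∫⁻ b, ∫⁻ c, f c ∂η b ∂κ a := by
  have hξ : ξ = η ∘ₖ κ := by
    ext a A hA
    rw [Kernel.comp_apply' _ _ _ hA, h a A hA]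
  rw [hξ, Kernel.lintegral_comp _ _ _ hf]

theorem lintegral_Ioi_exp_mul_comp_const_add (β u : ℝ) (p : ℝ → ℝ≥0∞) :
    ∫⁻ t in Ioi 0, ENNReal.ofReal (β * Real.exp (-β * t)) * p (u + t)
      = ENNReal.ofReal (Real.exp (β * u)) *
          ∫⁻ r in Ioi u, ENNReal.ofReal (β * Real.exp (-β * r)) * p r := by
  have hweight : ∀ t, ENNReal.ofReal (β * Real.exp (-β * t))
      = ENNReal.ofReal (Real.exp (β * u)) * ENNReal.ofReal (β * Real.exp (-β * (u + t))) := by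
    intro t
    rw [← ENNReal.ofReal_mul (Real.exp_pos _).le, mul_left_comm, ← Real.exp_add]
    ring_nf
  conv_lhs => enter [2, t]; rw [hweight t, mul_assoc]
  have hIoi : Ioi (0 : ℝ) = (u + ·) ⁻¹' Ioi u := by rw [preimage_const_add_Ioi, sub_self]
  rw [lintegral_const_mul' _ _ ENNReal.ofReal_ne_top, hIoi]
  exact congrArg _ <| (measurePreserving_add_left volume u).setLIntegral_comp_preimage_emb
    (measurableEmbedding_addLeft u) (fun r => ENNReal.ofReal (β * Real.exp (-β * r)) * p r) _

theorem lintegral_resolvent_eq_exp_mul_lintegral_Ioi {E : Type*} [MeasurableSpace E]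
    {P : ℝ → Kernel E E} [∀ t, IsSFiniteKernel (P t)]
    (hsemi : ∀ s t : ℝ, 0 ≤ s → 0 ≤ t → ∀ x : E, ∀ A : Set E, MeasurableSet A →
      P (t + s) x A = ∫⁻ y, P s y A ∂(P t x))
    {V : E → ℝ≥0∞} (hV : Measurable V)
    (hPV : Measurable fun p : ℝ × E => ∫⁻ z, V z ∂(P p.1 p.2)) (β : ℝ) {u : ℝ} (hu : 0 ≤ u)
    (x : E) :
    ∫⁻ y, (∫⁻ t in Ioi 0, ENNReal.ofReal (β * Real.exp (-β * t)) * ∫⁻ z, V z ∂(P t y)) ∂(P u x)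
      = ENNReal.ofReal (Real.exp (β * u)) *
          ∫⁻ r in Ioi u, ENNReal.ofReal (β * Real.exp (-β * r)) * ∫⁻ z, V z ∂(P r x) := by
  have hweight : Measurable fun t : ℝ => ENNReal.ofReal (β * Real.exp (-β * t)) := by fun_prop
  calc _ = ∫⁻ t in Ioi 0, ∫⁻ y,
        ENNReal.ofReal (β * Real.exp (-β * t)) * ∫⁻ z, V z ∂(P t y) ∂(P u x) :=
        lintegral_lintegral_swap <| ((hweight.comp measurable_snd).mul
          (hPV.comp measurable_swap)).aemeasurable
    _ = ∫⁻ t in Ioi 0, ENNReal.ofReal (β * Real.exp (-β * t)) * ∫⁻ z, V z ∂(P (u + t) x) := by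
        refine setLIntegral_congr_fun measurableSet_Ioi fun t ht => ?_
        rw [lintegral_const_mul _ (hV.lintegral_kernel (κ := P t)),
          Kernel.lintegral_eq_lintegral_lintegral_of_apply_eq (hsemi t u (le_of_lt ht) hu) x hV]
    _ = _ := lintegral_Ioi_exp_mul_comp_const_add β u fun r => ∫⁻ z, V z ∂(P r x)

theorem resolvent_integral_identity_general
    {E : Type*} [MeasurableSpace E]
    (P : ℝ → Kernel E E)
    (hMarkov : ∀ t : ℝ, IsMarkovKernel (P t))
    (hsemi : ∀ s t : ℝ, 0 ≤ s → 0 ≤ t → ∀ x : E, ∀ A : Set E, MeasurableSet A →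
      P (t + s) x A = ∫⁻ y, P s y A ∂(P t x))
    (hmeas : ∀ f : E → ℝ≥0∞, Measurable f →
      Measurable (fun p : ℝ × E => ∫⁻ y, f y ∂(P p.1 p.2)))
    (β : ℝ) (hβ : 0 < β)
    (V : E → ℝ≥0∞) (hV_meas : Measurable V)
    (PV : ℝ → E → ℝ≥0∞) (hPV_def : ∀ t : ℝ, ∀ x : E, PV t x = ∫⁻ y, V y ∂(P t x))
    (RV : E → ℝ≥0∞)
    (hRV_def : ∀ x : E,
      RV x = ∫⁻ t in Set.Ioi (0:ℝ), ENNReal.ofReal (β * Real.exp (-β * t)) * PV t x)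
    (hRV_fin : ∀ x : E, RV x < ⊤) :
    ∀ s : ℝ, 0 ≤ s → ∀ x : E,
      (∫⁻ u in Set.Ioc (0:ℝ) s, PV u x) ≠ ⊤ →
      (∫ u in (0:ℝ)..s, β * ((∫⁻ y, RV y ∂(P u x)).toReal - (PV u x).toReal))
        = (∫⁻ y, RV y ∂(P s x)).toReal - (RV x).toReal := by
  intro s hs x _
  obtain rfl : PV = fun t x => ∫⁻ y, V y ∂(P t x) := funext₂ hPV_def
  obtain rfl : RV = fun x =>
      ∫⁻ t in Ioi 0, ENNReal.ofReal (β * Real.exp (-β * t)) * ∫⁻ y, V y ∂(P t x) :=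
    funext hRV_def
  have : ∀ t, IsSFiniteKernel (P t) := fun t => by have := hMarkov t; infer_instance
  have hPRV u (hu : 0 ≤ u) :=
    lintegral_resolvent_eq_exp_mul_lintegral_Ioi hsemi hV_meas (hmeas V hV_meas) β hu x
  set w : ℝ → ℝ≥0∞ := fun r => ENNReal.ofReal (β * Real.exp (-β * r)) * ∫⁻ y, V y ∂(P r x)
  have hw : Measurable w :=
    (by fun_prop : Measurable fun r : ℝ => ENNReal.ofReal (β * Real.exp (-β * r))).mul
      ((hmeas V hV_meas).comp (measurable_id.prodMk measurable_const))
  have hw_fin : ∫⁻ r in Ioi 0, w r ≠ ⊤ := (hRV_fin x).ne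
  have htail u (hu : 0 ≤ u) : (∫⁻ r in Ioi u, w r).toReal = ∫ r in Ioi u, (w r).toReal :=
    (integral_toReal hw.aemeasurable (ae_lt_top hw
      (ne_top_of_le_ne_top hw_fin (lintegral_mono_set (Ioi_subset_Ioi hu))))).symm
  have hdensity u : β * (∫⁻ y, V y ∂(P u x)).toReal = Real.exp (β * u) * (w u).toReal := by
    rw [ENNReal.toReal_mul, ENNReal.toReal_ofReal (by positivity), ← mul_assoc, mul_left_comm,
      ← Real.exp_add, neg_mul, add_neg_cancel, Real.exp_zero, mul_one]
  have hexp u : (ENNReal.ofReal (Real.exp (β * u))).toReal = Real.exp (β * u) :=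
    ENNReal.toReal_ofReal (Real.exp_pos _).le
  calc _ = ∫ u in (0:ℝ)..s, (β * (Real.exp (β * u) * ∫ r in Ioi u, (w r).toReal)
        - Real.exp (β * u) * (w u).toReal) := by
        refine intervalIntegral.integral_congr fun u hu => ?_
        have hu0 : 0 ≤ u := (uIcc_of_le hs ▸ hu).1
        simp only [mul_sub, hPRV u hu0, ENNReal.toReal_mul, hexp, htail u hu0, hdensity]
    _ = _ := integral_exp_mul_integral_Ioi_deriv_eq_sub β
        (integrable_toReal_of_lintegral_ne_top hw.aemeasurable hw_fin) hs
    _ = _ := by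
        rw [hPRV s hs, ENNReal.toReal_mul, hexp, htail s hs, ← htail 0 le_rfl, mul_zero,
          Real.exp_zero, one_mul]

/-- For a measurable Markov semigroup `(P^t)` and `β > 0`, with `P^t V(x) < ∞`,
`R_β V(x) < ∞`, and `∫₀^s P^u V(x) du < ∞`, one has
`∫₀^s β (P^u(R_β V)(x) - P^u V(x)) du = P^s(R_β V)(x) - R_β V(x)`. -/
theorem resolvent_integral_identity
    {E : Type*} [MeasurableSpace E]
    (P : ℝ → Kernel E E)
    (hMarkov : ∀ t : ℝ, IsMarkovKernel (P t))
    (hP0 : ∀ x : E, P 0 x = MeasureTheory.Measure.dirac x)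
    (hsemi : ∀ s t : ℝ, 0 ≤ s → 0 ≤ t → ∀ x : E, ∀ A : Set E, MeasurableSet A →
      P (t + s) x A = ∫⁻ y, P s y A ∂(P t x))
    (hmeas : ∀ f : E → ℝ≥0∞, Measurable f →
      Measurable (fun p : ℝ × E => ∫⁻ y, f y ∂(P p.1 p.2)))
    (β : ℝ) (hβ : 0 < β)
    (V : E → ℝ≥0∞) (hV_meas : Measurable V)
    (PV : ℝ → E → ℝ≥0∞) (hPV_def : ∀ t : ℝ, ∀ x : E, PV t x = ∫⁻ y, V y ∂(P t x))
    (hPV_fin : ∀ t : ℝ, 0 ≤ t → ∀ x : E, PV t x < ⊤)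
    (RV : E → ℝ≥0∞)
    (hRV_def : ∀ x : E,
      RV x = ∫⁻ t in Set.Ioi (0:ℝ), ENNReal.ofReal (β * Real.exp (-β * t)) * PV t x)
    (hRV_fin : ∀ x : E, RV x < ⊤) :
    ∀ s : ℝ, 0 ≤ s → ∀ x : E,
      (∫⁻ u in Set.Ioc (0:ℝ) s, PV u x) ≠ ⊤ →
      (∫ u in (0:ℝ)..s, β * ((∫⁻ y, RV y ∂(P u x)).toReal - (PV u x).toReal))
        = (∫⁻ y, RV y ∂(P s x)).toReal - (RV x).toReal :=
  resolvent_integral_identity_general P hMarkov hsemi hmeas β hβ V hV_meas PV hPV_def RV hRV_def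
    hRV_fin
end

section
/- Let (P^t)_{t≥0} be a measurable semigroup of Markov kernels on a measurable space (E,ℰ), let β > 0, let V : E → [1,∞) be measurable with P^t V(x) < ∞ for all t, x and R_β V(x) < ∞ for all x, let φ : [1,∞) → (0,∞) be nondecreasing, let C ∈ ℰ and b ∈ [0,∞). Assume the resolvent drift condition: R_β V(x) ≤ V(x) − φ(V(x)) + b·1_C(x) for all x ∈ E. Then for all s ≥ 0 and x ∈ E, P^s(R_β V)(x) + β ∫₀^s P^u(φ∘V)(x) du ≤ R_β V(x) + β b ∫₀^s P^u(1_C)(x) du. -/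
/-!
Write `f t = P^t V(x)`. By the semigroup property
`P^u R_β V(x) = ∫_0^∞ β e^{-βt} f(u + t) dt = e^{βu} ∫_u^∞ β e^{-βt} f(t) dt`, so exchanging
the order of integration over `0 < u ≤ min(s, t)` gives the resolvent identity
`R_β V(x) + β ∫_0^s P^u R_β V(x) du = P^s R_β V(x) + β ∫_0^s P^u V(x) du`,
both sides being `∫_0^∞ β e^{β (min(s, t) - t)} f(t) dt`. Integrating the drift condition
against `P^u(x, ·)` and over `u ∈ (0, s]` bounds `β ∫_0^s P^u (R_β V + φ ∘ V)(x) du` by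
`β ∫_0^s P^u (V + b 1_C)(x) du`; the common term `β ∫_0^s P^u R_β V(x) du`, at most
`β s e^{βs} R_β V(x) < ∞`, cancels.
-/

open MeasureTheory ProbabilityTheory Set
open scoped ENNReal

lemma lintegral_Ioc_ofReal_mul_exp {β : ℝ} (hβ : 0 ≤ β) (a b : ℝ) :
    ∫⁻ u in Ioc a b, ENNReal.ofReal (β * Real.exp (β * u)) =
      ENNReal.ofReal (Real.exp (β * b) - Real.exp (β * a)) := by
  rcases le_or_gt b a with hba | hab
  · rw [Ioc_eq_empty (not_lt.2 hba), Measure.restrict_empty, lintegral_zero_measure, eq_comm,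
      ENNReal.ofReal_eq_zero, sub_nonpos]
    gcongr
  have hderiv (u : ℝ) : HasDerivAt (fun v => Real.exp (β * v)) (β * Real.exp (β * u)) u := by
    simpa [mul_comm] using ((hasDerivAt_id u).const_mul β).exp
  have hcont : Continuous fun u => β * Real.exp (β * u) := by fun_prop
  rw [← ofReal_integral_eq_lintegral_ofReal (hcont.integrableOn_Icc.mono_set Ioc_subset_Icc_self)
      (.of_forall fun u => by positivity), ← intervalIntegral.integral_of_le hab.le,
    intervalIntegral.integral_eq_sub_of_hasDerivAt (fun u _ => hderiv u)
      (hcont.intervalIntegrable a b)]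

lemma setLIntegral_Ioi_comp_const_add (f : ℝ → ℝ≥0∞) (a u : ℝ) :
    ∫⁻ t in Ioi a, f (u + t) = ∫⁻ t in Ioi (u + a), f t := by
  rw [(measurePreserving_add_left volume u).setLIntegral_comp_emb
    (measurableEmbedding_addLeft u), image_const_add_Ioi]

lemma lintegral_Ioc_lintegral_Ioi_swap {g : ℝ → ℝ → ℝ≥0∞}
    (hg : Measurable (Function.uncurry g)) (a b : ℝ) :
    ∫⁻ u in Ioc a b, ∫⁻ t in Ioi u, g u t =
      ∫⁻ t in Ioi a, ∫⁻ u in Ioc a (min b t), g u t := by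
  let G := {p : ℝ × ℝ | p.1 ≤ p.2}.indicator (Function.uncurry g)
  have hG : Measurable G := hg.indicator (measurableSet_le measurable_fst measurable_snd)
  have hsupp : (fun t => ∫⁻ u in Ioc a (min b t), g u t).support ⊆ Ioi a := by
    intro t ht
    by_contra hta
    rw [Function.mem_support, Ioc_eq_empty (by simp_all)] at ht
    simp at ht
  calc ∫⁻ u in Ioc a b, ∫⁻ t in Ioi u, g u t
      = ∫⁻ u in Ioc a b, ∫⁻ t, G (u, t) := by
        refine lintegral_congr fun u => ?_
        rw [setLIntegral_congr Ioi_ae_eq_Ici, ← lintegral_indicator measurableSet_Ici]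
        rfl
    _ = ∫⁻ t, ∫⁻ u in Ioc a b, G (u, t) := lintegral_lintegral_swap hG.aemeasurable
    _ = ∫⁻ t, ∫⁻ u in Ioc a (min b t), g u t := by
        refine lintegral_congr fun t => ?_
        rw [← Ioc_inter_Iic, inter_comm, ← Measure.restrict_restrict measurableSet_Iic,
          ← lintegral_indicator measurableSet_Iic]
        rfl
    _ = ∫⁻ t in Ioi a, ∫⁻ u in Ioc a (min b t), g u t :=
        (setLIntegral_eq_of_support_subset hsupp).symm

/-- For `f t = P^t V(x)` this is `P^u R_β V(x) = ∫_0^∞ β e^{-βt} P^{u+t} V(x) dt`. -/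
noncomputable def shiftedResolvent (β : ℝ) (f : ℝ → ℝ≥0∞) (u : ℝ) : ℝ≥0∞ :=
  ∫⁻ t in Ioi 0, ENNReal.ofReal (β * Real.exp (-β * t)) * f (u + t)

section shiftedResolvent

variable {β : ℝ} {f : ℝ → ℝ≥0∞}

lemma shiftedResolvent_eq (β : ℝ) (f : ℝ → ℝ≥0∞) (u : ℝ) :
    shiftedResolvent β f u = ENNReal.ofReal (Real.exp (β * u)) *
      ∫⁻ t in Ioi u, ENNReal.ofReal (β * Real.exp (-β * t)) * f t := by
  set g := fun t => ENNReal.ofReal (β * Real.exp (-β * t)) * f t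
  have hweight (t : ℝ) : ENNReal.ofReal (β * Real.exp (-β * t)) * f (u + t) =
      ENNReal.ofReal (Real.exp (β * u)) * g (u + t) := by
    rw [← mul_assoc, ← ENNReal.ofReal_mul (Real.exp_pos _).le, mul_left_comm, ← Real.exp_add]
    ring_nf
  rw [shiftedResolvent, lintegral_congr hweight, lintegral_const_mul' _ _ ENNReal.ofReal_ne_top,
    setLIntegral_Ioi_comp_const_add g, add_zero]

lemma shiftedResolvent_le {u : ℝ} (hu : 0 ≤ u) :
    shiftedResolvent β f u ≤ ENNReal.ofReal (Real.exp (β * u)) * shiftedResolvent β f 0 := by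
  rw [shiftedResolvent_eq β f u, shiftedResolvent_eq β f 0]
  simp only [mul_zero, Real.exp_zero, ENNReal.ofReal_one, one_mul]
  gcongr

lemma lintegral_Ioc_shiftedResolvent_ne_top (hβ : 0 ≤ β) (h0 : shiftedResolvent β f 0 ≠ ⊤)
    (s : ℝ) : ∫⁻ u in Ioc 0 s, shiftedResolvent β f u ≠ ⊤ := by
  refine ne_top_of_le_ne_top (b := ∫⁻ _ in Ioc 0 s, ENNReal.ofReal (Real.exp (β * s)) *
    shiftedResolvent β f 0) ?_ (setLIntegral_mono measurable_const fun u hu => ?_)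
  · rw [setLIntegral_const, Real.volume_Ioc]
    finiteness
  · grw [shiftedResolvent_le hu.1.le, hu.2]

lemma ofReal_mul_lintegral_Ioc_shiftedResolvent (hβ : 0 ≤ β) (hf : Measurable f) (s : ℝ) :
    ENNReal.ofReal β * ∫⁻ u in Ioc 0 s, shiftedResolvent β f u =
      ∫⁻ t in Ioi 0, ENNReal.ofReal (Real.exp (β * min s t) - 1) *
        (ENNReal.ofReal (β * Real.exp (-β * t)) * f t) := by
  have hfactor (u : ℝ) : ENNReal.ofReal β * shiftedResolvent β f u =
      ∫⁻ t in Ioi u, ENNReal.ofReal (β * Real.exp (β * u)) *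
        (ENNReal.ofReal (β * Real.exp (-β * t)) * f t) := by
    rw [shiftedResolvent_eq, ← mul_assoc, ← ENNReal.ofReal_mul hβ,
      lintegral_const_mul' _ _ ENNReal.ofReal_ne_top]
  simp_rw [← lintegral_const_mul' _ _ ENNReal.ofReal_ne_top, hfactor]
  rw [lintegral_Ioc_lintegral_Ioi_swap (by fun_prop)]
  refine lintegral_congr fun t => ?_
  rw [lintegral_mul_const _ (by fun_prop), lintegral_Ioc_ofReal_mul_exp hβ, mul_zero,
    Real.exp_zero]

theorem shiftedResolvent_zero_add (hβ : 0 ≤ β) (hf : Measurable f) {s : ℝ} (hs : 0 ≤ s) :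
    shiftedResolvent β f 0 + ENNReal.ofReal β * ∫⁻ u in Ioc 0 s, shiftedResolvent β f u =
      shiftedResolvent β f s + ENNReal.ofReal β * ∫⁻ u in Ioc 0 s, f u := by
  set g := fun t => ENNReal.ofReal (β * Real.exp (-β * t)) * f t
  have hweight {t : ℝ} (ht : 0 ≤ t) :
      ENNReal.ofReal (Real.exp (β * t)) * g t = ENNReal.ofReal β * f t := by
    rw [← mul_assoc, ← ENNReal.ofReal_mul (Real.exp_pos _).le, mul_left_comm, ← Real.exp_add]
    simp
  calc shiftedResolvent β f 0 + ENNReal.ofReal β * ∫⁻ u in Ioc 0 s, shiftedResolvent β f u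
      = ∫⁻ t in Ioi 0, ENNReal.ofReal (Real.exp (β * min s t)) * g t := by
        rw [ofReal_mul_lintegral_Ioc_shiftedResolvent hβ hf, shiftedResolvent_eq, mul_zero,
          Real.exp_zero, ENNReal.ofReal_one, one_mul, ← lintegral_add_left (by fun_prop)]
        refine setLIntegral_congr_fun measurableSet_Ioi fun t ht => ?_
        have : 0 ≤ Real.exp (β * min s t) - 1 := by
          simpa using Real.one_le_exp (mul_nonneg hβ (le_min hs ht.le))
        rw [← one_add_mul, ← ENNReal.ofReal_one, ← ENNReal.ofReal_add zero_le_one this,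
          add_sub_cancel]
    _ = (∫⁻ t in Ioc 0 s, ENNReal.ofReal (Real.exp (β * min s t)) * g t) +
          ∫⁻ t in Ioi s, ENNReal.ofReal (Real.exp (β * min s t)) * g t := by
        rw [← Ioc_union_Ioi_eq_Ioi hs, lintegral_union measurableSet_Ioi Ioc_disjoint_Ioi_same]
    _ = ENNReal.ofReal β * (∫⁻ u in Ioc 0 s, f u) + shiftedResolvent β f s := by
        rw [shiftedResolvent_eq, ← lintegral_const_mul' _ _ ENNReal.ofReal_ne_top,
          ← lintegral_const_mul' _ _ ENNReal.ofReal_ne_top]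
        congr 1
        · exact setLIntegral_congr_fun measurableSet_Ioc fun t ht => by
            rw [min_eq_right ht.2, hweight ht.1.le]
        · exact setLIntegral_congr_fun measurableSet_Ioi fun t ht => by
            rw [min_eq_left ht.le]
    _ = _ := add_comm _ _

end shiftedResolvent

section Semigroup

variable {E : Type*} [MeasurableSpace E] {P : ℝ → Kernel E E}

lemma lintegral_lintegral_eq_of_semigroup
    (hsemi : ∀ s t : ℝ, 0 ≤ s → 0 ≤ t → ∀ x : E, ∀ A : Set E, MeasurableSet A →
      P (t + s) x A = ∫⁻ y, P s y A ∂(P t x))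
    {g : E → ℝ≥0∞} (hg : Measurable g) {s t : ℝ} (hs : 0 ≤ s) (ht : 0 ≤ t) (x : E) :
    ∫⁻ y, ∫⁻ z, g z ∂(P t y) ∂(P s x) = ∫⁻ z, g z ∂(P (s + t) x) := by
  have hbind : P (s + t) x = (P s x).bind (P t) := by
    ext A hA
    rw [Measure.bind_apply hA (P t).aemeasurable]
    exact hsemi t s ht hs x A hA
  rw [hbind, Measure.lintegral_bind (P t).aemeasurable hg.aemeasurable]

lemma lintegral_resolvent_eq_shiftedResolvent
    (hsemi : ∀ s t : ℝ, 0 ≤ s → 0 ≤ t → ∀ x : E, ∀ A : Set E, MeasurableSet A →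
      P (t + s) x A = ∫⁻ y, P s y A ∂(P t x))
    {g : E → ℝ≥0∞} (hg : Measurable g)
    (hPg : Measurable fun p : ℝ × E => ∫⁻ z, g z ∂(P p.1 p.2)) (β : ℝ)
    {u : ℝ} [IsSFiniteKernel (P u)] (hu : 0 ≤ u) (x : E) :
    ∫⁻ y, (∫⁻ t in Ioi 0, ENNReal.ofReal (β * Real.exp (-β * t)) * ∫⁻ z, g z ∂(P t y))
        ∂(P u x) =
      shiftedResolvent β (fun t => ∫⁻ z, g z ∂(P t x)) u := by
  have hweight : Measurable fun t : ℝ => ENNReal.ofReal (β * Real.exp (-β * t)) := by fun_prop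
  rw [lintegral_lintegral_swap ((hweight.comp measurable_snd).mul
    (hPg.comp measurable_swap)).aemeasurable]
  refine setLIntegral_congr_fun measurableSet_Ioi fun t ht => ?_
  rw [lintegral_const_mul' _ _ ENNReal.ofReal_ne_top,
    lintegral_lintegral_eq_of_semigroup hsemi hg hu ht.le]

end Semigroup

lemma lintegral_add_lintegral_ofReal_le_of_drift {E : Type*} [MeasurableSpace E] (μ : Measure E)
    {r : E → ℝ≥0∞} {V ψ : E → ℝ} {C : Set E} (hC : MeasurableSet C) (b : ℝ)
    (hr : ∀ y, r y ≠ ⊤) (hψ : ∀ y, 0 ≤ ψ y)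
    (hdrift : ∀ y, (r y).toReal ≤ V y - ψ y + b * C.indicator (fun _ => (1 : ℝ)) y) :
    ∫⁻ y, r y ∂μ + ∫⁻ y, ENNReal.ofReal (ψ y) ∂μ ≤
      ∫⁻ y, ENNReal.ofReal (V y) ∂μ + ENNReal.ofReal b * μ C := by
  have hpoint (y : E) : r y + ENNReal.ofReal (ψ y) ≤
      ENNReal.ofReal (V y) + C.indicator (fun _ => ENNReal.ofReal b) y := calc
    r y + ENNReal.ofReal (ψ y) = ENNReal.ofReal ((r y).toReal + ψ y) := by
      rw [ENNReal.ofReal_add ENNReal.toReal_nonneg (hψ y), ENNReal.ofReal_toReal (hr y)]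
    _ ≤ ENNReal.ofReal (V y + b * C.indicator (fun _ => (1 : ℝ)) y) :=
      ENNReal.ofReal_le_ofReal (by linarith [hdrift y])
    _ ≤ ENNReal.ofReal (V y) + C.indicator (fun _ => ENNReal.ofReal b) y := by
      grw [ENNReal.ofReal_add_le]
      by_cases hy : y ∈ C <;> simp [hy]
  calc ∫⁻ y, r y ∂μ + ∫⁻ y, ENNReal.ofReal (ψ y) ∂μ
      ≤ ∫⁻ y, (r y + ENNReal.ofReal (ψ y)) ∂μ := le_lintegral_add _ _
    _ ≤ ∫⁻ y, (ENNReal.ofReal (V y) + C.indicator (fun _ => ENNReal.ofReal b) y) ∂μ :=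
      lintegral_mono hpoint
    _ = ∫⁻ y, ENNReal.ofReal (V y) ∂μ + ENNReal.ofReal b * μ C := by
      rw [lintegral_add_right _ (measurable_const.indicator hC), lintegral_indicator_const hC]

lemma ENNReal.add_le_add_of_add_eq_of_add_le {a c d e r g : ℝ≥0∞} (hd : d ≠ ⊤)
    (h₁ : r + d = a + c) (h₂ : d + e ≤ c + g) : a + e ≤ r + g := by
  rw [← ENNReal.add_le_add_iff_right hd]
  calc a + e + d = a + (d + e) := by ring
    _ ≤ a + (c + g) := by gcongr
    _ = r + g + d := by rw [← add_assoc, ← h₁]; ring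

theorem resolvent_drift_implies_semigroup_drift_general
    {E : Type*} [MeasurableSpace E]
    (P : ℝ → Kernel E E)
    (hMarkov : ∀ t : ℝ, IsMarkovKernel (P t))
    (hsemi : ∀ s t : ℝ, 0 ≤ s → 0 ≤ t → ∀ x : E, ∀ A : Set E, MeasurableSet A →
      P (t + s) x A = ∫⁻ y, P s y A ∂(P t x))
    (hmeas : ∀ f : E → ℝ≥0∞, Measurable f →
      Measurable (fun p : ℝ × E => ∫⁻ y, f y ∂(P p.1 p.2)))
    (β : ℝ) (hβ : 0 < β)
    (V : E → ℝ) (hV_meas : Measurable V) (hV_one : ∀ y : E, 1 ≤ V y)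
    (PV : ℝ → E → ℝ≥0∞)
    (hPV_def : ∀ t : ℝ, ∀ x : E, PV t x = ∫⁻ y, ENNReal.ofReal (V y) ∂(P t x))
    (RV : E → ℝ≥0∞)
    (hRV_def : ∀ x : E,
      RV x = ∫⁻ t in Set.Ioi (0:ℝ), ENNReal.ofReal (β * Real.exp (-β * t)) * PV t x)
    (hRV_fin : ∀ x : E, RV x < ⊤)
    (φ : ℝ → ℝ)
    (hφ_pos : ∀ u : ℝ, 1 ≤ u → 0 < φ u)
    (C : Set E) (hC : MeasurableSet C)
    (b : ℝ)
    (hdrift : ∀ x : E,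
      (RV x).toReal ≤ V x - φ (V x) + b * C.indicator (fun _ => (1:ℝ)) x) :
    ∀ s : ℝ, 0 ≤ s → ∀ x : E,
      (∫⁻ y, RV y ∂(P s x))
          + ENNReal.ofReal β *
              (∫⁻ u in Set.Ioc (0:ℝ) s, ∫⁻ y, ENNReal.ofReal (φ (V y)) ∂(P u x))
        ≤ RV x
          + ENNReal.ofReal β * ENNReal.ofReal b *
              (∫⁻ u in Set.Ioc (0:ℝ) s, P u x C) := by
  intro s hs x
  have := hMarkov
  set f := fun t => ∫⁻ z, ENNReal.ofReal (V z) ∂(P t x)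
  have hVm : Measurable fun z => ENNReal.ofReal (V z) := by fun_prop
  have hf : Measurable f := (hmeas _ hVm).comp measurable_prodMk_right
  have hPRV {u : ℝ} (hu : 0 ≤ u) : ∫⁻ y, RV y ∂(P u x) = shiftedResolvent β f u := by
    simp_rw [hRV_def, hPV_def]
    exact lintegral_resolvent_eq_shiftedResolvent hsemi hVm (hmeas _ hVm) β hu x
  have hRVx : RV x = shiftedResolvent β f 0 := by
    simp [hRV_def, hPV_def, shiftedResolvent, f]
  have hresolvent : RV x + ENNReal.ofReal β * ∫⁻ u in Ioc 0 s, ∫⁻ y, RV y ∂(P u x) =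
      ∫⁻ y, RV y ∂(P s x) + ENNReal.ofReal β * ∫⁻ u in Ioc 0 s, f u := by
    rw [setLIntegral_congr_fun measurableSet_Ioc fun u hu => hPRV hu.1.le, hPRV hs, hRVx]
    exact shiftedResolvent_zero_add hβ.le hf hs
  have hfinite : ENNReal.ofReal β * ∫⁻ u in Ioc 0 s, ∫⁻ y, RV y ∂(P u x) ≠ ⊤ := by
    rw [setLIntegral_congr_fun measurableSet_Ioc fun u hu => hPRV hu.1.le]
    exact ENNReal.mul_ne_top ENNReal.ofReal_ne_top
      (lintegral_Ioc_shiftedResolvent_ne_top hβ.le (hRVx ▸ (hRV_fin x).ne) s)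
  have hdrift_u (u : ℝ) :
      ∫⁻ y, RV y ∂(P u x) + ∫⁻ y, ENNReal.ofReal (φ (V y)) ∂(P u x) ≤
        f u + ENNReal.ofReal b * P u x C :=
    lintegral_add_lintegral_ofReal_le_of_drift _ hC b (fun y => (hRV_fin y).ne)
      (fun y => (hφ_pos _ (hV_one y)).le) hdrift
  refine ENNReal.add_le_add_of_add_eq_of_add_le hfinite hresolvent ?_
  rw [mul_assoc, ← mul_add, ← mul_add, ← lintegral_const_mul' _ _ ENNReal.ofReal_ne_top,
    ← lintegral_add_left hf]
  gcongr
  exact (le_lintegral_add _ _).trans (lintegral_mono hdrift_u)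

/-- If the resolvent kernel satisfies the drift condition
`R_β V(x) ≤ V(x) - φ(V(x)) + b·1_C(x)`, then the semigroup satisfies the integral drift
inequality `P^s(R_β V)(x) + β ∫₀^s P^u(φ∘V)(x) du ≤ R_β V(x) + β b ∫₀^s P^u(1_C)(x) du`
for all `s ≥ 0` and `x`, i.e. the drift condition `D(C, R_β V, βφ, βb)` holds. -/
theorem resolvent_drift_implies_semigroup_drift
    {E : Type*} [MeasurableSpace E]
    (P : ℝ → Kernel E E)
    (hMarkov : ∀ t : ℝ, IsMarkovKernel (P t))
    (hP0 : ∀ x : E, P 0 x = MeasureTheory.Measure.dirac x)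
    (hsemi : ∀ s t : ℝ, 0 ≤ s → 0 ≤ t → ∀ x : E, ∀ A : Set E, MeasurableSet A →
      P (t + s) x A = ∫⁻ y, P s y A ∂(P t x))
    (hmeas : ∀ f : E → ℝ≥0∞, Measurable f →
      Measurable (fun p : ℝ × E => ∫⁻ y, f y ∂(P p.1 p.2)))
    (β : ℝ) (hβ : 0 < β)
    (V : E → ℝ) (hV_meas : Measurable V) (hV_one : ∀ y : E, 1 ≤ V y)
    (PV : ℝ → E → ℝ≥0∞)
    (hPV_def : ∀ t : ℝ, ∀ x : E, PV t x = ∫⁻ y, ENNReal.ofReal (V y) ∂(P t x))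
    (hPV_fin : ∀ t : ℝ, 0 ≤ t → ∀ x : E, PV t x < ⊤)
    (RV : E → ℝ≥0∞)
    (hRV_def : ∀ x : E,
      RV x = ∫⁻ t in Set.Ioi (0:ℝ), ENNReal.ofReal (β * Real.exp (-β * t)) * PV t x)
    (hRV_fin : ∀ x : E, RV x < ⊤)
    (φ : ℝ → ℝ)
    (hφ_pos : ∀ u : ℝ, 1 ≤ u → 0 < φ u)
    (hφ_mono : MonotoneOn φ (Set.Ici 1))
    (C : Set E) (hC : MeasurableSet C)
    (b : ℝ) (hb : 0 ≤ b)
    (hdrift : ∀ x : E,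
      (RV x).toReal ≤ V x - φ (V x) + b * C.indicator (fun _ => (1:ℝ)) x) :
    ∀ s : ℝ, 0 ≤ s → ∀ x : E,
      (∫⁻ y, RV y ∂(P s x))
          + ENNReal.ofReal β *
              (∫⁻ u in Set.Ioc (0:ℝ) s, ∫⁻ y, ENNReal.ofReal (φ (V y)) ∂(P u x))
        ≤ RV x
          + ENNReal.ofReal β * ENNReal.ofReal b *
              (∫⁻ u in Set.Ioc (0:ℝ) s, P u x C) :=
  resolvent_drift_implies_semigroup_drift_general P hMarkov hsemi hmeas β hβ V hV_meas hV_one PV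
    hPV_def RV hRV_def hRV_fin φ hφ_pos C hC b hdrift
end

section
/- Let n ≥ 1, 0 < p < 1, 0 < m < 1, ι > 0, r > 0, M > 0, λ₊ ≥ 0, T₀ ≥ 0. Let b : ℝⁿ → ℝⁿ satisfy ⟨b(x), x⟩ ≤ −r|x|^{1−p} for all |x| ≥ M, and let a : ℝⁿ → (n×n symmetric positive semidefinite matrices) satisfy ⟨a(x)x, x⟩ ≤ λ₊|x|² and Tr(a(x)) ≤ T₀ for all x. Define V(x) := exp(ι|x|^m) (which is C² on {x : |x| ≥ M}). Then for every x with |x| ≥ M, ⟨b(x), ∇V(x)⟩ + (1/2) Tr( a(x) ∇²V(x) ) ≤ −ι m ( r − (1/2) λ₊ ι m |x|^{p+m−1} ) |x|^{m−1−p} V(x) + (1/2) ι m T₀ |x|^{m−2} V(x). -/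
/-!
`V` is radial: `V x = g ‖x‖²` with `g t = exp (ι t^{m/2})`, so `∇V x = 2 g' x` and
`∇²V x = 2 g' I + 4 g'' x xᵀ`, whence `LV = g' (2⟪b, x⟫ + Tr a) + 2 g'' ⟪a x, x⟫`.
Here `g''` has a part with the factor `m/2 - 1 < 0`, which is dropped since `a` is positive
semidefinite, and a part `ι² m² |x|^{2m-4} V / 4` controlled by `⟪a x, x⟫ ≤ λ₊ |x|²`;
the drift condition and `Tr a ≤ T₀` bound the first-order part.
-/

open scoped RealInnerProductSpace

/-- The Hessian matrix of `f : ℝⁿ → ℝ` at `x`, given by the second iterated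
Fréchet derivative evaluated at pairs of standard basis vectors. -/
noncomputable def hessianMatrix {n : ℕ} (f : EuclideanSpace ℝ (Fin n) → ℝ)
    (x : EuclideanSpace ℝ (Fin n)) : Matrix (Fin n) (Fin n) ℝ :=
  fun i j =>
    iteratedFDeriv ℝ 2 f x ![EuclideanSpace.single i 1, EuclideanSpace.single j 1]

open Filter Topology Matrix Real

section RadialCalculus

variable {E : Type*} [NormedAddCommGroup E] [InnerProductSpace ℝ E] {x : E}

theorem HasDerivAt.hasFDerivAt_comp_norm_sq {g : ℝ → ℝ} {g' : ℝ} (hg : HasDerivAt g g' (‖x‖ ^ 2)) :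
    HasFDerivAt (fun z : E => g (‖z‖ ^ 2)) ((2 * g') • innerSL ℝ x) x := by
  refine (hg.comp_hasFDerivAt x (hasStrictFDerivAt_norm_sq x).hasFDerivAt).congr_fderiv ?_
  rw [two_smul, smul_add, mul_smul, two_smul]

theorem HasDerivAt.hasGradientAt_comp_norm_sq [CompleteSpace E] {g : ℝ → ℝ} {g' : ℝ}
    (hg : HasDerivAt g g' (‖x‖ ^ 2)) :
    HasGradientAt (fun z : E => g (‖z‖ ^ 2)) ((2 * g') • x) x := by
  rw [hasGradientAt_iff_hasFDerivAt]
  refine hg.hasFDerivAt_comp_norm_sq.congr_fderiv ?_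
  rw [map_smul]
  rfl

theorem iteratedFDeriv_two_comp_norm_sq_apply {g g' : ℝ → ℝ} {g'' : ℝ}
    (hg : ∀ᶠ t in 𝓝 (‖x‖ ^ 2), HasDerivAt g (g' t) t)
    (hg' : HasDerivAt g' g'' (‖x‖ ^ 2)) (u v : E) :
    iteratedFDeriv ℝ 2 (fun z : E => g (‖z‖ ^ 2)) x ![u, v]
      = 2 * g' (‖x‖ ^ 2) * ⟪u, v⟫ + 4 * g'' * ⟪x, u⟫ * ⟪x, v⟫ := by
  have hfderiv : fderiv ℝ (fun z : E => g (‖z‖ ^ 2)) =ᶠ[𝓝 x]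
      fun y => (2 * g' (‖y‖ ^ 2)) • innerSL ℝ y := by
    filter_upwards [((continuous_norm.pow 2).tendsto x).eventually hg] with y hy
    exact hy.hasFDerivAt_comp_norm_sq.fderiv
  have hsecond : HasFDerivAt (fun y : E => (2 * g' (‖y‖ ^ 2)) • innerSL ℝ y) _ x :=
    (hg'.hasFDerivAt_comp_norm_sq.const_mul 2).smul (innerSL ℝ).hasFDerivAt
  rw [iteratedFDeriv_two_apply, hfderiv.fderiv_eq, hsecond.fderiv]
  simp only [cons_val_zero, cons_val_one, cons_val_fin_one, _root_.add_apply, _root_.smul_apply,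
    ContinuousLinearMap.smulRight_apply, coe_innerSL_apply, smul_eq_mul]
  rw [innerSL_apply_apply]
  ring

end RadialCalculus

theorem Matrix.trace_mul_smul_one_add_smul_vecMulVec {ι R : Type*} [Fintype ι] [DecidableEq ι]
    [CommRing R] (A : Matrix ι ι R) (c d : R) (v w : ι → R) :
    (A * (c • 1 + d • vecMulVec v w)).trace = c * A.trace + d * (A *ᵥ v ⬝ᵥ w) := by
  rw [Matrix.mul_add, Matrix.mul_smul, Matrix.mul_smul, Matrix.mul_one, mul_vecMulVec, trace_add,
    trace_smul, trace_smul, trace_vecMulVec, smul_eq_mul, smul_eq_mul]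

theorem hessianMatrix_comp_norm_sq {n : ℕ} {g g' : ℝ → ℝ} {g'' : ℝ} {x : EuclideanSpace ℝ (Fin n)}
    (hg : ∀ᶠ t in 𝓝 (‖x‖ ^ 2), HasDerivAt g (g' t) t)
    (hg' : HasDerivAt g' g'' (‖x‖ ^ 2)) :
    hessianMatrix (fun z => g (‖z‖ ^ 2)) x
      = (2 * g' (‖x‖ ^ 2)) • 1 + (4 * g'') • vecMulVec ⇑x ⇑x := by
  ext i j
  simp [hessianMatrix, iteratedFDeriv_two_comp_norm_sq_apply hg hg', Matrix.one_apply,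
    vecMulVec_apply, EuclideanSpace.inner_single_right, mul_assoc, eq_comm]

theorem hasDerivAt_exp_mul_rpow (ι k : ℝ) {t : ℝ} (ht : 0 < t) :
    HasDerivAt (fun u => exp (ι * u ^ k)) (ι * k * t ^ (k - 1) * exp (ι * t ^ k)) t := by
  convert ((hasDerivAt_rpow_const (Or.inl ht.ne')).const_mul ι).exp using 1
  ring

theorem hasDerivAt_mul_rpow_sub_one_mul_exp_mul_rpow (ι k : ℝ) {t : ℝ} (ht : 0 < t) :
    HasDerivAt (fun u => ι * k * u ^ (k - 1) * exp (ι * u ^ k))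
      (ι * k * ((k - 1) * t ^ (k - 2) + ι * k * t ^ (2 * k - 2)) * exp (ι * t ^ k)) t := by
  have hpow : t ^ (k - 1) * t ^ (k - 1) = t ^ (2 * k - 2) := by
    rw [← rpow_add ht]; ring_nf
  refine (((hasDerivAt_rpow_const (Or.inl ht.ne')).const_mul (ι * k)).mul
    (hasDerivAt_exp_mul_rpow ι k ht)).congr_deriv ?_
  rw [sub_sub, one_add_one_eq_two, ← hpow]
  ring

section Generator

variable {n : ℕ} (b : EuclideanSpace ℝ (Fin n) → EuclideanSpace ℝ (Fin n))
  (a : EuclideanSpace ℝ (Fin n) → Matrix (Fin n) (Fin n) ℝ)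

noncomputable def diffusionGenerator (V : EuclideanSpace ℝ (Fin n) → ℝ)
    (x : EuclideanSpace ℝ (Fin n)) : ℝ :=
  ⟪b x, gradient V x⟫ + (1/2) * (a x * hessianMatrix V x).trace

theorem diffusionGenerator_comp_norm_sq {g g' : ℝ → ℝ} {g'' : ℝ} {x : EuclideanSpace ℝ (Fin n)}
    (hg : ∀ᶠ t in 𝓝 (‖x‖ ^ 2), HasDerivAt g (g' t) t)
    (hg' : HasDerivAt g' g'' (‖x‖ ^ 2)) :
    diffusionGenerator b a (fun z => g (‖z‖ ^ 2)) x
      = g' (‖x‖ ^ 2) * (2 * ⟪b x, x⟫ + (a x).trace) + 2 * g'' * (a x *ᵥ ⇑x ⬝ᵥ ⇑x) := by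
  rw [diffusionGenerator, hg.self_of_nhds.hasGradientAt_comp_norm_sq.gradient,
    hessianMatrix_comp_norm_sq hg hg', trace_mul_smul_one_add_smul_vecMulVec, real_inner_smul_right]
  ring

theorem diffusionGenerator_exp_mul_norm_rpow (ι m : ℝ) {x : EuclideanSpace ℝ (Fin n)}
    (hx : x ≠ 0) :
    diffusionGenerator b a (fun z => exp (ι * ‖z‖ ^ m)) x
      = ι * m * exp (ι * ‖x‖ ^ m) * (‖x‖ ^ (m - 2) * (⟪b x, x⟫ + (a x).trace / 2)
          + ((m - 2) * ‖x‖ ^ (m - 4) + ι * m * ‖x‖ ^ (2 * m - 4)) / 2 * (a x *ᵥ ⇑x ⬝ᵥ ⇑x)) := by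
  have hsq (z : EuclideanSpace ℝ (Fin n)) (e : ℝ) : (‖z‖ ^ 2) ^ e = ‖z‖ ^ (2 * e) := by
    rw [← rpow_natCast_mul (norm_nonneg z)]; norm_num
  have hV : (fun z : EuclideanSpace ℝ (Fin n) => exp (ι * ‖z‖ ^ m))
      = fun z => exp (ι * (‖z‖ ^ 2) ^ (m / 2)) := by
    funext z; rw [hsq, mul_div_cancel₀ m two_ne_zero]
  have ht : 0 < ‖x‖ ^ 2 := by positivity
  rw [hV, diffusionGenerator_comp_norm_sq b a
    (eventually_of_mem (Ioi_mem_nhds ht) fun t ht => hasDerivAt_exp_mul_rpow ι (m / 2) ht)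
    (hasDerivAt_mul_rpow_sub_one_mul_exp_mul_rpow ι (m / 2) ht)]
  simp only [hsq]
  ring_nf

end Generator

theorem elliptic_diffusion_subexponential_drift_general
    (n : ℕ) (p m ι r M lam T₀ : ℝ)
    (hm : 0 < m) (hm1 : m < 1)
    (hι : 0 < ι) (hM : 0 < M)
    (b : EuclideanSpace ℝ (Fin n) → EuclideanSpace ℝ (Fin n))
    (a : EuclideanSpace ℝ (Fin n) → Matrix (Fin n) (Fin n) ℝ)
    (ha_psd : ∀ x, (a x).PosSemidef)
    (ha_quad : ∀ x : EuclideanSpace ℝ (Fin n),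
      dotProduct ((a x).mulVec (fun i => x i)) (fun i => x i) ≤ lam * ‖x‖ ^ 2)
    (ha_tr : ∀ x, (a x).trace ≤ T₀)
    (hb : ∀ x : EuclideanSpace ℝ (Fin n), M ≤ ‖x‖ → ⟪b x, x⟫ ≤ -r * ‖x‖ ^ (1 - p))
    (V : EuclideanSpace ℝ (Fin n) → ℝ)
    (hV : ∀ x : EuclideanSpace ℝ (Fin n), V x = Real.exp (ι * ‖x‖ ^ m)) :
    ∀ x : EuclideanSpace ℝ (Fin n), M ≤ ‖x‖ →
      ⟪b x, gradient V x⟫ + (1/2) * (a x * hessianMatrix V x).trace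
        ≤ -(ι * m) * (r - (1/2) * lam * ι * m * ‖x‖ ^ (p + m - 1))
              * ‖x‖ ^ (m - 1 - p) * V x
          + (1/2) * ι * m * T₀ * ‖x‖ ^ (m - 2) * V x := by
  intro x hx
  have hs : 0 < ‖x‖ := hM.trans_le hx
  have hQ : 0 ≤ a x *ᵥ ⇑x ⬝ᵥ ⇑x := by
    simpa [dotProduct_comm] using (ha_psd x).dotProduct_mulVec_nonneg x
  change diffusionGenerator b a V x ≤ _
  rw [hV x, show V = fun z => exp (ι * ‖z‖ ^ m) from funext hV,
    diffusionGenerator_exp_mul_norm_rpow b a ι m (norm_pos_iff.1 hs)]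
  have hdrift : ‖x‖ ^ (m - 2) * (⟪b x, x⟫ + (a x).trace / 2)
      ≤ ‖x‖ ^ (m - 2) * (-r * ‖x‖ ^ (1 - p) + T₀ / 2) := by
    gcongr
    exacts [hb x hx, ha_tr x]
  have hdiffusion : ((m - 2) * ‖x‖ ^ (m - 4) + ι * m * ‖x‖ ^ (2 * m - 4)) / 2 * (a x *ᵥ ⇑x ⬝ᵥ ⇑x)
      ≤ ι * m * ‖x‖ ^ (2 * m - 4) / 2 * (lam * ‖x‖ ^ 2) := by
    have hcurv : (m - 2) * ‖x‖ ^ (m - 4) * (a x *ᵥ ⇑x ⬝ᵥ ⇑x) ≤ 0 :=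
      mul_nonpos_of_nonpos_of_nonneg
        (mul_nonpos_of_nonpos_of_nonneg (by linarith) (by positivity)) hQ
    have := mul_le_mul_of_nonneg_left (ha_quad x) (by positivity : 0 ≤ ι * m * ‖x‖ ^ (2 * m - 4))
    linarith
  have e1 : ‖x‖ ^ (m - 2) * ‖x‖ ^ (1 - p) = ‖x‖ ^ (m - 1 - p) := by
    rw [← rpow_add hs]; ring_nf
  have e2 : ‖x‖ ^ (2 * m - 4) * ‖x‖ ^ 2 = ‖x‖ ^ (p + m - 1) * ‖x‖ ^ (m - 1 - p) := by
    rw [← rpow_natCast, ← rpow_add hs, ← rpow_add hs]; ring_nf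
  calc _ ≤ ι * m * exp (ι * ‖x‖ ^ m) * (‖x‖ ^ (m - 2) * (-r * ‖x‖ ^ (1 - p) + T₀ / 2)
          + ι * m * ‖x‖ ^ (2 * m - 4) / 2 * (lam * ‖x‖ ^ 2)) :=
        mul_le_mul_of_nonneg_left (add_le_add hdrift hdiffusion) (by positivity)
    _ = _ := by linear_combination (ι * m * exp (ι * ‖x‖ ^ m)) * (-r * e1 + ι * m * lam / 2 * e2)

/-- Drift inequality for the generator of an elliptic diffusion applied to the test
function `V(x) = exp(ι |x|^m)`: if `⟨b(x),x⟩ ≤ -r|x|^{1-p}` for `|x| ≥ M`,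
`⟨a(x)x,x⟩ ≤ λ₊|x|²` and `Tr a(x) ≤ T₀`, then for `|x| ≥ M`,
`⟨b(x),∇V(x)⟩ + (1/2)Tr(a(x)∇²V(x))
  ≤ -ιm (r - (1/2)λ₊ιm|x|^{p+m-1}) |x|^{m-1-p} V(x) + (1/2)ιm T₀ |x|^{m-2} V(x)`. -/
theorem elliptic_diffusion_subexponential_drift
    (n : ℕ) (hn : 1 ≤ n) (p m ι r M lam T₀ : ℝ)
    (hp : 0 < p) (hp1 : p < 1) (hm : 0 < m) (hm1 : m < 1)
    (hι : 0 < ι) (hr : 0 < r) (hM : 0 < M) (hlam : 0 ≤ lam) (hT₀ : 0 ≤ T₀)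
    (b : EuclideanSpace ℝ (Fin n) → EuclideanSpace ℝ (Fin n))
    (a : EuclideanSpace ℝ (Fin n) → Matrix (Fin n) (Fin n) ℝ)
    (ha_symm : ∀ x, (a x).IsSymm)
    (ha_psd : ∀ x, (a x).PosSemidef)
    (ha_quad : ∀ x : EuclideanSpace ℝ (Fin n),
      dotProduct ((a x).mulVec (fun i => x i)) (fun i => x i) ≤ lam * ‖x‖ ^ 2)
    (ha_tr : ∀ x, (a x).trace ≤ T₀)
    (hb : ∀ x : EuclideanSpace ℝ (Fin n), M ≤ ‖x‖ → ⟪b x, x⟫ ≤ -r * ‖x‖ ^ (1 - p))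
    (V : EuclideanSpace ℝ (Fin n) → ℝ)
    (hV : ∀ x : EuclideanSpace ℝ (Fin n), V x = Real.exp (ι * ‖x‖ ^ m)) :
    ∀ x : EuclideanSpace ℝ (Fin n), M ≤ ‖x‖ →
      ⟪b x, gradient V x⟫ + (1/2) * (a x * hessianMatrix V x).trace
        ≤ -(ι * m) * (r - (1/2) * lam * ι * m * ‖x‖ ^ (p + m - 1))
              * ‖x‖ ^ (m - 1 - p) * V x
          + (1/2) * ι * m * T₀ * ‖x‖ ^ (m - 2) * V x :=
  elliptic_diffusion_subexponential_drift_general n p m ι r M lam T₀ hm hm1 hι hM b a ha_psd ha_quad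
    ha_tr hb V hV
end

section
/- Let σ > 0, c > 0, α > 0, β > 0, 0 < p < 1 and 1 − p < m ≤ 1. Let U : ℝ → ℝ be continuously differentiable and bounded below, and suppose there are constants a₀, b₀ > 0 and M ≥ 1 such that a₀|x|^{p−1} ≤ sgn(x)·U'(x) ≤ b₀|x|^{p−1} for all |x| ≥ M. Let G : ℝ → ℝ be twice continuously differentiable with G'(x) = sgn(x)|x|^m for |x| ≥ M and β·sup_{x∈ℝ} G''(x) < cα. Define W(x,y) := α(y²/2 + U(x)) + β(G'(x)y + cG(x)) and assume inf_{(x,y)∈ℝ²} W(x,y) ≥ 1. Define 𝒜W(x,y) := (1/2)σ² ∂²_{yy}W(x,y) + y ∂_x W(x,y) − (cy + U'(x)) ∂_y W(x,y). Then there exist constants K < ∞ and L > 0 such that for all (x,y) ∈ ℝ², 𝒜W(x,y) ≤ K − L · W(x,y)^{(p−1+m)/(m+1)}. -/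
/-!
Computing the generator gives `𝒜W = ασ²/2 + (βG'' - cα) y² - β G' U'`. The condition
`β sup G'' < cα` makes the coefficient of `y²` at most `-δ < 0`, and for `|x| ≥ M` one has
`G' U' = |x|^m · sgn(x) U' ≥ a₀ |x|^(p-1+m)`, so `𝒜W ≤ K - μ (y² + |x|^(p-1+m))`.
Conversely, integrating the growth bounds on `U'` and `G'` gives
`W ≤ S (1 + y² + |x|^(m+1))`, and since `t ↦ t^θ` with `θ = (p-1+m)/(m+1) ≤ 1` is
subadditive, `W^θ ≤ S^θ (1 + y² + |x|^(p-1+m))`.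
-/

open Real Set

lemma Real.sign_mul_self_of_ne_zero {x : ℝ} (hx : x ≠ 0) : sign x * sign x = 1 := by
  rcases sign_apply_eq_of_ne_zero x hx with h | h <;> simp [h]

lemma rpow_le_one_add_rpow {a e f : ℝ} (ha : 0 ≤ a) (he : 0 ≤ e) (hef : e ≤ f) :
    a ^ e ≤ 1 + a ^ f := by
  rcases le_total a 1 with h | h
  · linarith [rpow_le_one ha h he, rpow_nonneg ha f]
  · linarith [rpow_le_rpow_of_exponent_le h hef]

lemma rpow_le_rpow_mul_one_add_add_rpow {w S u r θ : ℝ} (hw : 0 ≤ w) (hS : 0 ≤ S)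
    (hu : 0 ≤ u) (hr : 0 ≤ r) (hθ0 : 0 ≤ θ) (hθ1 : θ ≤ 1) (h : w ≤ S * (1 + u + r)) :
    w ^ θ ≤ S ^ θ * (1 + u + r ^ θ) := by
  have hsplit : (1 + u + r) ^ θ ≤ (1 + u) ^ θ + r ^ θ :=
    rpow_add_le_add_rpow (by positivity) hr hθ0 hθ1
  have hone : (1 + u) ^ θ ≤ 1 + u := by
    simpa using rpow_le_rpow_of_exponent_le (by linarith : 1 ≤ 1 + u) hθ1
  calc w ^ θ ≤ (S * (1 + u + r)) ^ θ := rpow_le_rpow hw h hθ0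
    _ = S ^ θ * (1 + u + r) ^ θ := mul_rpow hS (by positivity)
    _ ≤ S ^ θ * (1 + u + r ^ θ) := by gcongr; linarith

lemma add_mul_add_mul_le_max_mul (A B D u v : ℝ) (hu : 0 ≤ u) (hv : 0 ≤ v) :
    A + B * u + D * v ≤ max 1 (max A (max B D)) * (1 + u + v) := by
  have hA : A ≤ max 1 (max A (max B D)) := le_max_of_le_right (le_max_left _ _)
  have hB : B ≤ max 1 (max A (max B D)) :=
    le_max_of_le_right (le_max_of_le_right (le_max_left _ _))
  have hD : D ≤ max 1 (max A (max B D)) :=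
    le_max_of_le_right (le_max_of_le_right (le_max_right _ _))
  nlinarith [mul_le_mul_of_nonneg_right hB hu, mul_le_mul_of_nonneg_right hD hv]

lemma exists_forall_le_add_of_forall_le_abs {f h : ℝ → ℝ} (hf : Continuous f)
    (hh : Continuous h) {M : ℝ} (hfh : ∀ x, M ≤ |x| → f x ≤ h x) : ∃ C, ∀ x, f x ≤ C + h x := by
  obtain ⟨C, hC⟩ := (isCompact_Icc (a := -M) (b := M)).bddAbove_image (hf.sub hh).continuousOn
  refine ⟨max C 0, fun x => ?_⟩
  rcases le_or_gt M |x| with hx | hx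
  · linarith [hfh x hx, le_max_right C 0]
  · have hxI : x ∈ Icc (-M) M := by
      obtain ⟨h1, h2⟩ := abs_lt.mp hx
      exact ⟨h1.le, h2.le⟩
    linarith [hC (mem_image_of_mem (fun x => f x - h x) hxI), le_max_left C 0]

lemma le_add_div_mul_rpow_of_deriv_le {f : ℝ → ℝ} (hf : Differentiable ℝ f) {M s b : ℝ}
    (hM : 0 < M) (hs : 0 < s) (hb : 0 ≤ b)
    (hderiv : ∀ t, M ≤ t → deriv f t ≤ b * t ^ (s - 1)) {x : ℝ} (hx : M ≤ x) :
    f x ≤ f M + b / s * x ^ s := by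
  have hB : ∀ t ∈ Ici M,
      HasDerivAt (fun t => f M + b / s * (t ^ s - M ^ s)) (b * t ^ (s - 1)) t := by
    intro t ht
    have := (((hasDerivAt_rpow_const (p := s) (Or.inl (hM.trans_le ht).ne')).sub_const
      (M ^ s)).const_mul (b / s)).const_add (f M)
    rwa [← mul_assoc, div_mul_cancel₀ b hs.ne'] at this
  have hcomp := image_le_of_deriv_right_le_deriv_boundary (a := M) (b := x)
    hf.continuous.continuousOn (fun t _ => (hf t).hasDerivAt.hasDerivWithinAt)
    (B := fun t => f M + b / s * (t ^ s - M ^ s)) (by simp)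
    (fun t ht => (hB t ht.1).continuousAt.continuousWithinAt)
    (fun t ht => (hB t ht.1).hasDerivWithinAt) (fun t ht => hderiv t ht.1) ⟨hx, le_rfl⟩
  have : 0 ≤ b / s * M ^ s := by positivity
  linarith

lemma exists_forall_le_add_div_mul_abs_rpow_of_sign_mul_deriv_le {f : ℝ → ℝ}
    (hf : Differentiable ℝ f) {M s b : ℝ} (hM : 0 < M) (hs : 0 < s) (hb : 0 ≤ b)
    (hderiv : ∀ x, M ≤ |x| → sign x * deriv f x ≤ b * |x| ^ (s - 1)) :
    ∃ C, ∀ x, f x ≤ C + b / s * |x| ^ s := by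
  have hright : ∀ t, M ≤ t → deriv f t ≤ b * t ^ (s - 1) := fun t ht => by
    have ht0 : 0 < t := hM.trans_le ht
    simpa [sign_of_pos ht0, abs_of_pos ht0] using hderiv t (by rwa [abs_of_pos ht0])
  have hleft : ∀ t, M ≤ t → deriv (fun t => f (-t)) t ≤ b * t ^ (s - 1) := fun t ht => by
    have ht0 : 0 < t := hM.trans_le ht
    have := hderiv (-t) (by rwa [abs_neg, abs_of_pos ht0])
    rwa [sign_of_neg (neg_neg_of_pos ht0), abs_neg, abs_of_pos ht0, neg_one_mul,
      ← deriv_comp_neg] at this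
  have hout : ∀ x, M ≤ |x| → f x ≤ max (f M) (f (-M)) + b / s * |x| ^ s := by
    intro x hx
    rcases le_or_gt 0 x with hx0 | hx0
    · rw [abs_of_nonneg hx0] at hx ⊢
      linarith [le_add_div_mul_rpow_of_deriv_le hf hM hs hb hright hx,
        le_max_left (f M) (f (-M))]
    · rw [abs_of_neg hx0] at hx ⊢
      have := le_add_div_mul_rpow_of_deriv_le (f := fun t => f (-t))
        (hf.comp differentiable_neg) hM hs hb hleft hx
      simp only [neg_neg] at this
      linarith [le_max_right (f M) (f (-M))]
  obtain ⟨C, hC⟩ := exists_forall_le_add_of_forall_le_abs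
    (h := fun x => max (f M) (f (-M)) + b / s * |x| ^ s) hf.continuous
    (continuous_const.add (continuous_const.mul
      ((continuous_rpow_const hs.le).comp continuous_abs))) hout
  exact ⟨C + max (f M) (f (-M)), fun x => by linarith [hC x]⟩

lemma rpow_add_mul_le_sign_mul_rpow_mul {x a r m v : ℝ} (hx : x ≠ 0)
    (h : a * |x| ^ r ≤ sign x * v) : a * |x| ^ (r + m) ≤ sign x * |x| ^ m * v := by
  have hm : 0 ≤ |x| ^ m := rpow_nonneg (abs_nonneg x) m
  calc a * |x| ^ (r + m) = |x| ^ m * (a * |x| ^ r) := by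
        rw [rpow_add (abs_pos.mpr hx)]; ring
    _ ≤ |x| ^ m * (sign x * v) := mul_le_mul_of_nonneg_left h hm
    _ = sign x * |x| ^ m * v := by ring

noncomputable def dampingLyapunov (α β c : ℝ) (U G : ℝ → ℝ) (x y : ℝ) : ℝ :=
  α * (y ^ 2 / 2 + U x) + β * (deriv G x * y + c * G x)

noncomputable def dampingGenerator (σ c : ℝ) (U : ℝ → ℝ) (W : ℝ → ℝ → ℝ) (x y : ℝ) : ℝ :=
  (1/2) * σ ^ 2 * deriv (fun y' => deriv (fun y'' => W x y'') y') y
    + y * deriv (fun x' => W x' y) x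
    - (c * y + deriv U x) * deriv (fun y' => W x y') y

lemma dampingGenerator_dampingLyapunov {σ c α β : ℝ} {U G : ℝ → ℝ} (hU : Differentiable ℝ U)
    (hG : Differentiable ℝ G) (hG' : Differentiable ℝ (deriv G)) (x y : ℝ) :
    dampingGenerator σ c U (dampingLyapunov α β c U G) x y =
      α * σ ^ 2 / 2 + (β * deriv (deriv G) x - c * α) * y ^ 2
        - β * (deriv G x * deriv U x) := by
  have hy : ∀ x y, HasDerivAt (fun y' => dampingLyapunov α β c U G x y')
      (α * y + β * deriv G x) y := fun x y =>
    (((((hasDerivAt_pow 2 y).div_const 2).add_const (U x)).const_mul α).add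
      ((((hasDerivAt_id y).const_mul (deriv G x)).add_const (c * G x)).const_mul β))
      |>.congr_deriv (by push_cast; ring)
  have hyy :
      deriv (fun y' => deriv (fun y'' => dampingLyapunov α β c U G x y'') y') y = α := by
    rw [show (fun y' => deriv (fun y'' => dampingLyapunov α β c U G x y'') y')
        = fun y' => α * y' + β * deriv G x from funext fun y' => (hy x y').deriv]
    exact (((hasDerivAt_id y).const_mul α).add_const (β * deriv G x)).deriv.trans (mul_one α)
  have hx : HasDerivAt (fun x' => dampingLyapunov α β c U G x' y)
      (α * deriv U x + β * (deriv (deriv G) x * y + c * deriv G x)) x :=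
    (((hU x).hasDerivAt.const_add _).const_mul α).add
      ((((hG' x).hasDerivAt.mul_const y).add ((hG x).hasDerivAt.const_mul c)).const_mul β)
  rw [dampingGenerator, hyy, hx.deriv, (hy x y).deriv]
  ring

lemma exists_dampingGenerator_dampingLyapunov_le {σ c α β p m a₀ M : ℝ} {U G : ℝ → ℝ}
    (hβ : 0 < β) (ha₀ : 0 < a₀) (hM : 0 < M) (hq : 0 < p - 1 + m)
    (hU : ContDiff ℝ 1 U) (hG : ContDiff ℝ 2 G)
    (hU' : ∀ x, M ≤ |x| → a₀ * |x| ^ (p - 1) ≤ sign x * deriv U x)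
    (hG' : ∀ x, M ≤ |x| → deriv G x = sign x * |x| ^ m)
    (hG''_bdd : BddAbove (range (fun x => deriv (deriv G) x)))
    (hG''_sup : β * sSup (range (fun x => deriv (deriv G) x)) < c * α) :
    ∃ K μ, 0 < μ ∧ ∀ x y,
      dampingGenerator σ c U (dampingLyapunov α β c U G) x y ≤
        K - μ * (y ^ 2 + |x| ^ (p - 1 + m)) := by
  have hG1 : ContDiff ℝ 1 (deriv G) := hG.iterate_deriv' 1 1
  obtain ⟨C, hC⟩ := exists_forall_le_add_of_forall_le_abs
    (f := fun x => -(deriv G x * deriv U x)) (h := fun x => -(a₀ * |x| ^ (p - 1 + m)))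
    (hG1.continuous.mul (hU.continuous_deriv le_rfl)).neg
    (continuous_const.mul ((continuous_rpow_const hq.le).comp continuous_abs)).neg
    (fun x hx => by
      have hx0 : x ≠ 0 := abs_pos.mp (hM.trans_le hx)
      simpa [hG' x hx] using rpow_add_mul_le_sign_mul_rpow_mul hx0 (hU' x hx))
  set δ := c * α - β * sSup (range (fun x => deriv (deriv G) x))
  have hδ : 0 < δ := sub_pos.mpr hG''_sup
  refine ⟨α * σ ^ 2 / 2 + β * C, min δ (β * a₀), lt_min hδ (mul_pos hβ ha₀), fun x y => ?_⟩
  rw [dampingGenerator_dampingLyapunov (hU.differentiable one_ne_zero)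
    (hG.differentiable two_ne_zero) (hG1.differentiable one_ne_zero)]
  have hG'' : β * deriv (deriv G) x - c * α ≤ -δ := by
    nlinarith [le_csSup hG''_bdd (mem_range_self x)]
  have hy : min δ (β * a₀) * y ^ 2 ≤ δ * y ^ 2 := by gcongr; exact min_le_left _ _
  have hx : min δ (β * a₀) * |x| ^ (p - 1 + m) ≤ β * a₀ * |x| ^ (p - 1 + m) := by
    gcongr; exact min_le_right _ _
  nlinarith [mul_le_mul_of_nonneg_right hG'' (sq_nonneg y),
    mul_le_mul_of_nonneg_left (hC x) hβ.le]

lemma exists_dampingLyapunov_le {α β c p m b₀ M : ℝ} {U G : ℝ → ℝ}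
    (hα : 0 ≤ α) (hβ : 0 ≤ β) (hc : 0 ≤ c) (hp : 0 < p) (hpm : p ≤ m + 1) (hm0 : 0 < m)
    (hm1 : m ≤ 1) (hb₀ : 0 ≤ b₀) (hM : 0 < M) (hU : Differentiable ℝ U) (hG : ContDiff ℝ 2 G)
    (hU' : ∀ x, M ≤ |x| → sign x * deriv U x ≤ b₀ * |x| ^ (p - 1))
    (hG' : ∀ x, M ≤ |x| → deriv G x = sign x * |x| ^ m) :
    ∃ S, 0 < S ∧ ∀ x y, dampingLyapunov α β c U G x y ≤ S * (1 + y ^ 2 + |x| ^ (m + 1)) := by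
  have hG1 : ContDiff ℝ 1 (deriv G) := hG.iterate_deriv' 1 1
  obtain ⟨CU, hCU⟩ :=
    exists_forall_le_add_div_mul_abs_rpow_of_sign_mul_deriv_le hU hM hp hb₀ hU'
  obtain ⟨CG, hCG⟩ := exists_forall_le_add_div_mul_abs_rpow_of_sign_mul_deriv_le
    (hG.differentiable two_ne_zero) hM (by linarith : 0 < m + 1) zero_le_one (fun x hx => by
      rw [hG' x hx, ← mul_assoc, sign_mul_self_of_ne_zero (abs_pos.mp (hM.trans_le hx))]
      simp)
  obtain ⟨Cg, hCg⟩ := exists_forall_le_add_of_forall_le_abs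
    (f := fun x => deriv G x ^ 2) (h := fun x => |x| ^ (m * 2))
    (hG1.continuous.pow 2) ((continuous_rpow_const (by linarith)).comp continuous_abs)
    (fun x hx => by
      rw [hG' x hx, mul_pow, sq (sign x),
        sign_mul_self_of_ne_zero (abs_pos.mp (hM.trans_le hx)), ← rpow_mul_natCast (abs_nonneg x)]
      norm_num)
  refine ⟨max 1 (max (α * CU + α * (b₀ / p) + β * (Cg + 1) / 2 + β * c * CG)
    (max (α / 2 + β / 2) (α * (b₀ / p) + β / 2 + β * c * (1 / (m + 1))))),
    lt_of_lt_of_le one_pos (le_max_left _ _), fun x y => ?_⟩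
  have hr : 0 ≤ |x| ^ (m + 1) := rpow_nonneg (abs_nonneg x) _
  have hUx : U x ≤ CU + b₀ / p * (1 + |x| ^ (m + 1)) := by
    have := rpow_le_one_add_rpow (f := m + 1) (abs_nonneg x) hp.le hpm
    nlinarith [hCU x, div_nonneg hb₀ hp.le]
  have hcross : deriv G x * y ≤ (Cg + 1 + |x| ^ (m + 1) + y ^ 2) / 2 := by
    have := rpow_le_one_add_rpow (f := m + 1) (abs_nonneg x) (by linarith : 0 ≤ m * 2)
      (by linarith)
    nlinarith [two_mul_le_add_sq (deriv G x) y, hCg x]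
  have hW : dampingLyapunov α β c U G x y ≤
      (α * CU + α * (b₀ / p) + β * (Cg + 1) / 2 + β * c * CG) + (α / 2 + β / 2) * y ^ 2
        + (α * (b₀ / p) + β / 2 + β * c * (1 / (m + 1))) * |x| ^ (m + 1) := by
    rw [dampingLyapunov]
    linarith [mul_le_mul_of_nonneg_left hUx hα, mul_le_mul_of_nonneg_left hcross hβ,
      mul_le_mul_of_nonneg_left (hCG x) (mul_nonneg hβ hc)]
  exact hW.trans (add_mul_add_mul_le_max_mul _ _ _ _ _ (sq_nonneg y) hr)

theorem damping_hamiltonian_polynomial_drift_general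
    (σ c α β p m : ℝ)
    (hc : 0 < c) (hα : 0 < α) (hβ : 0 < β)
    (hp : 0 < p) (hp1 : p < 1) (hm_lb : 1 - p < m) (hm_ub : m ≤ 1)
    (U : ℝ → ℝ) (hU_smooth : ContDiff ℝ 1 U)
    (a₀ b₀ M : ℝ) (ha₀ : 0 < a₀) (hb₀ : 0 < b₀) (hM : 1 ≤ M)
    (hU' : ∀ x : ℝ, M ≤ |x| →
      a₀ * |x| ^ (p - 1) ≤ Real.sign x * deriv U x ∧
      Real.sign x * deriv U x ≤ b₀ * |x| ^ (p - 1))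
    (G : ℝ → ℝ) (hG_smooth : ContDiff ℝ 2 G)
    (hG' : ∀ x : ℝ, M ≤ |x| → deriv G x = Real.sign x * |x| ^ m)
    (hG''_bdd : BddAbove (Set.range (fun x => deriv (deriv G) x)))
    (hG''_sup : β * sSup (Set.range (fun x => deriv (deriv G) x)) < c * α)
    (W : ℝ → ℝ → ℝ)
    (hW_def : ∀ x y : ℝ,
      W x y = α * (y ^ 2 / 2 + U x) + β * (deriv G x * y + c * G x))
    (hW_one : ∀ x y : ℝ, 1 ≤ W x y)
    (AW : ℝ → ℝ → ℝ)
    (hAW_def : ∀ x y : ℝ, AW x y =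
      (1/2) * σ ^ 2 * deriv (fun y' => deriv (fun y'' => W x y'') y') y
        + y * deriv (fun x' => W x' y) x
        - (c * y + deriv U x) * deriv (fun y' => W x y') y) :
    ∃ K L : ℝ, 0 < L ∧
      ∀ x y : ℝ, AW x y ≤ K - L * W x y ^ ((p - 1 + m) / (m + 1)) := by
  have hM0 : 0 < M := by linarith
  have hAW : AW = dampingGenerator σ c U W := funext₂ hAW_def
  have hW : W = dampingLyapunov α β c U G := funext₂ hW_def
  subst hAW hW
  obtain ⟨K, μ, hμ, hdrift⟩ := exists_dampingGenerator_dampingLyapunov_le (σ := σ) hβ ha₀ hM0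
    (by linarith) hU_smooth hG_smooth (fun x hx => (hU' x hx).1) hG' hG''_bdd hG''_sup
  obtain ⟨S, hS, hgrowth⟩ := exists_dampingLyapunov_le hα.le hβ.le hc.le hp (by linarith)
    (by linarith) hm_ub hb₀.le hM0 (hU_smooth.differentiable one_ne_zero) hG_smooth
    (fun x hx => (hU' x hx).2) hG'
  set θ := (p - 1 + m) / (m + 1)
  have hθ0 : 0 ≤ θ := div_nonneg (by linarith) (by linarith)
  have hθ1 : θ ≤ 1 := (div_le_one (by linarith)).mpr (by linarith)
  refine ⟨K + μ, μ / S ^ θ, by positivity, fun x y => ?_⟩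
  have hWθ : dampingLyapunov α β c U G x y ^ θ ≤ S ^ θ * (1 + y ^ 2 + |x| ^ (p - 1 + m)) := by
    have := rpow_le_rpow_mul_one_add_add_rpow (by linarith [hW_one x y]) hS.le (sq_nonneg y)
      (rpow_nonneg (abs_nonneg x) _) hθ0 hθ1 (hgrowth x y)
    rwa [← rpow_mul (abs_nonneg x), mul_div_cancel₀ _ (by linarith : m + 1 ≠ 0)] at this
  calc dampingGenerator σ c U (dampingLyapunov α β c U G) x y
      ≤ K - μ * (y ^ 2 + |x| ^ (p - 1 + m)) := hdrift x y
    _ = K + μ - μ / S ^ θ * (S ^ θ * (1 + y ^ 2 + |x| ^ (p - 1 + m))) := by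
      field_simp; ring
    _ ≤ K + μ - μ / S ^ θ * dampingLyapunov α β c U G x y ^ θ := by gcongr

/-- Polynomial drift condition for the one-dimensional stochastic damping Hamiltonian
system `dX = Y dt`, `dY = σ dB - (cY + U'(X))dt`: for the Lyapunov function
`W(x,y) = α(y²/2 + U(x)) + β(G'(x)y + cG(x))` one has
`𝒜W(x,y) ≤ K - L·W(x,y)^{(p-1+m)/(m+1)}` for some `K < ∞`, `L > 0`. -/
theorem damping_hamiltonian_polynomial_drift
    (σ c α β p m : ℝ)
    (hσ : 0 < σ) (hc : 0 < c) (hα : 0 < α) (hβ : 0 < β)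
    (hp : 0 < p) (hp1 : p < 1) (hm_lb : 1 - p < m) (hm_ub : m ≤ 1)
    (U : ℝ → ℝ) (hU_smooth : ContDiff ℝ 1 U) (hU_bdd : BddBelow (Set.range U))
    (a₀ b₀ M : ℝ) (ha₀ : 0 < a₀) (hb₀ : 0 < b₀) (hM : 1 ≤ M)
    (hU' : ∀ x : ℝ, M ≤ |x| →
      a₀ * |x| ^ (p - 1) ≤ Real.sign x * deriv U x ∧
      Real.sign x * deriv U x ≤ b₀ * |x| ^ (p - 1))
    (G : ℝ → ℝ) (hG_smooth : ContDiff ℝ 2 G)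
    (hG' : ∀ x : ℝ, M ≤ |x| → deriv G x = Real.sign x * |x| ^ m)
    (hG''_bdd : BddAbove (Set.range (fun x => deriv (deriv G) x)))
    (hG''_sup : β * sSup (Set.range (fun x => deriv (deriv G) x)) < c * α)
    (W : ℝ → ℝ → ℝ)
    (hW_def : ∀ x y : ℝ,
      W x y = α * (y ^ 2 / 2 + U x) + β * (deriv G x * y + c * G x))
    (hW_one : ∀ x y : ℝ, 1 ≤ W x y)
    (AW : ℝ → ℝ → ℝ)
    (hAW_def : ∀ x y : ℝ, AW x y =
      (1/2) * σ ^ 2 * deriv (fun y' => deriv (fun y'' => W x y'') y') y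
        + y * deriv (fun x' => W x' y) x
        - (c * y + deriv U x) * deriv (fun y' => W x y') y) :
    ∃ K L : ℝ, 0 < L ∧
      ∀ x y : ℝ, AW x y ≤ K - L * W x y ^ ((p - 1 + m) / (m + 1)) :=
  damping_hamiltonian_polynomial_drift_general σ c α β p m hc hα hβ hp hp1 hm_lb hm_ub U hU_smooth
    a₀ b₀ M ha₀ hb₀ hM hU' G hG_smooth hG' hG''_bdd hG''_sup W hW_def hW_one AW hAW_def
end
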